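/- arXiv:2305.16869 — 8 statements merged into one kernel-verified Lean document; each statement's English description precedes it below -/
import Mathlib

section
/- Assume n < p and n ≤ q, Λ_n(0) = 0 with λ_n := Λ_n′(0) ≠ 0; set ν0 = (p − n)/q and let δ_{n,q} = 1 if n = q and δ_{n,q} = 0 otherwise. Suppose λ_n + δ_{n,q} ν0 < 0 and let ϱ1 : [t0, ∞) → ℝ be a solution of dϱ/dt = Λ_N(ϱ, t) with ϱ1(t) = −μ_p/(λ_n + δ_{n,q} ν0) · t^{−ν0} (1 + o(1)) as t → ∞. Then ϱ1 is exponentially stable if n < q and polynomially stable if n = q; more precisely, there exist t1 ≥ t0, δ > 0 and c > 0 such that every solution ϱ of dϱ/dt = Λ_N(ϱ, t) with |ϱ(t1) − ϱ1(t1)| ≤ δ t1^{−ν0} satisfies for all t ≥ t1: if n < q then t^{ν0}|ϱ(t) − ϱ1(t)| ≤ t1^{ν0}|ϱ(t1) − ϱ1(t1)| exp(−c (t^{1−n/q} − t1^{1−n/q})), and if n = q then t^{ν0}|ϱ(t) − ϱ1(t)| ≤ t1^{ν0}|ϱ(t1) − ϱ1(t1)| (t/t1)^{−c}. -/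
open Filter Real Set Asymptotics

lemma aux_gronwall (h D : ℝ → ℝ) (t1 T M : ℝ) (hT : t1 ≤ T)
    (hderiv : ∀ x ∈ Set.Icc t1 T, HasDerivAt h (D x) x)
    (hM : h t1 < M)
    (hkey : ∀ x ∈ Set.Icc t1 T, h x ≤ M → D x ≤ 0) :
    h T ≤ h t1 := by
  rcases eq_or_lt_of_le hT with rfl | hTlt
  · exact le_refl _
  have hcont : ContinuousOn h (Set.Icc t1 T) := fun x hx =>
    (hderiv x hx).continuousAt.continuousWithinAt
  have key : ∀ ε : ℝ, 0 < ε → ε * (T - t1) ≤ M - h t1 → h T ≤ h t1 + ε * (T - t1) := by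
    intro ε hε hεM
    have := image_le_of_deriv_right_lt_deriv_boundary (f := h) (f' := D)
      (B := fun x => h t1 + ε * (x - t1)) (B' := fun _ => ε) (a := t1) (b := T)
      hcont (fun x hx => (hderiv x (Set.mem_Icc_of_Ico hx)).hasDerivWithinAt)
      (by simp)
      (fun x => by
        simpa using ((hasDerivAt_id x).sub_const t1).const_mul ε |>.const_add (h t1))
      (fun x hx hfB => by
        have hxI : x ∈ Set.Icc t1 T := Set.mem_Icc_of_Ico hx
        have hhx : h x ≤ M := by
          rw [hfB]; show h t1 + ε * (x - t1) ≤ M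
          have h1 : ε * (x - t1) ≤ ε * (T - t1) :=
            mul_le_mul_of_nonneg_left (by linarith [hxI.2]) hε.le
          linarith
        exact lt_of_le_of_lt (hkey x hxI hhx) hε)
    exact this (Set.right_mem_Icc.2 hT)
  by_contra hcon
  push_neg at hcon
  set ε := min ((M - h t1) / (T - t1)) ((h T - h t1) / (2 * (T - t1))) with hεdef
  have hTt : 0 < T - t1 := by linarith
  have hε : 0 < ε := lt_min (div_pos (by linarith) hTt) (div_pos (by linarith) (by linarith))
  have h1 : ε * (T - t1) ≤ M - h t1 := by
    calc ε * (T - t1) ≤ ((M - h t1) / (T - t1)) * (T - t1) :=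
          mul_le_mul_of_nonneg_right (min_le_left _ _) hTt.le
      _ = M - h t1 := by field_simp
  have h2 := key ε hε h1
  have h3 : ε * (T - t1) ≤ (h T - h t1) / 2 := by
    calc ε * (T - t1) ≤ ((h T - h t1) / (2 * (T - t1))) * (T - t1) :=
          mul_le_mul_of_nonneg_right (min_le_right _ _) hTt.le
      _ = (h T - h t1) / 2 := by field_simp
  linarith

set_option maxHeartbeats 1000000 in
/-- Case `(n,p) ∈ Q₁`: the particular solution `ϱ₁` of the truncated equation is
exponentially stable if `n < q` and polynomially stable if `n = q`. -/
theorem stmt_2 (q n p N : ℕ) (hq : 0 < q) (hn : 0 < n)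
    (hnp : n ≤ p) (hpN : p ≤ N) (hN2p : N < 2 * p)
    (rstar tstar : ℝ) (hrstar : 0 < rstar) (htstar : 0 < tstar)
    (ω : ℝ → ℝ) (hω : ContDiff ℝ (⊤ : ℕ∞) ω)
    (hωpos : ∀ ρ : ℝ, |ρ| ≤ rstar → 0 < ω ρ)
    (Λ : ℕ → ℝ → ℝ) (hΛ : ∀ k, ContDiff ℝ (⊤ : ℕ∞) (Λ k))
    (μp : ℝ) (hμp : μp ≠ 0)
    (hΛsmall : ∀ k, k < p → (Λ k) =O[nhds (0:ℝ)] (fun ρ => ρ))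
    (hΛp : (fun ρ => Λ p ρ - μp) =O[nhds (0:ℝ)] (fun ρ => ρ))
    (ΛN : ℝ → ℝ → ℝ)
    (hΛN : ∀ ρ t : ℝ, ΛN ρ t = ∑ k ∈ Finset.Icc n N, t ^ (-(k : ℝ) / q) * Λ k ρ)
    -- hypotheses of the lemma
    (hnltp : n < p) (hnq : n ≤ q)
    (hΛn0 : Λ n 0 = 0)
    (lam ν0 dd : ℝ)
    (hlam : lam = deriv (Λ n) 0) (hlamne : lam ≠ 0)
    (hν0 : ν0 = ((p : ℝ) - n) / q)
    (hdd : dd = if n = q then (1:ℝ) else 0)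
    (hneg : lam + dd * ν0 < 0)
    -- the particular solution ϱ₁ with ϱ₁(t) = -μ_p/(λ_n+δ_{n,q}ν₀) t^{-ν₀}(1+o(1))
    (t0 : ℝ) (ht0 : tstar ≤ t0)
    (ϱ1 : ℝ → ℝ)
    (hϱ1sol : ∀ t : ℝ, t0 ≤ t → HasDerivAt ϱ1 (ΛN (ϱ1 t) t) t)
    (hϱ1asym : Tendsto (fun t : ℝ => t ^ ν0 * ϱ1 t) atTop
      (nhds (-μp / (lam + dd * ν0)))) :
    ∃ t1 δ c : ℝ, t0 ≤ t1 ∧ 0 < δ ∧ 0 < c ∧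
      ∀ ϱ : ℝ → ℝ,
        (∀ t : ℝ, t1 ≤ t → HasDerivAt ϱ (ΛN (ϱ t) t) t) →
        |ϱ t1 - ϱ1 t1| ≤ δ * t1 ^ (-ν0) →
        ∀ t : ℝ, t1 ≤ t →
          (n < q →
            t ^ ν0 * |ϱ t - ϱ1 t| ≤
              t1 ^ ν0 * |ϱ t1 - ϱ1 t1| *
                Real.exp (-c * (t ^ (1 - (n : ℝ) / q) - t1 ^ (1 - (n : ℝ) / q)))) ∧
          (n = q →
            t ^ ν0 * |ϱ t - ϱ1 t| ≤
              t1 ^ ν0 * |ϱ t1 - ϱ1 t1| * (t / t1) ^ (-c)) := by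
  -- basic positivity facts
  have hq' : (0:ℝ) < q := by exact_mod_cast hq
  have hν0pos : 0 < ν0 := by
    rw [hν0]; apply div_pos _ hq'
    have : (n:ℝ) < p := by exact_mod_cast hnltp
    linarith
  have hddnn : 0 ≤ dd := by rw [hdd]; split <;> norm_num
  have hlamneg : lam < 0 := by nlinarith [mul_nonneg hddnn hν0pos.le]
  obtain ⟨c0, hc0def⟩ : ∃ c0 : ℝ, c0 = -(lam + dd * ν0) / 2 := ⟨_, rfl⟩
  obtain ⟨ε, hεdef⟩ : ∃ ε : ℝ, ε = -(lam + dd * ν0) / 6 := ⟨_, rfl⟩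
  have hc0 : 0 < c0 := by rw [hc0def]; linarith
  have hε : 0 < ε := by rw [hεdef]; linarith
  have hsum : lam + dd * ν0 + 3 * ε = -c0 := by rw [hεdef, hc0def]; ring
  -- choice of r0
  have hdercont : Continuous (deriv (Λ n)) := (hΛ n).continuous_deriv (by simp)
  obtain ⟨r0, hr0pos, hr0⟩ : ∃ r0 > 0, ∀ x : ℝ, |x| ≤ r0 → |deriv (Λ n) x - lam| ≤ ε := by
    have hc : Tendsto (fun x => |deriv (Λ n) x - lam|) (nhds 0) (nhds 0) := by
      have hct : ContinuousAt (fun x => |deriv (Λ n) x - lam|) 0 :=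
        ((hdercont.sub continuous_const).abs).continuousAt
      have h0 : |deriv (Λ n) (0:ℝ) - lam| = 0 := by rw [hlam]; simp
      simpa [ContinuousAt, h0] using hct
    have hev := hc.eventually_le_const hε
    rw [Metric.eventually_nhds_iff] at hev
    obtain ⟨r, hrpos, hr⟩ := hev
    refine ⟨r/2, by linarith, fun x hx => hr ?_⟩
    simp only [Real.dist_eq, sub_zero]
    linarith [hx]
  -- bound L on derivatives
  have hnN : n ≤ N := le_trans hnp hpN
  have hnmem : n ∈ Finset.Icc n N := Finset.mem_Icc.2 ⟨le_refl n, hnN⟩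
  obtain ⟨L, hL0, hL⟩ : ∃ L, 0 ≤ L ∧ ∀ k ∈ Finset.Icc n N, ∀ x ∈ Set.Icc (-r0) r0,
      |deriv (Λ k) x| ≤ L := by
    have hbd : ∀ k : ℕ, ∃ Lk : ℝ, 0 ≤ Lk ∧ ∀ x ∈ Set.Icc (-r0) r0, |deriv (Λ k) x| ≤ Lk := by
      intro k
      obtain ⟨x0, hx0mem, hx0max⟩ := (isCompact_Icc (a := -r0) (b := r0)).exists_isMaxOn
        (Set.nonempty_Icc.2 (by linarith))
        (((hΛ k).continuous_deriv (by simp)).abs.continuousOn)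
      exact ⟨|deriv (Λ k) x0|, abs_nonneg _, fun x hx => hx0max hx⟩
    choose Lk hLk0 hLkb using hbd
    refine ⟨(Finset.Icc n N).sup' ⟨n, hnmem⟩ Lk, le_trans (hLk0 n) (Finset.le_sup' Lk hnmem),
      fun k hk x hx => le_trans (hLkb k x hx) (Finset.le_sup' Lk hk)⟩
  obtain ⟨δ0, hδ0def⟩ : ∃ δ0 : ℝ, δ0 = r0 / 2 := ⟨_, rfl⟩
  obtain ⟨δ, hδdef⟩ : ∃ δ : ℝ, δ = r0 / 4 := ⟨_, rfl⟩
  have hδ0pos : 0 < δ0 := by rw [hδ0def]; linarith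
  have hδpos : 0 < δ := by rw [hδdef]; linarith
  -- eventual smallness conditions, choice of t1
  obtain ⟨t1, ht1t0, ht11, hev1, hev2, hev3⟩ :
      ∃ t1 : ℝ, t0 ≤ t1 ∧ 1 ≤ t1 ∧ (∀ t, t1 ≤ t → |ϱ1 t| ≤ r0 / 2) ∧
        (∀ t, t1 ≤ t → L * N * t ^ (-(1:ℝ)/q) ≤ ε) ∧
        (∀ t, t1 ≤ t → n < q → ν0 * t ^ ((n:ℝ)/q - 1) ≤ ε) := by
    have hϱ10 : Tendsto ϱ1 atTop (nhds 0) := by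
      have h1 : Tendsto (fun t:ℝ => t ^ (-ν0) * (t ^ ν0 * ϱ1 t)) atTop
          (nhds (0 * (-μp / (lam + dd * ν0)))) :=
        (tendsto_rpow_neg_atTop hν0pos).mul hϱ1asym
      rw [zero_mul] at h1
      apply h1.congr'
      filter_upwards [eventually_gt_atTop (0:ℝ)] with t htpos
      rw [← mul_assoc, ← Real.rpow_add htpos, neg_add_cancel, Real.rpow_zero, one_mul]
    have e1 : ∀ᶠ t in atTop, |ϱ1 t| ≤ r0/2 := by
      have h2 : Tendsto (fun t => |ϱ1 t|) atTop (nhds 0) := by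
        simpa using hϱ10.abs
      exact h2.eventually_le_const (by linarith)
    have e2 : ∀ᶠ t : ℝ in atTop, L * N * t ^ (-(1:ℝ)/q) ≤ ε := by
      have h2 : Tendsto (fun t:ℝ => L * N * t ^ (-(1:ℝ)/q)) atTop (nhds (L * N * 0)) := by
        have h3 := (tendsto_rpow_neg_atTop (y := 1/q) (by positivity)).const_mul (L * (N:ℝ))
        simpa [neg_div] using h3
      rw [mul_zero] at h2
      exact h2.eventually_le_const hε
    have e3 : ∀ᶠ t : ℝ in atTop, n < q → ν0 * t ^ ((n:ℝ)/q - 1) ≤ ε := by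
      by_cases hcase : n < q
      · have hβ : 0 < 1 - (n:ℝ)/q := by
          have h4 : (n:ℝ) < q := by exact_mod_cast hcase
          have h5 : (n:ℝ)/q < 1 := (div_lt_one hq').2 h4
          linarith
        have heq : (fun t:ℝ => ν0 * t ^ ((n:ℝ)/q - 1))
            = fun t:ℝ => ν0 * t ^ (-(1 - (n:ℝ)/q)) := by
          funext t; congr 1; ring_nf
        have h2 : Tendsto (fun t:ℝ => ν0 * t ^ ((n:ℝ)/q - 1)) atTop (nhds (ν0 * 0)) := by
          rw [heq]
          exact (tendsto_rpow_neg_atTop hβ).const_mul ν0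
        rw [mul_zero] at h2
        filter_upwards [h2.eventually_le_const hε] with t ht _
        exact ht
      · filter_upwards with t ht
        exact absurd ht hcase
    obtain ⟨a, ha⟩ := Filter.eventually_atTop.1 ((e1.and (e2.and e3)))
    refine ⟨max (max t0 1) a, le_trans (le_max_left t0 1) (le_max_left _ _),
      le_trans (le_max_right t0 1) (le_max_left _ _), ?_, ?_, ?_⟩
    · exact fun t ht => (ha t (le_trans (le_max_right _ _) ht)).1
    · exact fun t ht => (ha t (le_trans (le_max_right _ _) ht)).2.1
    · exact fun t ht => (ha t (le_trans (le_max_right _ _) ht)).2.2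
  have ht1pos : 0 < t1 := lt_of_lt_of_le one_pos ht11
  -- the constant c
  have hβpos : n < q → 0 < 1 - (n:ℝ)/q := by
    intro hcase
    have h4 : (n:ℝ) < q := by exact_mod_cast hcase
    have h5 : (n:ℝ)/q < 1 := (div_lt_one hq').2 h4
    linarith
  refine ⟨t1, δ, if n = q then c0 else c0 / (1 - (n:ℝ)/q), ht1t0, hδpos, ?_, ?_⟩
  · by_cases hcase : n = q
    · simpa [hcase] using hc0
    · rw [if_neg hcase]
      exact div_pos hc0 (hβpos (lt_of_le_of_ne hnq hcase))
  intro ϱ hϱsol hϱinit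
  -- notation (opaque to avoid blowup in linarith/ring)
  obtain ⟨K, hKdef⟩ : ∃ K : ℝ → ℝ, K = fun s => if n = q then Real.log s
      else s ^ (1 - (n:ℝ)/q) / (1 - (n:ℝ)/q) := ⟨_, rfl⟩
  obtain ⟨h, hhdef⟩ : ∃ h : ℝ → ℝ, h = fun s =>
      (s ^ ν0 * (ϱ s - ϱ1 s))^2 * Real.exp (2 * c0 * (K s - K t1)) := ⟨_, rfl⟩
  obtain ⟨D, hDdef⟩ : ∃ D : ℝ → ℝ, D = fun x =>
      (2 * (x ^ ν0 * (ϱ x - ϱ1 x)) *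
        (ν0 * x ^ (ν0 - 1) * (ϱ x - ϱ1 x) + x ^ ν0 * (ΛN (ϱ x) x - ΛN (ϱ1 x) x)))
        * Real.exp (2 * c0 * (K x - K t1))
      + (x ^ ν0 * (ϱ x - ϱ1 x))^2 *
          (Real.exp (2 * c0 * (K x - K t1)) * (2 * c0 * x ^ (-(n:ℝ)/q))) := ⟨_, rfl⟩
  -- initial bound
  have hvt1 : |t1 ^ ν0 * (ϱ t1 - ϱ1 t1)| ≤ δ := by
    have hrp : (0:ℝ) < t1 ^ ν0 := Real.rpow_pos_of_pos ht1pos ν0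
    rw [abs_mul, abs_of_pos hrp]
    calc t1 ^ ν0 * |ϱ t1 - ϱ1 t1| ≤ t1 ^ ν0 * (δ * t1 ^ (-ν0)) :=
          mul_le_mul_of_nonneg_left hϱinit hrp.le
      _ = δ * (t1 ^ ν0 * t1 ^ (-ν0)) := by ring
      _ = δ := by rw [← Real.rpow_add ht1pos, add_neg_cancel, Real.rpow_zero, mul_one]
  -- derivative of h
  have hhderiv : ∀ x, t1 ≤ x → HasDerivAt h (D x) x := by
    intro x hx
    have hx0 : 0 < x := lt_of_lt_of_le ht1pos hx
    have hu' : HasDerivAt (fun s => ϱ s - ϱ1 s) (ΛN (ϱ x) x - ΛN (ϱ1 x) x) x :=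
      (hϱsol x hx).sub (hϱ1sol x (le_trans ht1t0 hx))
    have hr : HasDerivAt (fun s:ℝ => s ^ ν0) (ν0 * x ^ (ν0 - 1)) x :=
      Real.hasDerivAt_rpow_const (Or.inl hx0.ne')
    have hv' : HasDerivAt (fun s => s ^ ν0 * (ϱ s - ϱ1 s))
        (ν0 * x ^ (ν0-1) * (ϱ x - ϱ1 x) + x ^ ν0 * (ΛN (ϱ x) x - ΛN (ϱ1 x) x)) x := hr.mul hu'
    have hK' : HasDerivAt K (x ^ (-(n:ℝ)/q)) x := by
      by_cases hcase : n = q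
      · have hKeq : K = fun s => Real.log s := by rw [hKdef]; funext s; simp [hcase]
        rw [hKeq]
        have hnd : (-(n:ℝ)/q) = -1 := by subst hcase; field_simp
        rw [hnd, Real.rpow_neg_one]
        exact Real.hasDerivAt_log hx0.ne'
      · have hβ : (1 - (n:ℝ)/q) ≠ 0 := (hβpos (lt_of_le_of_ne hnq hcase)).ne'
        have hKeq : K = fun s : ℝ => s ^ (1 - (n:ℝ)/q) / (1 - (n:ℝ)/q) := by
          rw [hKdef]; funext s; simp [hcase]
        rw [hKeq]
        have h1 := (Real.hasDerivAt_rpow_const (p := 1 - (n:ℝ)/q)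
          (Or.inl hx0.ne')).div_const (1 - (n:ℝ)/q)
        have h2 : (1 - (n:ℝ)/q) * x ^ (1 - (n:ℝ)/q - 1) / (1 - (n:ℝ)/q) = x ^ (-(n:ℝ)/q) := by
          rw [mul_comm, mul_div_assoc, div_self hβ, mul_one]
          congr 1
          ring
        rw [← h2]
        exact h1
    have hexp' : HasDerivAt (fun s => Real.exp (2 * c0 * (K s - K t1)))
        (Real.exp (2 * c0 * (K x - K t1)) * (2 * c0 * x ^ (-(n:ℝ)/q))) x :=
      ((hK'.sub_const (K t1)).const_mul (2 * c0)).exp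
    have hE' : HasDerivAt (fun s => (s ^ ν0 * (ϱ s - ϱ1 s))^2)
        (2 * (x ^ ν0 * (ϱ x - ϱ1 x)) *
          (ν0 * x ^ (ν0-1) * (ϱ x - ϱ1 x) + x ^ ν0 * (ΛN (ϱ x) x - ΛN (ϱ1 x) x))) x := by
      have h3 := hv'.fun_pow 2
      simpa using h3
    rw [hhdef, hDdef]
    exact hE'.mul hexp'
  -- K is monotone
  have hKmono : ∀ x, t1 ≤ x → K t1 ≤ K x := by
    intro x hx
    rw [hKdef]
    by_cases hcase : n = q
    · simp only [if_pos hcase]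
      exact Real.log_le_log ht1pos hx
    · simp only [if_neg hcase]
      have hβ := hβpos (lt_of_le_of_ne hnq hcase)
      exact (div_le_div_iff_of_pos_right hβ).2 (Real.rpow_le_rpow ht1pos.le hx hβ.le)
  -- core differential inequality
  have hcore : ∀ x, t1 ≤ x → |x ^ ν0 * (ϱ x - ϱ1 x)| ≤ δ0 → D x ≤ 0 := by
    intro x hx hreg
    have hx0 : 0 < x := lt_of_lt_of_le ht1pos hx
    have hx1 : 1 ≤ x := le_trans ht11 hx
    have hxν0 : (1:ℝ) ≤ x ^ ν0 := Real.one_le_rpow hx1 hν0pos.le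
    have hvx : |x ^ ν0 * (ϱ x - ϱ1 x)| = x ^ ν0 * |ϱ x - ϱ1 x| := by
      rw [abs_mul, abs_of_pos (Real.rpow_pos_of_pos hx0 ν0)]
    have hw : |ϱ x - ϱ1 x| ≤ δ0 := by
      rw [hvx] at hreg
      nlinarith only [hreg, hxν0, abs_nonneg (ϱ x - ϱ1 x)]
    have hb : |ϱ1 x| ≤ r0/2 := hev1 x hx
    have ha : |ϱ x| ≤ r0 := by
      have h1 : |ϱ x| ≤ |ϱ1 x| + |ϱ x - ϱ1 x| := by
        calc |ϱ x| = |ϱ1 x + (ϱ x - ϱ1 x)| := by ring_nf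
          _ ≤ |ϱ1 x| + |ϱ x - ϱ1 x| := abs_add_le _ _
      rw [hδ0def] at hw
      linarith only [h1, hb, hw]
    have haI : ϱ x ∈ Set.Icc (-r0) r0 := by
      rw [Set.mem_Icc]
      constructor <;> [linarith only [abs_le.1 ha |>.1]; linarith only [abs_le.1 ha |>.2]]
    have hbI : ϱ1 x ∈ Set.Icc (-r0) r0 := by
      have := abs_le.1 hb
      rw [Set.mem_Icc]
      constructor <;> [linarith only [this.1, hr0pos]; linarith only [this.2, hr0pos]]
    -- Lipschitz bound for each k
    have hlip : ∀ k ∈ Finset.Icc n N, |Λ k (ϱ x) - Λ k (ϱ1 x)| ≤ L * |ϱ x - ϱ1 x| := by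
      intro k hk
      have h3 := Convex.norm_image_sub_le_of_norm_hasDerivWithin_le
        (f := Λ k) (f' := deriv (Λ k)) (s := Set.Icc (-r0) r0)
        (fun y _ => (((hΛ k).differentiable (by simp)) y).hasDerivAt.hasDerivWithinAt)
        (fun y hy => by simpa [Real.norm_eq_abs] using hL k hk y hy)
        (convex_Icc _ _) hbI haI
      simpa [Real.norm_eq_abs] using h3
    -- refined bound for k = n
    have hlipn : (ϱ x - ϱ1 x) * (Λ n (ϱ x) - Λ n (ϱ1 x)) ≤ (lam + ε) * (ϱ x - ϱ1 x)^2 := by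
      have hg : |(Λ n (ϱ x) - lam * (ϱ x)) - (Λ n (ϱ1 x) - lam * (ϱ1 x))|
          ≤ ε * |ϱ x - ϱ1 x| := by
        have h3 := Convex.norm_image_sub_le_of_norm_hasDerivWithin_le
          (f := fun y => Λ n y - lam * y) (f' := fun y => deriv (Λ n) y - lam)
          (s := Set.Icc (-r0) r0)
          (fun y _ => by
            have h4 : HasDerivAt (fun y : ℝ => Λ n y - lam * y) (deriv (Λ n) y - lam) y := by
              have h5 := (((hΛ n).differentiable (by simp)) y).hasDerivAt
              simpa using h5.fun_sub ((hasDerivAt_id y).const_mul lam)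
            exact h4.hasDerivWithinAt)
          (fun y hy => by
            simp only [Real.norm_eq_abs]
            exact hr0 y (abs_le.2 ⟨by linarith [hy.1], by linarith [hy.2]⟩))
          (convex_Icc _ _) hbI haI
        simpa [Real.norm_eq_abs] using h3
      have h1 : (ϱ x - ϱ1 x) * ((Λ n (ϱ x) - lam * (ϱ x)) - (Λ n (ϱ1 x) - lam * (ϱ1 x)))
          ≤ ε * (ϱ x - ϱ1 x)^2 := by
        calc (ϱ x - ϱ1 x) * ((Λ n (ϱ x) - lam * (ϱ x)) - (Λ n (ϱ1 x) - lam * (ϱ1 x)))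
            ≤ |(ϱ x - ϱ1 x) * ((Λ n (ϱ x) - lam * (ϱ x)) - (Λ n (ϱ1 x) - lam * (ϱ1 x)))| :=
              le_abs_self _
          _ = |ϱ x - ϱ1 x| * |(Λ n (ϱ x) - lam * (ϱ x)) - (Λ n (ϱ1 x) - lam * (ϱ1 x))| :=
              abs_mul _ _
          _ ≤ |ϱ x - ϱ1 x| * (ε * |ϱ x - ϱ1 x|) := mul_le_mul_of_nonneg_left hg (abs_nonneg _)
          _ = ε * (|ϱ x - ϱ1 x| * |ϱ x - ϱ1 x|) := by ring
          _ = ε * (ϱ x - ϱ1 x)^2 := by rw [abs_mul_abs_self]; ring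
      nlinarith only [h1]
    -- sum decomposition
    have hΔ : ΛN (ϱ x) x - ΛN (ϱ1 x) x
        = ∑ k ∈ Finset.Icc n N, x ^ (-(k:ℝ)/q) * (Λ k (ϱ x) - Λ k (ϱ1 x)) := by
      rw [hΛN, hΛN, ← Finset.sum_sub_distrib]
      exact Finset.sum_congr rfl (fun k _ => by ring)
    have hP : (0:ℝ) < x ^ (-(n:ℝ)/q) := Real.rpow_pos_of_pos hx0 _
    have hsum1 : (ϱ x - ϱ1 x) * (ΛN (ϱ x) x - ΛN (ϱ1 x) x)
        ≤ x ^ (-(n:ℝ)/q) * ((lam + ε) * (ϱ x - ϱ1 x)^2)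
          + (N:ℝ) * (x ^ (-((n:ℝ)+1)/q) * (L * (ϱ x - ϱ1 x)^2)) := by
      rw [hΔ, Finset.mul_sum]
      rw [← Finset.add_sum_erase _ _ hnmem]
      have hterm_n : (ϱ x - ϱ1 x) * (x ^ (-(n:ℝ)/q) * (Λ n (ϱ x) - Λ n (ϱ1 x)))
          ≤ x ^ (-(n:ℝ)/q) * ((lam + ε) * (ϱ x - ϱ1 x)^2) := by
        have h4 := mul_le_mul_of_nonneg_left hlipn hP.le
        linarith only [h4]
      have hterm_k : ∀ k ∈ (Finset.Icc n N).erase n,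
          (ϱ x - ϱ1 x) * (x ^ (-(k:ℝ)/q) * (Λ k (ϱ x) - Λ k (ϱ1 x)))
          ≤ x ^ (-((n:ℝ)+1)/q) * (L * (ϱ x - ϱ1 x)^2) := by
        intro k hk
        have hkmem : k ∈ Finset.Icc n N := Finset.mem_of_mem_erase hk
        have hkne : k ≠ n := Finset.ne_of_mem_erase hk
        have hkge : n + 1 ≤ k := Nat.succ_le_of_lt
          (lt_of_le_of_ne (Finset.mem_Icc.1 hkmem).1 (Ne.symm hkne))
        have hrle : x ^ (-(k:ℝ)/q) ≤ x ^ (-((n:ℝ)+1)/q) := by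
          apply Real.rpow_le_rpow_of_exponent_le hx1
          rw [neg_div, neg_div, neg_le_neg_iff]
          apply (div_le_div_iff_of_pos_right hq').2
          exact_mod_cast hkge
        have hud : (ϱ x - ϱ1 x) * (Λ k (ϱ x) - Λ k (ϱ1 x)) ≤ L * (ϱ x - ϱ1 x)^2 := by
          calc (ϱ x - ϱ1 x) * (Λ k (ϱ x) - Λ k (ϱ1 x))
              ≤ |(ϱ x - ϱ1 x) * (Λ k (ϱ x) - Λ k (ϱ1 x))| := le_abs_self _
            _ = |ϱ x - ϱ1 x| * |Λ k (ϱ x) - Λ k (ϱ1 x)| := abs_mul _ _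
            _ ≤ |ϱ x - ϱ1 x| * (L * |ϱ x - ϱ1 x|) :=
                mul_le_mul_of_nonneg_left (hlip k hkmem) (abs_nonneg _)
            _ = L * (|ϱ x - ϱ1 x| * |ϱ x - ϱ1 x|) := by ring
            _ = L * (ϱ x - ϱ1 x)^2 := by rw [abs_mul_abs_self]; ring
        have hLu : 0 ≤ L * (ϱ x - ϱ1 x)^2 := mul_nonneg hL0 (sq_nonneg _)
        calc (ϱ x - ϱ1 x) * (x ^ (-(k:ℝ)/q) * (Λ k (ϱ x) - Λ k (ϱ1 x)))
            = x ^ (-(k:ℝ)/q) * ((ϱ x - ϱ1 x) * (Λ k (ϱ x) - Λ k (ϱ1 x))) := by ring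
          _ ≤ x ^ (-(k:ℝ)/q) * (L * (ϱ x - ϱ1 x)^2) :=
              mul_le_mul_of_nonneg_left hud (Real.rpow_nonneg hx0.le _)
          _ ≤ x ^ (-((n:ℝ)+1)/q) * (L * (ϱ x - ϱ1 x)^2) := mul_le_mul_of_nonneg_right hrle hLu
      have hsum_erase : ∑ k ∈ (Finset.Icc n N).erase n,
          (ϱ x - ϱ1 x) * (x ^ (-(k:ℝ)/q) * (Λ k (ϱ x) - Λ k (ϱ1 x)))
          ≤ (N:ℝ) * (x ^ (-((n:ℝ)+1)/q) * (L * (ϱ x - ϱ1 x)^2)) := by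
        have h5 := Finset.sum_le_card_nsmul _ _ _ hterm_k
        rw [nsmul_eq_mul] at h5
        refine le_trans h5 ?_
        apply mul_le_mul_of_nonneg_right _ (mul_nonneg (Real.rpow_nonneg hx0.le _)
          (mul_nonneg hL0 (sq_nonneg _)))
        have hcard : ((Finset.Icc n N).erase n).card ≤ N := by
          have := Finset.card_erase_of_mem hnmem
          rw [this, Nat.card_Icc]
          omega
        exact_mod_cast hcard
      exact add_le_add hterm_n hsum_erase
    -- use hev2
    have hsplit : x ^ (-((n:ℝ)+1)/q) = x ^ (-(n:ℝ)/q) * x ^ (-(1:ℝ)/q) := by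
      rw [← Real.rpow_add hx0]
      congr 1
      ring
    have hev2x := hev2 x hx
    have h2 : (N:ℝ) * (x ^ (-((n:ℝ)+1)/q) * (L * (ϱ x - ϱ1 x)^2))
        ≤ x ^ (-(n:ℝ)/q) * (ε * (ϱ x - ϱ1 x)^2) := by
      rw [hsplit]
      have h6 : (L * N * x ^ (-(1:ℝ)/q)) * (x ^ (-(n:ℝ)/q) * (ϱ x - ϱ1 x)^2)
          ≤ ε * (x ^ (-(n:ℝ)/q) * (ϱ x - ϱ1 x)^2) :=
        mul_le_mul_of_nonneg_right hev2x (mul_nonneg hP.le (sq_nonneg _))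
      linarith only [h6]
    have hwΔ : (ϱ x - ϱ1 x) * (ΛN (ϱ x) x - ΛN (ϱ1 x) x)
        ≤ x ^ (-(n:ℝ)/q) * ((lam + 2*ε) * (ϱ x - ϱ1 x)^2) := by linarith only [hsum1, h2]
    -- the x^{ν0-1} term
    have hAB : x ^ ν0 = x ^ (ν0 - 1) * x := by
      rw [← Real.rpow_add_one hx0.ne']
      congr 1
      ring
    have hBpos : (0:ℝ) < x ^ (ν0 - 1) := Real.rpow_pos_of_pos hx0 _
    have hPx : ν0 ≤ (dd * ν0 + ε) * (x ^ (-(n:ℝ)/q) * x) := by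
      by_cases hcase : n = q
      · have hnd : (-(n:ℝ)/q) = -1 := by subst hcase; field_simp
        rw [hnd, Real.rpow_neg_one, inv_mul_cancel₀ hx0.ne']
        rw [hdd, if_pos hcase]
        linarith only [hε]
      · have hddz : dd = 0 := by rw [hdd, if_neg hcase]
        have hev3x := hev3 x hx (lt_of_le_of_ne hnq hcase)
        have hprod : x ^ ((n:ℝ)/q - 1) * (x ^ (-(n:ℝ)/q) * x) = 1 := by
          rw [← Real.rpow_add_one hx0.ne', ← Real.rpow_add hx0,
            show (n:ℝ)/q - 1 + (-(n:ℝ)/q + 1) = 0 by ring, Real.rpow_zero]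
        have hPxpos : 0 < x ^ (-(n:ℝ)/q) * x := mul_pos hP hx0
        have h7 := mul_le_mul_of_nonneg_right hev3x hPxpos.le
        rw [mul_assoc, hprod, mul_one] at h7
        rw [hddz]
        linarith only [h7]
    -- final assembly
    rw [hDdef]
    show (2 * (x ^ ν0 * (ϱ x - ϱ1 x)) *
        (ν0 * x ^ (ν0 - 1) * (ϱ x - ϱ1 x) + x ^ ν0 * (ΛN (ϱ x) x - ΛN (ϱ1 x) x)))
        * Real.exp (2 * c0 * (K x - K t1))
      + (x ^ ν0 * (ϱ x - ϱ1 x))^2 *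
          (Real.exp (2 * c0 * (K x - K t1)) * (2 * c0 * x ^ (-(n:ℝ)/q))) ≤ 0
    have hgoal : (2 * (x ^ ν0 * (ϱ x - ϱ1 x)) *
        (ν0 * x ^ (ν0 - 1) * (ϱ x - ϱ1 x) + x ^ ν0 * (ΛN (ϱ x) x - ΛN (ϱ1 x) x)))
        * Real.exp (2 * c0 * (K x - K t1))
      + (x ^ ν0 * (ϱ x - ϱ1 x))^2 *
          (Real.exp (2 * c0 * (K x - K t1)) * (2 * c0 * x ^ (-(n:ℝ)/q)))
      = Real.exp (2 * c0 * (K x - K t1)) *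
        (2 * (x ^ ν0 * (ϱ x - ϱ1 x)) *
          (ν0 * x ^ (ν0 - 1) * (ϱ x - ϱ1 x) + x ^ ν0 * (ΛN (ϱ x) x - ΛN (ϱ1 x) x))
        + (x ^ ν0 * (ϱ x - ϱ1 x))^2 * (2 * c0 * x ^ (-(n:ℝ)/q))) := by ring
    rw [hgoal]
    apply mul_nonpos_of_nonneg_of_nonpos (Real.exp_nonneg _)
    have hApos : (0:ℝ) < x ^ ν0 := Real.rpow_pos_of_pos hx0 _
    have fact1 : ν0 * (x ^ ν0) * (x ^ (ν0 - 1)) * (ϱ x - ϱ1 x)^2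
        ≤ (dd*ν0 + ε) * ((x ^ (-(n:ℝ)/q)) * (x ^ ν0)^2 * (ϱ x - ϱ1 x)^2) := by
      have h8 : ν0 * ((x ^ ν0) * (ϱ x - ϱ1 x)^2)
          ≤ ((dd * ν0 + ε) * ((x ^ (-(n:ℝ)/q)) * x)) * ((x ^ ν0) * (ϱ x - ϱ1 x)^2) :=
        mul_le_mul_of_nonneg_right hPx (mul_nonneg hApos.le (sq_nonneg _))
      calc ν0 * (x ^ ν0) * (x ^ (ν0 - 1)) * (ϱ x - ϱ1 x)^2
          = (ν0 * ((x ^ ν0) * (ϱ x - ϱ1 x)^2)) * (x ^ (ν0 - 1)) := by ring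
        _ ≤ (((dd*ν0 + ε) * ((x ^ (-(n:ℝ)/q)) * x)) * ((x ^ ν0) * (ϱ x - ϱ1 x)^2))
              * (x ^ (ν0 - 1)) := mul_le_mul_of_nonneg_right h8 hBpos.le
        _ = (dd*ν0 + ε) * ((x ^ (-(n:ℝ)/q)) * ((x ^ (ν0 - 1) * x) * (x ^ ν0))
              * (ϱ x - ϱ1 x)^2) := by ring
        _ = (dd*ν0 + ε) * ((x ^ (-(n:ℝ)/q)) * (x ^ ν0)^2 * (ϱ x - ϱ1 x)^2) := by
            rw [← hAB]; ring
    have fact2 : (x ^ ν0)^2 * ((ϱ x - ϱ1 x) * (ΛN (ϱ x) x - ΛN (ϱ1 x) x))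
        ≤ (lam + 2*ε) * ((x ^ (-(n:ℝ)/q)) * (x ^ ν0)^2 * (ϱ x - ϱ1 x)^2) := by
      have h8 := mul_le_mul_of_nonneg_left hwΔ (sq_nonneg (x ^ ν0))
      calc (x ^ ν0)^2 * ((ϱ x - ϱ1 x) * (ΛN (ϱ x) x - ΛN (ϱ1 x) x))
          ≤ (x ^ ν0)^2 * (x ^ (-(n:ℝ)/q) * ((lam + 2*ε) * (ϱ x - ϱ1 x)^2)) := h8
        _ = (lam + 2*ε) * ((x ^ (-(n:ℝ)/q)) * (x ^ ν0)^2 * (ϱ x - ϱ1 x)^2) := by ring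
    have hX : 0 ≤ (x ^ (-(n:ℝ)/q)) * (x ^ ν0)^2 * (ϱ x - ϱ1 x)^2 :=
      mul_nonneg (mul_nonneg hP.le (sq_nonneg _)) (sq_nonneg _)
    have hzero : lam + dd*ν0 + 3*ε + c0 = 0 := by linarith only [hsum]
    calc 2 * (x ^ ν0 * (ϱ x - ϱ1 x)) *
          (ν0 * x ^ (ν0 - 1) * (ϱ x - ϱ1 x) + x ^ ν0 * (ΛN (ϱ x) x - ΛN (ϱ1 x) x))
        + (x ^ ν0 * (ϱ x - ϱ1 x))^2 * (2 * c0 * x ^ (-(n:ℝ)/q))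
        = 2 * (ν0 * (x ^ ν0) * (x ^ (ν0 - 1)) * (ϱ x - ϱ1 x)^2)
          + 2 * ((x ^ ν0)^2 * ((ϱ x - ϱ1 x) * (ΛN (ϱ x) x - ΛN (ϱ1 x) x)))
          + 2 * c0 * ((x ^ (-(n:ℝ)/q)) * (x ^ ν0)^2 * (ϱ x - ϱ1 x)^2) := by ring
      _ ≤ 2 * ((dd*ν0 + ε) * ((x ^ (-(n:ℝ)/q)) * (x ^ ν0)^2 * (ϱ x - ϱ1 x)^2))
          + 2 * ((lam + 2*ε) * ((x ^ (-(n:ℝ)/q)) * (x ^ ν0)^2 * (ϱ x - ϱ1 x)^2))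
          + 2 * c0 * ((x ^ (-(n:ℝ)/q)) * (x ^ ν0)^2 * (ϱ x - ϱ1 x)^2) := by
          linarith only [fact1, fact2]
      _ = 2 * ((x ^ (-(n:ℝ)/q)) * (x ^ ν0)^2 * (ϱ x - ϱ1 x)^2)
            * (lam + dd*ν0 + 3*ε + c0) := by ring
      _ = 0 := by rw [hzero, mul_zero]
  -- Gronwall conclusion
  have hmain : ∀ T, t1 ≤ T → |T ^ ν0 * (ϱ T - ϱ1 T)|
      ≤ |t1 ^ ν0 * (ϱ t1 - ϱ1 t1)| * Real.exp (-c0 * (K T - K t1)) := by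
    intro T hT
    have hht1 : h t1 = (t1 ^ ν0 * (ϱ t1 - ϱ1 t1))^2 := by
      rw [hhdef]
      show (t1 ^ ν0 * (ϱ t1 - ϱ1 t1))^2 * Real.exp (2 * c0 * (K t1 - K t1)) = _
      rw [sub_self, mul_zero, Real.exp_zero, mul_one]
    have hhT : h T ≤ h t1 := by
      apply aux_gronwall h D t1 T (δ0^2) hT (fun x hx => hhderiv x hx.1)
      · rw [hht1]
        have h4 : (t1 ^ ν0 * (ϱ t1 - ϱ1 t1))^2 ≤ δ^2 := by
          nlinarith only [abs_nonneg (t1 ^ ν0 * (ϱ t1 - ϱ1 t1)),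
            sq_abs (t1 ^ ν0 * (ϱ t1 - ϱ1 t1)), hvt1]
        have hδδ0 : δ < δ0 := by rw [hδdef, hδ0def]; linarith
        nlinarith only [h4, hδδ0, hδpos]
      · intro x hx hhx
        apply hcore x hx.1
        have hexp1 : (1:ℝ) ≤ Real.exp (2 * c0 * (K x - K t1)) := by
          rw [Real.one_le_exp_iff]
          have := hKmono x hx.1
          nlinarith only [hc0, this]
        have hEle : (x ^ ν0 * (ϱ x - ϱ1 x))^2 ≤ h x := by
          rw [hhdef]
          show _ ≤ (x ^ ν0 * (ϱ x - ϱ1 x))^2 * Real.exp (2 * c0 * (K x - K t1))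
          nlinarith only [hexp1, sq_nonneg (x ^ ν0 * (ϱ x - ϱ1 x))]
        have h5 : (x ^ ν0 * (ϱ x - ϱ1 x))^2 ≤ δ0^2 := le_trans hEle hhx
        nlinarith only [h5, abs_nonneg (x ^ ν0 * (ϱ x - ϱ1 x)), sq_abs (x ^ ν0 * (ϱ x - ϱ1 x)), hδ0pos]
    have hET : (T ^ ν0 * (ϱ T - ϱ1 T))^2
        ≤ (|t1 ^ ν0 * (ϱ t1 - ϱ1 t1)| * Real.exp (-c0 * (K T - K t1)))^2 := by
      have hexppos : 0 < Real.exp (2 * c0 * (K T - K t1)) := Real.exp_pos _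
      have h1 : (T ^ ν0 * (ϱ T - ϱ1 T))^2 * Real.exp (2 * c0 * (K T - K t1))
          ≤ (t1 ^ ν0 * (ϱ t1 - ϱ1 t1))^2 := by
        rw [← hht1]
        calc (T ^ ν0 * (ϱ T - ϱ1 T))^2 * Real.exp (2 * c0 * (K T - K t1)) = h T := by
              rw [hhdef]
          _ ≤ h t1 := hhT
      have h2 : (|t1 ^ ν0 * (ϱ t1 - ϱ1 t1)| * Real.exp (-c0 * (K T - K t1)))^2
          = (t1 ^ ν0 * (ϱ t1 - ϱ1 t1))^2 * (Real.exp (2 * c0 * (K T - K t1)))⁻¹ := by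
        rw [mul_pow, sq_abs, ← Real.exp_nat_mul]
        congr 1
        rw [← Real.exp_neg]
        congr 1
        push_cast
        ring
      have h3 : (T ^ ν0 * (ϱ T - ϱ1 T))^2
          ≤ (t1 ^ ν0 * (ϱ t1 - ϱ1 t1))^2 / Real.exp (2 * c0 * (K T - K t1)) :=
        (le_div_iff₀ hexppos).2 h1
      rw [h2, ← div_eq_mul_inv]
      exact h3
    calc |T ^ ν0 * (ϱ T - ϱ1 T)| = Real.sqrt ((T ^ ν0 * (ϱ T - ϱ1 T))^2) :=
          (Real.sqrt_sq_eq_abs _).symm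
      _ ≤ Real.sqrt ((|t1 ^ ν0 * (ϱ t1 - ϱ1 t1)| * Real.exp (-c0 * (K T - K t1)))^2) :=
          Real.sqrt_le_sqrt hET
      _ = |t1 ^ ν0 * (ϱ t1 - ϱ1 t1)| * Real.exp (-c0 * (K T - K t1)) :=
          Real.sqrt_sq (by positivity)
  -- final conversion
  intro t ht
  have ht0' : 0 < t := lt_of_lt_of_le ht1pos ht
  have habs : ∀ s : ℝ, 0 < s → |s ^ ν0 * (ϱ s - ϱ1 s)| = s ^ ν0 * |ϱ s - ϱ1 s| := by
    intro s hs
    rw [abs_mul, abs_of_pos (Real.rpow_pos_of_pos hs ν0)]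
  have hmaint := hmain t ht
  rw [habs t ht0', habs t1 ht1pos] at hmaint
  constructor
  · intro hnltq
    have hcase : ¬ (n = q) := Nat.ne_of_lt hnltq
    rw [if_neg hcase]
    have hβ := hβpos hnltq
    have hKexp : -c0 * (K t - K t1)
        = -(c0 / (1 - (n:ℝ)/q)) * (t ^ (1 - (n:ℝ)/q) - t1 ^ (1 - (n:ℝ)/q)) := by
      rw [hKdef]
      simp only [if_neg hcase]
      field_simp
    rw [hKexp] at hmaint
    exact hmaint
  · intro hneq
    rw [if_pos hneq]
    have hKexp : Real.exp (-c0 * (K t - K t1)) = (t / t1) ^ (-c0) := by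
      rw [hKdef]
      simp only [if_pos hneq]
      rw [Real.rpow_def_of_pos (div_pos ht0' ht1pos), Real.log_div ht0'.ne' ht1pos.ne']
      ring_nf
    rw [hKexp] at hmaint
    exact hmaint
end

section
/- Assume n = q < p, Λ_n(0) = 0 and λ_n := Λ_n′(0) < 0. Then for every ε ∈ (0, ρ*) there exist δ0 > 0 and t0 ≥ t* such that every continuously differentiable solution (ρ(t), φ(t)) of the perturbed system with |ρ(t0)| ≤ δ0 and φ(t0) ∈ ℝ satisfies |ρ(t)| < ε for all t ≥ t0 at which the solution is defined. -/
open Filter Real Set Asymptotics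

lemma barrier_aux {t0 T b : ℝ} {f f' : ℝ → ℝ}
    (hf : ∀ t ∈ Set.Icc t0 T, HasDerivAt f (f' t) t)
    (h0 : f t0 < b)
    (hder : ∀ t ∈ Set.Icc t0 T, f t = b → f' t < 0) :
    ∀ t ∈ Set.Icc t0 T, f t < b := by
  by_contra hcon
  push_neg at hcon
  obtain ⟨t1, ht1, hb1⟩ := hcon
  set S : Set ℝ := {t ∈ Set.Icc t0 T | b ≤ f t} with hS
  have hSne : S.Nonempty := ⟨t1, ht1, hb1⟩
  have hcont : ContinuousOn f (Set.Icc t0 T) := fun t ht =>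
    ((hf t ht).continuousAt).continuousWithinAt
  have hSclosed : IsClosed S :=
    hcont.preimage_isClosed_of_isClosed isClosed_Icc isClosed_Ici
  have hScomp : IsCompact S :=
    isCompact_Icc.of_isClosed_subset hSclosed (fun t ht => ht.1)
  set s := sInf S with hs
  have hsS : s ∈ S := hScomp.sInf_mem hSne
  obtain ⟨hsIcc, hsb⟩ := hsS
  have hst0 : t0 < s := by
    rcases lt_or_eq_of_le hsIcc.1 with h | h
    · exact h
    · exact absurd hsb (by rw [← h]; exact not_le.mpr h0)
  have hlt : ∀ t, t0 ≤ t → t < s → f t < b := by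
    intro t h1 h2
    by_contra h3
    exact absurd (csInf_le hScomp.bddBelow ⟨⟨h1, h2.le.trans hsIcc.2⟩, not_lt.mp h3⟩)
      (not_le.mpr h2)
  have hfs : f s = b := by
    refine le_antisymm ?_ hsb
    have htend : Tendsto f (nhdsWithin s (Set.Iio s)) (nhds (f s)) :=
      ((hf s hsIcc).continuousAt.continuousWithinAt).tendsto
    refine le_of_tendsto htend ?_
    filter_upwards [Ioo_mem_nhdsLT_of_mem ⟨hst0, le_refl s⟩] with t ht
    exact (hlt t ht.1.le ht.2).le
  have hd : f' s < 0 := hder s hsIcc hfs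
  have hslope : Tendsto (slope f s) (nhdsWithin s (Set.Iio s)) (nhds (f' s)) :=
    (hasDerivAt_iff_tendsto_slope.mp (hf s hsIcc)).mono_left
      (nhdsWithin_mono s (fun x hx => ne_of_lt hx))
  have hev : ∀ᶠ t in nhdsWithin s (Set.Iio s), slope f s t < 0 :=
    hslope.eventually_lt_const hd
  have : (nhdsWithin s (Set.Iio s)).NeBot := nhdsLT_neBot s
  obtain ⟨t, hts, htIoo⟩ := (hev.and (Ioo_mem_nhdsLT_of_mem ⟨hst0, le_refl s⟩)).exists
  have hq : (f t - f s) / (t - s) < 0 := by simpa [slope_def_field, div_eq_iff] using hts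
  have h1 : f t - f s > 0 := by
    rcases div_neg_iff.mp hq with ⟨h, h'⟩ | ⟨h, h'⟩
    · linarith [htIoo.2]
    · linarith
  have := hlt t htIoo.1.le htIoo.2
  linarith [hfs ▸ h1]

set_option maxHeartbeats 1000000 in
/-- Case `(n,p) ∈ Q₁` with `n = q` and `λ_n < 0`: solutions of the perturbed system with
small enough initial amplitude remain close to zero. -/
theorem stmt_5 (q n p N : ℕ) (hq : 0 < q) (hn : 0 < n)
    (hnp : n ≤ p) (hpN : p ≤ N) (hN2p : N < 2 * p)
    (rstar tstar : ℝ) (hrstar : 0 < rstar) (htstar : 0 < tstar)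
    (ω : ℝ → ℝ) (hω : ContDiff ℝ (⊤ : ℕ∞) ω)
    (hωpos : ∀ ρ : ℝ, |ρ| ≤ rstar → 0 < ω ρ)
    (Λ : ℕ → ℝ → ℝ) (hΛ : ∀ k, ContDiff ℝ (⊤ : ℕ∞) (Λ k))
    (μp : ℝ) (hμp : μp ≠ 0)
    (hΛsmall : ∀ k, k < p → (Λ k) =O[nhds (0:ℝ)] (fun ρ => ρ))
    (hΛp : (fun ρ => Λ p ρ - μp) =O[nhds (0:ℝ)] (fun ρ => ρ))
    (ΛN : ℝ → ℝ → ℝ)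
    (hΛN : ∀ ρ t : ℝ, ΛN ρ t = ∑ k ∈ Finset.Icc n N, t ^ (-(k : ℝ) / q) * Λ k ρ)
    -- the perturbations
    (ρstar C : ℝ) (hρstar : 0 < ρstar) (hρr : ρstar ≤ rstar) (hC : 0 < C)
    (Λt Ωt : ℝ → ℝ → ℝ → ℝ)
    (hΛtc : ContinuousOn (fun x : ℝ × ℝ × ℝ => Λt x.1 x.2.1 x.2.2)
      {x : ℝ × ℝ × ℝ | |x.1| ≤ ρstar ∧ tstar ≤ x.2.2})
    (hΩtc : ContinuousOn (fun x : ℝ × ℝ × ℝ => Ωt x.1 x.2.1 x.2.2)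
      {x : ℝ × ℝ × ℝ | |x.1| ≤ ρstar ∧ tstar ≤ x.2.2})
    (hΛtper : ∀ ρ φ t : ℝ, Λt ρ (φ + 2 * π) t = Λt ρ φ t)
    (hΩtper : ∀ ρ φ t : ℝ, Ωt ρ (φ + 2 * π) t = Ωt ρ φ t)
    (hΛtb : ∀ ρ φ t : ℝ, 0 < |ρ| → |ρ| ≤ ρstar → tstar ≤ t →
      |Λt ρ φ t| ≤ C * t ^ (-((N : ℝ) + 1) / q))
    (hΩtb : ∀ ρ φ t : ℝ, 0 < |ρ| → |ρ| ≤ ρstar → tstar ≤ t →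
      |Ωt ρ φ t| ≤ C * (t ^ (-1 / (q : ℝ)) + |ρ|⁻¹ * t ^ (-(p : ℝ) / q)))
    -- hypotheses of the theorem: n = q < p, Λ_n(0) = 0, λ_n = Λ_n'(0) < 0
    (hnq : n = q) (hnltp : n < p)
    (hΛn0 : Λ n 0 = 0)
    (lam : ℝ) (hlam : lam = deriv (Λ n) 0) (hlamneg : lam < 0) :
    ∀ ε : ℝ, 0 < ε → ε < ρstar →
      ∃ δ0 t0 : ℝ, 0 < δ0 ∧ tstar ≤ t0 ∧
        ∀ (T : ℝ) (ρ φ : ℝ → ℝ), t0 ≤ T →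
          (∀ t ∈ Set.Icc t0 T,
            HasDerivAt ρ (ΛN (ρ t) t + Λt (ρ t) (φ t) t) t ∧
            HasDerivAt φ (ω (ρ t) + Ωt (ρ t) (φ t) t) t) →
          |ρ t0| ≤ δ0 →
          ∀ t ∈ Set.Icc t0 T, |ρ t| < ε := by
  intro ε hε hερ
  have hq0 : ((q:ℝ)) ≠ 0 := Nat.cast_ne_zero.mpr hq.ne'
  -- little-o estimate for Λ n near 0
  have hderΛ : HasDerivAt (Λ n) lam 0 := by
    rw [hlam]; exact (((hΛ n).differentiable (by simp)) 0).hasDerivAt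
  have hlo : (fun y => Λ n y - y * lam) =o[nhds (0:ℝ)] fun y => y := by
    have := hasDerivAt_iff_isLittleO.mp hderΛ
    simpa [hΛn0, smul_eq_mul] using this
  have hev0 : ∀ᶠ y in nhds (0:ℝ), |Λ n y - y * lam| ≤ (-lam/2) * |y| := by
    have := hlo.def (show (0:ℝ) < -lam/2 by linarith)
    simpa [Real.norm_eq_abs] using this
  obtain ⟨b0, hb0, hball⟩ := Metric.eventually_nhds_iff.mp hev0
  -- the barrier level b
  set b : ℝ := min ε (b0/2) with hbdef
  have hb : 0 < b := lt_min hε (by linarith)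
  have hbε : b ≤ ε := min_le_left _ _
  have hbρ : b ≤ ρstar := hbε.trans hερ.le
  have hbb0 : b < b0 := lt_of_le_of_lt (min_le_right _ _) (by linarith)
  -- bound for the higher-order terms
  set g : ℝ → ℝ := fun x => ∑ k ∈ Finset.Ioc n N, |Λ k x| with hgdef
  have hgc : Continuous g := continuous_finset_sum _ fun k _ => (hΛ k).continuous.abs
  obtain ⟨M0, hM0⟩ := isCompact_Icc.exists_bound_of_continuousOn
    (hgc.continuousOn : ContinuousOn g (Set.Icc (-ρstar) ρstar))
  set M : ℝ := max M0 0 with hMdef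
  have hgM : ∀ x : ℝ, |x| ≤ ρstar → g x ≤ M := by
    intro x hx
    calc g x ≤ ‖g x‖ := le_abs_self _
      _ ≤ M0 := hM0 x ⟨(abs_le.mp hx).1, (abs_le.mp hx).2⟩
      _ ≤ M := le_max_left _ _
  have hMnn : 0 ≤ M := le_max_right _ _
  -- choice of t0
  have htend : Tendsto (fun t : ℝ => t ^ (-(1/(q:ℝ))) * (M + C)) atTop (nhds 0) := by
    simpa using (tendsto_rpow_neg_atTop (by positivity : (0:ℝ) < 1/q)).mul_const (M + C)
  have hev2 : ∀ᶠ t in atTop, t ^ (-(1/(q:ℝ))) * (M + C) < (-lam/2) * b :=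
    htend.eventually_lt_const (mul_pos (by linarith : (0:ℝ) < -lam/2) hb)
  obtain ⟨a, ha⟩ := eventually_atTop.mp hev2
  set t0 : ℝ := max a (max tstar 1) with ht0def
  have ht0ts : tstar ≤ t0 := le_max_of_le_right (le_max_left _ _)
  have ht01 : (1:ℝ) ≤ t0 := le_max_of_le_right (le_max_right _ _)
  refine ⟨b/2, t0, by positivity, ht0ts, ?_⟩
  intro T ρ φ hT hsol hinit
  -- key sign estimate at the barrier
  have key : ∀ x φv t : ℝ, |x| = b → t0 ≤ t → x * (ΛN x t + Λt x φv t) < 0 := by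
    intro x φv t hxb htt
    have ht1 : (1:ℝ) ≤ t := ht01.trans htt
    have htpos : (0:ℝ) < t := lt_of_lt_of_le one_pos ht1
    have htst : tstar ≤ t := ht0ts.trans htt
    have hxpos : 0 < |x| := hxb ▸ hb
    have hxρ : |x| ≤ ρstar := hxb ▸ hbρ
    have hnN : n ≤ N := hnp.trans hpN
    -- exponents
    have hexpn : t ^ (-(n:ℝ)/q) = t⁻¹ := by
      have h1 : -(n:ℝ)/q = -1 := by rw [hnq]; field_simp
      rw [h1, Real.rpow_neg_one]
    have hexpn1 : t ^ (-((n:ℝ)+1)/q) = t⁻¹ * t ^ (-(1/(q:ℝ))) := by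
      have h1 : -((n:ℝ)+1)/q = -1 + -(1/(q:ℝ)) := by rw [hnq]; field_simp; ring
      rw [h1, Real.rpow_add htpos, Real.rpow_neg_one]
    -- term A : x * Λ n x ≤ (lam/2) * b^2
    have hA : x * Λ n x ≤ (lam/2) * b^2 := by
      have h1 : |x * (Λ n x - x * lam)| ≤ |x| * ((-lam/2) * |x|) := by
        rw [abs_mul]
        exact mul_le_mul_of_nonneg_left
          (hball (by simpa [Real.dist_eq, hxb] using hbb0)) (abs_nonneg x)
      have h2 : x * (Λ n x - x * lam) ≤ (-lam/2) * x^2 := by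
        calc x * (Λ n x - x * lam) ≤ |x * (Λ n x - x * lam)| := le_abs_self _
          _ ≤ |x| * ((-lam/2) * |x|) := h1
          _ = (-lam/2) * x^2 := by rw [← sq_abs]; ring
      have h3 : x^2 = b^2 := by rw [← sq_abs, hxb]
      have h4 : x * Λ n x = x * (Λ n x - x * lam) + lam * x^2 := by ring
      rw [h3] at h2 h4
      linarith
    -- term B : higher order sum
    have hB : ∀ k ∈ Finset.Ioc n N,
        t ^ (-(k:ℝ)/q) * (x * Λ k x) ≤ t ^ (-((n:ℝ)+1)/q) * (b * |Λ k x|) := by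
      intro k hk
      have hk1 : n + 1 ≤ k := (Finset.mem_Ioc.mp hk).1
      have hkexp : t ^ (-(k:ℝ)/q) ≤ t ^ (-((n:ℝ)+1)/q) := by
        apply Real.rpow_le_rpow_of_exponent_le ht1
        have h5 : ((n:ℝ)+1) ≤ (k:ℝ) := by exact_mod_cast hk1
        have hqpos : (0:ℝ) < q := by exact_mod_cast hq
        exact (div_le_div_iff_of_pos_right hqpos).mpr (by linarith)
      have h2 : x * Λ k x ≤ b * |Λ k x| := by
        calc x * Λ k x ≤ |x * Λ k x| := le_abs_self _
          _ = |x| * |Λ k x| := abs_mul _ _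
          _ = b * |Λ k x| := by rw [hxb]
      calc t ^ (-(k:ℝ)/q) * (x * Λ k x) ≤ t ^ (-(k:ℝ)/q) * (b * |Λ k x|) :=
            mul_le_mul_of_nonneg_left h2 (Real.rpow_nonneg htpos.le _)
        _ ≤ t ^ (-((n:ℝ)+1)/q) * (b * |Λ k x|) :=
            mul_le_mul_of_nonneg_right hkexp (by positivity)
    -- term C : perturbation
    have hC' : x * Λt x φv t ≤ t ^ (-((n:ℝ)+1)/q) * (b * C) := by
      have h1 : |Λt x φv t| ≤ C * t ^ (-((N:ℝ)+1)/q) := hΛtb x φv t hxpos hxρ htst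
      have hNexp : t ^ (-((N:ℝ)+1)/q) ≤ t ^ (-((n:ℝ)+1)/q) := by
        apply Real.rpow_le_rpow_of_exponent_le ht1
        have h5 : ((n:ℝ)) ≤ (N:ℝ) := by exact_mod_cast hnN
        have hqpos : (0:ℝ) < q := by exact_mod_cast hq
        exact (div_le_div_iff_of_pos_right hqpos).mpr (by linarith)
      calc x * Λt x φv t ≤ |x| * |Λt x φv t| := by
            rw [← abs_mul]; exact le_abs_self _
        _ ≤ b * (C * t ^ (-((N:ℝ)+1)/q)) := by
            rw [hxb]; exact mul_le_mul_of_nonneg_left h1 hb.le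
        _ ≤ b * (C * t ^ (-((n:ℝ)+1)/q)) := by
            exact mul_le_mul_of_nonneg_left
              (mul_le_mul_of_nonneg_left hNexp hC.le) hb.le
        _ = t ^ (-((n:ℝ)+1)/q) * (b * C) := by ring
    -- assemble
    have hsum : x * ΛN x t = t ^ (-(n:ℝ)/q) * (x * Λ n x)
        + ∑ k ∈ Finset.Ioc n N, t ^ (-(k:ℝ)/q) * (x * Λ k x) := by
      rw [hΛN, Finset.Icc_eq_cons_Ioc hnN, Finset.sum_cons, mul_add, Finset.mul_sum]
      congr 1
      · ring
      · exact Finset.sum_congr rfl fun k _ => by ring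
    have hBsum : ∑ k ∈ Finset.Ioc n N, t ^ (-(k:ℝ)/q) * (x * Λ k x)
        ≤ t ^ (-((n:ℝ)+1)/q) * (b * M) := by
      calc ∑ k ∈ Finset.Ioc n N, t ^ (-(k:ℝ)/q) * (x * Λ k x)
          ≤ ∑ k ∈ Finset.Ioc n N, t ^ (-((n:ℝ)+1)/q) * (b * |Λ k x|) :=
            Finset.sum_le_sum hB
        _ = t ^ (-((n:ℝ)+1)/q) * (b * g x) := by
            simp only [hgdef, Finset.mul_sum]
        _ ≤ t ^ (-((n:ℝ)+1)/q) * (b * M) := by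
            apply mul_le_mul_of_nonneg_left _ (Real.rpow_nonneg htpos.le _)
            exact mul_le_mul_of_nonneg_left (hgM x hxρ) hb.le
    have hfinal : x * (ΛN x t + Λt x φv t)
        ≤ t⁻¹ * ((lam/2) * b^2 + t ^ (-(1/(q:ℝ))) * (M + C) * b) := by
      have h1 : x * (ΛN x t + Λt x φv t)
          = x * ΛN x t + x * Λt x φv t := by ring
      rw [h1, hsum, hexpn]
      have hAA : t⁻¹ * (x * Λ n x) ≤ t⁻¹ * ((lam/2) * b^2) :=
        mul_le_mul_of_nonneg_left hA (by positivity)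
      have hrw : t⁻¹ * ((lam/2) * b^2 + t ^ (-(1/(q:ℝ))) * (M + C) * b)
          = t⁻¹ * ((lam/2) * b^2) + t ^ (-((n:ℝ)+1)/q) * (b * M)
            + t ^ (-((n:ℝ)+1)/q) * (b * C) := by
        rw [hexpn1]; ring
      rw [hrw]
      linarith [hBsum, hC']
    have hlt0 : t ^ (-(1/(q:ℝ))) * (M + C) < (-lam/2) * b := ha t (le_trans (le_max_left _ _) htt)
    have hneg : (lam/2) * b^2 + t ^ (-(1/(q:ℝ))) * (M + C) * b < 0 := by
      have h4 := mul_lt_mul_of_pos_right hlt0 hb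
      nlinarith [h4]
    calc x * (ΛN x t + Λt x φv t)
        ≤ t⁻¹ * ((lam/2) * b^2 + t ^ (-(1/(q:ℝ))) * (M + C) * b) := hfinal
      _ < 0 := mul_neg_of_pos_of_neg (by positivity) hneg
  -- apply the barrier lemma to f = ρ²
  have hbar : ∀ t ∈ Set.Icc t0 T, (ρ t)^2 < b^2 := by
    apply barrier_aux (f' := fun t => 2 * ρ t ^ 1 * (ΛN (ρ t) t + Λt (ρ t) (φ t) t))
    · intro t ht
      exact ((hsol t ht).1).pow 2
    · have : (ρ t0)^2 ≤ (b/2)^2 := by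
        rw [← sq_abs]
        exact pow_le_pow_left₀ (abs_nonneg _) hinit 2
      nlinarith
    · intro t ht hft
      have hxb : |ρ t| = b := by
        rwa [sq_eq_sq_iff_abs_eq_abs, abs_of_nonneg hb.le] at hft
      have hk := key (ρ t) (φ t) t hxb ht.1
      have : 2 * ρ t ^ 1 * (ΛN (ρ t) t + Λt (ρ t) (φ t) t)
          = 2 * (ρ t * (ΛN (ρ t) t + Λt (ρ t) (φ t) t)) := by ring
      rw [this]; linarith
  intro t ht
  have := hbar t ht
  have h2 : |ρ t| < b := by nlinarith [abs_nonneg (ρ t), sq_abs (ρ t)]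
  exact h2.trans_le hbε
end

section
/- Assume n = p ≤ q and that there exists ρ0 ∈ ℝ with 0 < |ρ0| < r*, Λ_p(ρ0) = 0 and Λ_p′(ρ0) < 0, and let ϱ2 : [t0, ∞) → ℝ be a solution of dϱ/dt = Λ_N(ϱ, t) with ϱ2(t) = ρ0 + O(t^{−1/q} log t) as t → ∞. Then ϱ2 is exponentially stable if p < q and polynomially stable if p = q; more precisely, for every ϰ ∈ (0, |Λ_p′(ρ0)|) there exist t1 ≥ t0, δ > 0 and c > 0 such that every solution ϱ of dϱ/dt = Λ_N(ϱ, t) with |ϱ(t1) − ϱ2(t1)| ≤ δ t1^{−ϰ} satisfies for all t ≥ t1: if p < q then t^{ϰ}|ϱ(t) − ϱ2(t)| ≤ t1^{ϰ}|ϱ(t1) − ϱ2(t1)| exp(−c (t^{1−p/q} − t1^{1−p/q})), and if p = q then t^{ϰ}|ϱ(t) − ϱ2(t)| ≤ t1^{ϰ}|ϱ(t1) − ϱ2(t1)| (t/t1)^{−c}. -/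
open Filter Real Set Asymptotics
open Topology

/-- Gronwall-type fencing: if `w' ≤ 0` wherever `w ≤ w t1 + K` on `[t1,t)`, then `w t ≤ w t1`. -/
lemma aux_fence {w w' : ℝ → ℝ} {t1 t : ℝ} (hle : t1 ≤ t)
    (hw : ∀ x ∈ Icc t1 t, HasDerivAt w (w' x) x)
    {K : ℝ} (hK : 0 < K)
    (hder : ∀ x ∈ Ico t1 t, w x ≤ w t1 + K → w' x ≤ 0) :
    w t ≤ w t1 := by
  rcases eq_or_lt_of_le hle with rfl | hlt
  · exact le_refl _
  refine le_of_forall_pos_le_add fun ε hε => ?_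
  set ε' : ℝ := min (ε / (t - t1)) (K / (t - t1)) with hε'def
  have htt : 0 < t - t1 := sub_pos.2 hlt
  have hε'pos : 0 < ε' := lt_min (div_pos hε htt) (div_pos hK htt)
  have key : ∀ ⦃x⦄, x ∈ Icc t1 t → w x ≤ (fun x => w t1 + ε' * (x - t1)) x := by
    apply image_le_of_deriv_right_lt_deriv_boundary
      (f' := w') (B := fun x => w t1 + ε' * (x - t1)) (B' := fun _ => ε')
    · exact fun x hx => (hw x hx).continuousAt.continuousWithinAt
    · exact fun x hx => (hw x (Ico_subset_Icc_self hx)).hasDerivWithinAt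
    · simp
    · intro x
      simpa using ((hasDerivAt_id x).sub_const t1 |>.const_mul ε').const_add (w t1)
    · intro x hx hfx
      have h1 : w x ≤ w t1 + K := by
        rw [hfx]
        have h2 : ε' * (x - t1) ≤ (K / (t - t1)) * (t - t1) :=
          mul_le_mul (min_le_right _ _) (by linarith [hx.2.le]) (by linarith [hx.1])
            (le_of_lt (div_pos hK htt))
        rw [div_mul_cancel₀ _ htt.ne'] at h2
        linarith
      exact lt_of_le_of_lt (hder x hx h1) hε'pos
  have hkey := key (right_mem_Icc.2 hle)
  have h2 : ε' * (t - t1) ≤ ε := by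
    have h3 : ε' * (t - t1) ≤ (ε / (t - t1)) * (t - t1) :=
      mul_le_mul_of_nonneg_right (min_le_left _ _) htt.le
    rwa [div_mul_cancel₀ _ htt.ne'] at h3
  simp only at hkey
  linarith

/-- Mean value inequality in product form. -/
lemma aux_mvt {F F' : ℝ → ℝ} (hF : ∀ ρ, HasDerivAt F (F' ρ) ρ)
    {lo hi B : ℝ} (hB : ∀ ρ ∈ Icc lo hi, F' ρ ≤ B)
    {y z : ℝ} (hy : y ∈ Icc lo hi) (hz : z ∈ Icc lo hi) :
    (F y - F z) * (y - z) ≤ B * (y - z) ^ 2 := by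
  have key : ∀ a b : ℝ, a ∈ Icc lo hi → b ∈ Icc lo hi → a < b →
      (F b - F a) * (b - a) ≤ B * (b - a) ^ 2 := by
    intro a b ha hb hab
    obtain ⟨ξ, hξ, hslope⟩ := exists_hasDerivAt_eq_slope F F' hab
      (fun x _ => (hF x).continuousAt.continuousWithinAt)
      (fun x _ => hF x)
    have hξI : ξ ∈ Icc lo hi := ⟨le_trans ha.1 hξ.1.le, le_trans hξ.2.le hb.2⟩
    have hba' : b - a ≠ 0 := (sub_pos.2 hab).ne'
    have heq : F b - F a = F' ξ * (b - a) := by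
      rw [hslope]; field_simp
    rw [heq]
    have hba : (0:ℝ) < b - a := sub_pos.2 hab
    calc F' ξ * (b - a) * (b - a) ≤ B * (b - a) * (b - a) := by
          apply mul_le_mul_of_nonneg_right _ hba.le
          exact mul_le_mul_of_nonneg_right (hB ξ hξI) hba.le
      _ = B * (b - a) ^ 2 := by ring
  rcases lt_trichotomy y z with h | rfl | h
  · have hkey := key y z hy hz h
    calc (F y - F z) * (y - z) = (F z - F y) * (z - y) := by ring
      _ ≤ B * (z - y)^2 := hkey
      _ = B * (y - z)^2 := by ring
  · simp
  · exact key z y hz hy h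


/-- Core decay estimate via a Gronwall-type argument. -/
lemma aux_core (ϰ cb b δ t1 : ℝ) (hϰ0 : 0 < ϰ) (hcb : 0 < cb) (hδ0 : 0 < δ)
    (ht11 : 1 ≤ t1) (hcoef : ϰ + b + cb ≤ 0)
    (ΛN : ℝ → ℝ → ℝ) (ϱ ϱ2 : ℝ → ℝ)
    (r : ℝ → ℝ) (hr : ∀ x, t1 ≤ x → 0 < r x)
    (G : ℝ → ℝ → ℝ)
    (hFd : ∀ x ρ, HasDerivAt (fun s => ΛN s x) (G x ρ) ρ)
    (lo hi : ℝ)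
    (hGb : ∀ x, t1 ≤ x → ∀ ρ ∈ Icc lo hi, G x ρ ≤ b * r x)
    (hmem2 : ∀ x, t1 ≤ x → ϱ2 x ∈ Icc lo hi)
    (hmem : ∀ x, t1 ≤ x → |ϱ x - ϱ2 x| ≤ 2*δ → ϱ x ∈ Icc lo hi)
    (H : ℝ → ℝ) (hH : ∀ x, t1 ≤ x → HasDerivAt H (r x) x)
    (hHt1 : H t1 = 0) (hH0 : ∀ x, t1 ≤ x → 0 ≤ H x)
    (hkey1 : ∀ x, t1 ≤ x → x ^ (2*ϰ-1) ≤ x ^ (2*ϰ) * r x)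
    (hsol : ∀ x, t1 ≤ x → HasDerivAt ϱ (ΛN (ϱ x) x) x)
    (hsol2 : ∀ x, t1 ≤ x → HasDerivAt ϱ2 (ΛN (ϱ2 x) x) x)
    (hinit : |ϱ t1 - ϱ2 t1| ≤ δ * t1 ^ (-ϰ))
    (t : ℝ) (ht : t1 ≤ t) :
    t ^ ϰ * |ϱ t - ϱ2 t| ≤ t1 ^ ϰ * |ϱ t1 - ϱ2 t1| * Real.exp (-(cb * H t)) := by
  have ht10 : (0:ℝ) < t1 := lt_of_lt_of_le one_pos ht11
  have ht_0 : (0:ℝ) < t := lt_of_lt_of_le ht10 ht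
  set v : ℝ → ℝ := fun y => ϱ y - ϱ2 y with hv_def
  set D : ℝ → ℝ := fun x => ΛN (ϱ x) x - ΛN (ϱ2 x) x with hD_def
  set w : ℝ → ℝ := fun y => y ^ (2*ϰ) * (v y)^2 * Real.exp (2*cb*H y) with hw_def
  set W' : ℝ → ℝ := fun x =>
    (2*ϰ * x^(2*ϰ-1) * (v x)^2 + x^(2*ϰ) * (2 * v x * D x)) * Real.exp (2*cb*H x) +
    (x^(2*ϰ) * (v x)^2) * (Real.exp (2*cb*H x) * (2*cb * r x)) with hW'_def
  -- derivative of w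
  have hw : ∀ x ∈ Icc t1 t, HasDerivAt w (W' x) x := by
    intro x hx
    have hx0 : 0 < x := lt_of_lt_of_le ht10 hx.1
    have h1 : HasDerivAt (fun y : ℝ => y ^ (2*ϰ)) (2*ϰ * x^(2*ϰ-1)) x :=
      Real.hasDerivAt_rpow_const (Or.inl hx0.ne')
    have hvd : HasDerivAt v (D x) x := (hsol x hx.1).sub (hsol2 x hx.1)
    have h2 : HasDerivAt (fun y => (v y)^2) (2 * v x * D x) x := by
      have h := hvd.pow 2
      norm_num at h
      exact h
    have h3 : HasDerivAt (fun y => Real.exp (2*cb*H y))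
        (Real.exp (2*cb*H x) * (2*cb * r x)) x :=
      ((hH x hx.1).const_mul (2*cb)).exp
    exact (h1.mul h2).mul h3
  -- initial bound
  have hwt1 : w t1 ≤ δ^2 := by
    have h5 : (v t1)^2 ≤ (δ * t1^(-ϰ))^2 := by
      rw [← sq_abs]
      exact pow_le_pow_left₀ (abs_nonneg _) hinit 2
    have hsq : t1 ^ (2*ϰ) * (t1 ^ (-ϰ))^2 = 1 := by
      rw [sq, ← Real.rpow_add ht10, ← Real.rpow_add ht10,
        show 2*ϰ + (-ϰ + -ϰ) = 0 by ring, Real.rpow_zero]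
    have ht1p : (0:ℝ) < t1 ^ (2*ϰ) := Real.rpow_pos_of_pos ht10 _
    calc w t1 = t1 ^ (2*ϰ) * (v t1)^2 * Real.exp (2*cb*H t1) := rfl
      _ = t1 ^ (2*ϰ) * (v t1)^2 := by rw [hHt1]; simp
      _ ≤ t1 ^ (2*ϰ) * (δ * t1^(-ϰ))^2 := mul_le_mul_of_nonneg_left h5 ht1p.le
      _ = δ^2 * (t1 ^ (2*ϰ) * (t1 ^ (-ϰ))^2) := by ring
      _ = δ^2 := by rw [hsq, mul_one]
  -- the region bound on the derivative
  have hregion : ∀ x ∈ Ico t1 t, w x ≤ w t1 + δ^2 → W' x ≤ 0 := by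
    intro x hx hwx
    have hxt1 : t1 ≤ x := hx.1
    have hx0 : 0 < x := lt_of_lt_of_le ht10 hxt1
    have hx1 : (1:ℝ) ≤ x := le_trans ht11 hxt1
    have hEpos : (0:ℝ) < Real.exp (2*cb*H x) := Real.exp_pos _
    have hE1x : (1:ℝ) ≤ Real.exp (2*cb*H x) := by
      rw [← Real.exp_zero]
      refine Real.exp_le_exp.2 ?_
      have h0 := hH0 x hxt1
      positivity
    have hx2ϰ : (1:ℝ) ≤ x ^ (2*ϰ) := by
      calc (1:ℝ) = x ^ (0:ℝ) := (Real.rpow_zero x).symm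
        _ ≤ x ^ (2*ϰ) := Real.rpow_le_rpow_of_exponent_le hx1 (by positivity)
    have hprod : (1:ℝ) ≤ x ^ (2*ϰ) * Real.exp (2*cb*H x) := by
      calc (1:ℝ) = 1 * 1 := by ring
        _ ≤ x ^ (2*ϰ) * Real.exp (2*cb*H x) :=
          mul_le_mul hx2ϰ hE1x zero_le_one (le_trans zero_le_one hx2ϰ)
    have hv2 : (v x)^2 ≤ 2*δ^2 := by
      have h6 : (v x)^2 ≤ (v x)^2 * (x ^ (2*ϰ) * Real.exp (2*cb*H x)) :=
        le_mul_of_one_le_right (sq_nonneg _) hprod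
      have h7 : (v x)^2 * (x ^ (2*ϰ) * Real.exp (2*cb*H x)) = w x := by
        rw [hw_def]; ring
      rw [h7] at h6
      linarith
    have hvabs : |v x| ≤ 2*δ := by
      have h8 : (v x)^2 ≤ (2*δ)^2 := by nlinarith
      have h9 := Real.sqrt_le_sqrt h8
      rwa [Real.sqrt_sq_eq_abs, Real.sqrt_sq (by positivity)] at h9
    have hmemρ : ϱ x ∈ Icc lo hi := hmem x hxt1 hvabs
    have hmemρ2 : ϱ2 x ∈ Icc lo hi := hmem2 x hxt1
    have hmvt : D x * v x ≤ b * r x * (v x)^2 := by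
      have h := aux_mvt (F := fun s => ΛN s x) (F' := fun ρ => G x ρ)
        (hFd x) (fun ρ hρ => hGb x hxt1 ρ hρ) hmemρ hmemρ2
      exact h
    have hR : (0:ℝ) < r x := hr x hxt1
    have hP : (0:ℝ) < x ^ (2*ϰ) := Real.rpow_pos_of_pos hx0 _
    have b1 : ϰ * x^(2*ϰ-1) * (v x)^2 ≤ ϰ * (x ^ (2*ϰ) * r x) * (v x)^2 :=
      mul_le_mul_of_nonneg_right
        (mul_le_mul_of_nonneg_left (hkey1 x hxt1) hϰ0.le) (sq_nonneg _)
    have b2 : x ^ (2*ϰ) * (v x * D x) ≤ x ^ (2*ϰ) * (b * r x * (v x)^2) := by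
      apply mul_le_mul_of_nonneg_left _ hP.le
      calc v x * D x = D x * v x := by ring
        _ ≤ b * r x * (v x)^2 := hmvt
    have hinner : ϰ * x^(2*ϰ-1) * (v x)^2 + x ^ (2*ϰ) * (v x * D x) +
        cb * (x ^ (2*ϰ) * r x * (v x)^2) ≤ 0 := by
      have hPRV : (0:ℝ) ≤ x ^ (2*ϰ) * r x * (v x)^2 := by positivity
      have hfin : (ϰ + b + cb) * (x ^ (2*ϰ) * r x * (v x)^2) ≤ 0 :=
        mul_nonpos_of_nonpos_of_nonneg hcoef hPRV
      nlinarith [b1, b2]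
    have hfact : W' x = 2 * Real.exp (2*cb*H x) *
        (ϰ * x^(2*ϰ-1) * (v x)^2 + x ^ (2*ϰ) * (v x * D x) +
          cb * (x ^ (2*ϰ) * r x * (v x)^2)) := by
      rw [hW'_def]; ring
    rw [hfact]
    exact mul_nonpos_of_nonneg_of_nonpos (by positivity) hinner
  -- fencing
  have hfence : w t ≤ w t1 := aux_fence ht hw (show (0:ℝ) < δ^2 by positivity) hregion
  -- convert back
  have e1 : (t^ϰ)^2 = t^(2*ϰ) := by
    rw [sq, ← Real.rpow_add ht_0]; congr 1; ring
  have e1' : (t1^ϰ)^2 = t1^(2*ϰ) := by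
    rw [sq, ← Real.rpow_add ht10]; congr 1; ring
  have e2 : (Real.exp (cb*H t))^2 = Real.exp (2*cb*H t) := by
    rw [sq, ← Real.exp_add]; congr 1; ring
  have hA2 : (t ^ ϰ * |v t| * Real.exp (cb * H t))^2 = w t := by
    rw [mul_pow, mul_pow, e1, e2, sq_abs]
  have hB2 : (t1 ^ ϰ * |v t1|)^2 = w t1 := by
    rw [mul_pow, e1', sq_abs, hw_def]
    simp [hHt1]
  have hAB : t ^ ϰ * |v t| * Real.exp (cb * H t) ≤ t1 ^ ϰ * |v t1| := by
    have hA0 : (0:ℝ) ≤ t ^ ϰ * |v t| * Real.exp (cb * H t) := by positivity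
    have hB0 : (0:ℝ) ≤ t1 ^ ϰ * |v t1| := by positivity
    have hsq : (t ^ ϰ * |v t| * Real.exp (cb * H t))^2 ≤ (t1 ^ ϰ * |v t1|)^2 := by
      rw [hA2, hB2]; exact hfence
    exact (pow_le_pow_iff_left₀ hA0 hB0 two_ne_zero).1 hsq
  have hfin : t ^ ϰ * |v t| =
      (t ^ ϰ * |v t| * Real.exp (cb * H t)) * Real.exp (-(cb * H t)) := by
    rw [Real.exp_neg]
    field_simp
  rw [hfin]
  exact mul_le_mul_of_nonneg_right hAB (Real.exp_pos _).le

/-- Case `(n,p) ∈ Q₂`: the solution `ϱ₂(t) → ρ₀` of the truncated equation is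
exponentially stable if `p < q` and polynomially stable if `p = q`. -/
theorem stmt_9 (q n p N : ℕ) (hq : 0 < q) (hn : 0 < n)
    (hnp : n ≤ p) (hpN : p ≤ N) (hN2p : N < 2 * p)
    (rstar tstar : ℝ) (hrstar : 0 < rstar) (htstar : 0 < tstar)
    (ω : ℝ → ℝ) (hω : ContDiff ℝ (⊤ : ℕ∞) ω)
    (hωpos : ∀ ρ : ℝ, |ρ| ≤ rstar → 0 < ω ρ)
    (Λ : ℕ → ℝ → ℝ) (hΛ : ∀ k, ContDiff ℝ (⊤ : ℕ∞) (Λ k))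
    (μp : ℝ) (hμp : μp ≠ 0)
    (hΛsmall : ∀ k, k < p → (Λ k) =O[nhds (0:ℝ)] (fun ρ => ρ))
    (hΛp : (fun ρ => Λ p ρ - μp) =O[nhds (0:ℝ)] (fun ρ => ρ))
    (ΛN : ℝ → ℝ → ℝ)
    (hΛN : ∀ ρ t : ℝ, ΛN ρ t = ∑ k ∈ Finset.Icc n N, t ^ (-(k : ℝ) / q) * Λ k ρ)
    -- hypotheses of the lemma
    (hneqp : n = p) (hpq : p ≤ q)
    (ρ0 : ℝ) (hρ00 : 0 < |ρ0|) (hρ0r : |ρ0| < rstar)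
    (hΛpρ0 : Λ p ρ0 = 0) (hΛp' : deriv (Λ p) ρ0 < 0)
    -- the solution ϱ₂ with ϱ₂(t) = ρ₀ + O(t^{-1/q} log t)
    (t0 : ℝ) (ht0 : tstar ≤ t0)
    (ϱ2 : ℝ → ℝ)
    (hϱ2sol : ∀ t : ℝ, t0 ≤ t → HasDerivAt ϱ2 (ΛN (ϱ2 t) t) t)
    (hϱ2asym : (fun t : ℝ => ϱ2 t - ρ0)
      =O[atTop] (fun t : ℝ => t ^ (-1 / (q : ℝ)) * Real.log t)) :
    ∀ ϰ : ℝ, 0 < ϰ → ϰ < |deriv (Λ p) ρ0| →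
      ∃ t1 δ c : ℝ, t0 ≤ t1 ∧ 0 < δ ∧ 0 < c ∧
        ∀ ϱ : ℝ → ℝ,
          (∀ t : ℝ, t1 ≤ t → HasDerivAt ϱ (ΛN (ϱ t) t) t) →
          |ϱ t1 - ϱ2 t1| ≤ δ * t1 ^ (-ϰ) →
          ∀ t : ℝ, t1 ≤ t →
            (p < q →
              t ^ ϰ * |ϱ t - ϱ2 t| ≤
                t1 ^ ϰ * |ϱ t1 - ϱ2 t1| *
                  Real.exp (-c * (t ^ (1 - (p : ℝ) / q) - t1 ^ (1 - (p : ℝ) / q)))) ∧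
            (p = q →
              t ^ ϰ * |ϱ t - ϱ2 t| ≤
                t1 ^ ϰ * |ϱ t1 - ϱ2 t1| * (t / t1) ^ (-c)) := by
  subst hneqp
  intro ϰ hϰ0 hϰ
  set l0 := deriv (Λ n) ρ0 with hl0_def
  have hl0neg : l0 < 0 := hΛp'
  rw [abs_of_neg hl0neg] at hϰ
  set a : ℝ := (-l0 - ϰ)/4 with ha_def
  set cb : ℝ := (-l0 - ϰ)/2 with hcb_def
  have ha : 0 < a := by rw [ha_def]; linarith
  have hcb : 0 < cb := by rw [hcb_def]; linarith
  have hcoef : ϰ + (l0 + a) + cb ≤ 0 := by rw [ha_def, hcb_def]; linarith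
  have hq0 : (0:ℝ) < (q:ℝ) := by exact_mod_cast hq
  -- choice of η
  have hderc : Continuous (deriv (Λ n)) := (hΛ n).continuous_deriv (by simp)
  obtain ⟨η0, hη0pos, hη0⟩ : ∃ η0 > 0, ∀ ρ : ℝ, |ρ - ρ0| < η0 → |deriv (Λ n) ρ - l0| < a/2 := by
    obtain ⟨d, hd, h⟩ := Metric.continuousAt_iff.mp hderc.continuousAt (a/2) (by positivity)
    exact ⟨d, hd, fun ρ hρ => by
      simpa [Real.dist_eq] using h (show dist ρ ρ0 < d by simpa [Real.dist_eq] using hρ)⟩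
  set η : ℝ := min (η0/2) 1 with hη_def
  have hηpos : 0 < η := lt_min (by linarith) one_pos
  have hη1 : η ≤ 1 := min_le_right _ _
  have hηd : ∀ ρ ∈ Icc (ρ0 - η) (ρ0 + η), deriv (Λ n) ρ ≤ l0 + a/2 := by
    intro ρ hρ
    have h1 : |ρ - ρ0| ≤ η := abs_le.2 ⟨by linarith [hρ.1], by linarith [hρ.2]⟩
    have h2 : |ρ - ρ0| < η0 := lt_of_le_of_lt (h1.trans (min_le_left _ _)) (by linarith)
    have := abs_lt.1 (hη0 ρ h2)
    linarith [this.2]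
  -- bound on the tail derivatives
  set g : ℝ → ℝ := fun ρ => ∑ k ∈ Finset.Ioc n N, |deriv (Λ k) ρ| with hg_def
  have hgc : Continuous g := by
    apply continuous_finset_sum
    exact fun k _ => ((hΛ k).continuous_deriv (by simp)).abs
  obtain ⟨M, hM⟩ := (isCompact_Icc (a := ρ0 - 1) (b := ρ0 + 1)).exists_bound_of_continuousOn
    hgc.continuousOn
  have hgM : ∀ ρ ∈ Icc (ρ0 - 1) (ρ0 + 1), g ρ ≤ M := fun ρ hρ =>
    le_trans (le_abs_self _) (hM ρ hρ)
  -- eventual facts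
  have hE1 : ∀ᶠ x : ℝ in atTop, |ϱ2 x - ρ0| ≤ η/2 := by
    have hlo : Tendsto (fun x : ℝ => x ^ (-1 / (q:ℝ)) * Real.log x) atTop (𝓝 0) := by
      have h := (isLittleO_log_rpow_atTop (show (0:ℝ) < 1/(q:ℝ) by positivity)).tendsto_div_nhds_zero
      apply h.congr'
      filter_upwards [eventually_gt_atTop (0:ℝ)] with x hx
      rw [neg_div, Real.rpow_neg hx.le]
      ring
    have htend : Tendsto (fun t : ℝ => ϱ2 t - ρ0) atTop (𝓝 0) := hϱ2asym.trans_tendsto hlo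
    have := Metric.tendsto_nhds.mp htend (η/2) (by positivity)
    filter_upwards [this] with x hx
    rw [Real.dist_eq, sub_zero] at hx
    exact hx.le
  have hE2 : ∀ᶠ x : ℝ in atTop, x ^ (-(1:ℝ)/(q:ℝ)) * M ≤ a/2 := by
    have htend : Tendsto (fun x : ℝ => x ^ (-(1:ℝ)/(q:ℝ)) * M) atTop (𝓝 0) := by
      have h := (tendsto_rpow_neg_atTop (show (0:ℝ) < 1/(q:ℝ) by positivity)).mul_const M
      rw [zero_mul] at h
      refine h.congr fun x => ?_
      rw [neg_div]
    have := Metric.tendsto_nhds.mp htend (a/2) (by positivity)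
    filter_upwards [this] with x hx
    rw [Real.dist_eq, sub_zero] at hx
    exact (le_abs_self _).trans hx.le
  obtain ⟨T, hT⟩ := eventually_atTop.1 (hE1.and hE2)
  set t1 : ℝ := max (max t0 1) T with ht1_def
  have ht0t1 : t0 ≤ t1 := le_max_of_le_left (le_max_left _ _)
  have ht11 : 1 ≤ t1 := le_max_of_le_left (le_max_right _ _)
  have ht10 : 0 < t1 := lt_of_lt_of_le one_pos ht11
  have ht1T : T ≤ t1 := le_max_right _ _
  set δ : ℝ := η/4 with hδ_def
  have hδ0 : 0 < δ := by rw [hδ_def]; positivity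
  -- derivative of ρ ↦ ΛN ρ x and its bound
  have hFd : ∀ x : ℝ, ∀ ρ : ℝ, HasDerivAt (fun r => ΛN r x)
      (∑ k ∈ Finset.Icc n N, x ^ (-(k:ℝ)/(q:ℝ)) * deriv (Λ k) ρ) ρ := by
    intro x ρ
    have : (fun r => ΛN r x) = fun r => ∑ k ∈ Finset.Icc n N, x ^ (-(k:ℝ)/(q:ℝ)) * Λ k r := by
      funext r; exact hΛN r x
    rw [this]
    apply HasDerivAt.fun_sum
    intro k _
    exact (((hΛ k).differentiable (by simp)).differentiableAt.hasDerivAt).const_mul _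
  have hMnn : 0 ≤ M := le_trans (abs_nonneg _) (hM ρ0 (by constructor <;> linarith))
  have hGb : ∀ x : ℝ, t1 ≤ x → ∀ ρ ∈ Icc (ρ0 - η) (ρ0 + η),
      (∑ k ∈ Finset.Icc n N, x ^ (-(k:ℝ)/(q:ℝ)) * deriv (Λ k) ρ) ≤
        (l0 + a) * x ^ (-(n:ℝ)/(q:ℝ)) := by
    intro x hx ρ hρ
    have hx0 : 0 < x := lt_of_lt_of_le ht10 hx
    have hx1 : (1:ℝ) ≤ x := le_trans ht11 hx
    have hR : 0 < x ^ (-(n:ℝ)/(q:ℝ)) := Real.rpow_pos_of_pos hx0 _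
    have hsplit : Finset.Icc n N = insert n (Finset.Ioc n N) := (Finset.Ioc_insert_left hpN).symm
    rw [hsplit, Finset.sum_insert Finset.left_notMem_Ioc]
    have hterm1 : x ^ (-(n:ℝ)/(q:ℝ)) * deriv (Λ n) ρ ≤ x ^ (-(n:ℝ)/(q:ℝ)) * (l0 + a/2) :=
      mul_le_mul_of_nonneg_left (hηd ρ hρ) hR.le
    have htail : (∑ k ∈ Finset.Ioc n N, x ^ (-(k:ℝ)/(q:ℝ)) * deriv (Λ k) ρ) ≤
        x ^ (-(n:ℝ)/(q:ℝ)) * (a/2) := by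
      have hstep : (∑ k ∈ Finset.Ioc n N, x ^ (-(k:ℝ)/(q:ℝ)) * deriv (Λ k) ρ) ≤
          ∑ k ∈ Finset.Ioc n N, x ^ (-((n:ℝ)+1)/(q:ℝ)) * |deriv (Λ k) ρ| := by
        apply Finset.sum_le_sum
        intro k hk
        have hk1 : (n:ℝ) + 1 ≤ (k:ℝ) := by
          have := (Finset.mem_Ioc.mp hk).1
          exact_mod_cast this
        have hkexp : x ^ (-(k:ℝ)/(q:ℝ)) ≤ x ^ (-((n:ℝ)+1)/(q:ℝ)) := by
          apply Real.rpow_le_rpow_of_exponent_le hx1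
          rw [neg_div, neg_div]
          have : ((n:ℝ)+1)/(q:ℝ) ≤ (k:ℝ)/(q:ℝ) := by gcongr
          linarith
        calc x ^ (-(k:ℝ)/(q:ℝ)) * deriv (Λ k) ρ
            ≤ x ^ (-(k:ℝ)/(q:ℝ)) * |deriv (Λ k) ρ| :=
              mul_le_mul_of_nonneg_left (le_abs_self _) (Real.rpow_pos_of_pos hx0 _).le
          _ ≤ x ^ (-((n:ℝ)+1)/(q:ℝ)) * |deriv (Λ k) ρ| :=
              mul_le_mul_of_nonneg_right hkexp (abs_nonneg _)
      rw [← Finset.mul_sum] at hstep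
      have hgρ : g ρ ≤ M := by
        apply hgM
        constructor
        · have := hρ.1; linarith [hη1]
        · have := hρ.2; linarith [hη1]
      have hxsplit : x ^ (-((n:ℝ)+1)/(q:ℝ)) = x ^ (-(n:ℝ)/(q:ℝ)) * x ^ (-(1:ℝ)/(q:ℝ)) := by
        rw [← Real.rpow_add hx0]
        congr 1
        ring
      have hTx := (hT x (le_trans ht1T hx)).2
      calc (∑ k ∈ Finset.Ioc n N, x ^ (-(k:ℝ)/(q:ℝ)) * deriv (Λ k) ρ)
          ≤ x ^ (-((n:ℝ)+1)/(q:ℝ)) * g ρ := hstep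
        _ = x ^ (-(n:ℝ)/(q:ℝ)) * (x ^ (-(1:ℝ)/(q:ℝ)) * g ρ) := by rw [hxsplit]; ring
        _ ≤ x ^ (-(n:ℝ)/(q:ℝ)) * (a/2) := by
            apply mul_le_mul_of_nonneg_left _ hR.le
            calc x ^ (-(1:ℝ)/(q:ℝ)) * g ρ ≤ x ^ (-(1:ℝ)/(q:ℝ)) * M :=
                  mul_le_mul_of_nonneg_left hgρ (Real.rpow_pos_of_pos hx0 _).le
              _ ≤ a/2 := hTx
    linarith
  -- the core estimate, for an abstract antiderivative H of x ^ (-p/q)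
  have core : ∀ H : ℝ → ℝ, (∀ x : ℝ, t1 ≤ x → HasDerivAt H (x ^ (-(n:ℝ)/(q:ℝ))) x) →
      H t1 = 0 → (∀ x : ℝ, t1 ≤ x → 0 ≤ H x) →
      ∀ ϱ : ℝ → ℝ, (∀ t : ℝ, t1 ≤ t → HasDerivAt ϱ (ΛN (ϱ t) t) t) →
      |ϱ t1 - ϱ2 t1| ≤ δ * t1 ^ (-ϰ) →
      ∀ t : ℝ, t1 ≤ t →
        t ^ ϰ * |ϱ t - ϱ2 t| ≤ t1 ^ ϰ * |ϱ t1 - ϱ2 t1| * Real.exp (-(cb * H t)) := by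
    intro H hH hHt1 hH0 ϱ hsol hinit t ht
    have hkey1 : ∀ x : ℝ, t1 ≤ x → x ^ (2*ϰ-1) ≤ x ^ (2*ϰ) * x ^ (-(n:ℝ)/(q:ℝ)) := by
      intro x hx
      have hx0 : 0 < x := lt_of_lt_of_le ht10 hx
      have hx1 : (1:ℝ) ≤ x := le_trans ht11 hx
      have hnq : (n:ℝ)/(q:ℝ) ≤ 1 := (div_le_one hq0).2 (by exact_mod_cast hpq)
      have hexp : 2*ϰ - 1 ≤ 2*ϰ + (-(n:ℝ)/(q:ℝ)) := by
        rw [neg_div]; linarith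
      calc x ^ (2*ϰ-1) ≤ x ^ (2*ϰ + (-(n:ℝ)/(q:ℝ))) :=
            Real.rpow_le_rpow_of_exponent_le hx1 hexp
        _ = x ^ (2*ϰ) * x ^ (-(n:ℝ)/(q:ℝ)) := Real.rpow_add hx0 _ _
    refine aux_core ϰ cb (l0 + a) δ t1 hϰ0 hcb hδ0 ht11 (by linarith [hcoef]) ΛN ϱ ϱ2
      (fun x => x ^ (-(n:ℝ)/(q:ℝ))) (fun x hx => Real.rpow_pos_of_pos (lt_of_lt_of_le ht10 hx) _)
      (fun x ρ => ∑ k ∈ Finset.Icc n N, x ^ (-(k:ℝ)/(q:ℝ)) * deriv (Λ k) ρ)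
      hFd (ρ0 - η) (ρ0 + η) (fun x hx ρ hρ => hGb x hx ρ hρ)
      ?_ ?_ H hH hHt1 hH0 hkey1 hsol
      (fun x hx => hϱ2sol x (le_trans ht0t1 hx)) hinit t ht
    · -- ϱ2 stays in the region
      intro x hx
      have h1 : |ϱ2 x - ρ0| ≤ η/2 := (hT x (le_trans ht1T hx)).1
      have := abs_le.1 (le_trans h1 (show η/2 ≤ η by linarith))
      exact ⟨by linarith [this.1], by linarith [this.2]⟩
    · -- ϱ stays in the region
      intro x hx hvx
      have h1 : |ϱ2 x - ρ0| ≤ η/2 := (hT x (le_trans ht1T hx)).1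
      have htri : |ϱ x - ρ0| ≤ η := by
        calc |ϱ x - ρ0| = |(ϱ x - ϱ2 x) + (ϱ2 x - ρ0)| := by ring_nf
          _ ≤ |ϱ x - ϱ2 x| + |ϱ2 x - ρ0| := abs_add_le _ _
          _ ≤ 2*δ + η/2 := add_le_add hvx h1
          _ = η := by rw [hδ_def]; ring
      have := abs_le.1 htri
      exact ⟨by linarith [this.1], by linarith [this.2]⟩
  -- put the two cases together
  rcases lt_or_eq_of_le hpq with hplt | hpeq
  · -- p < q : exponential stability
    set e : ℝ := 1 - (n:ℝ)/(q:ℝ) with he_def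
    have he0 : 0 < e := by
      rw [he_def]
      have : (n:ℝ)/(q:ℝ) < 1 := (div_lt_one hq0).2 (by exact_mod_cast hplt)
      linarith
    refine ⟨t1, δ, cb / e, ht0t1, hδ0, by positivity, ?_⟩
    intro ϱ hsol hinit t ht
    constructor
    · intro _
      have hct := core (fun x => (x ^ e - t1 ^ e) / e)
        (by
          intro x hx
          have hx0 : 0 < x := lt_of_lt_of_le ht10 hx
          have h1 : HasDerivAt (fun y : ℝ => y ^ e) (e * x ^ (e - 1)) x :=
            Real.hasDerivAt_rpow_const (Or.inl hx0.ne')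
          have h2 := (h1.sub_const (t1 ^ e)).div_const e
          have h3 : e * x ^ (e - 1) / e = x ^ (-(n:ℝ)/(q:ℝ)) := by
            rw [mul_comm, mul_div_assoc, div_self he0.ne', mul_one]
            congr 1
            rw [he_def]; ring
          rwa [h3] at h2)
        (by simp)
        (by
          intro x hx
          have h1 : t1 ^ e ≤ x ^ e := Real.rpow_le_rpow ht10.le hx he0.le
          show (0:ℝ) ≤ (x ^ e - t1 ^ e) / e
          exact div_nonneg (by linarith) he0.le)
        ϱ hsol hinit t ht
      have heq : cb * ((t ^ e - t1 ^ e) / e) = cb / e * (t ^ e - t1 ^ e) := by ring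
      rw [heq] at hct
      rw [neg_mul] ; exact hct
    · intro h; exact absurd h hplt.ne
  · -- p = q : polynomial stability
    refine ⟨t1, δ, cb, ht0t1, hδ0, hcb, ?_⟩
    intro ϱ hsol hinit t ht
    constructor
    · intro h; exact absurd hpeq h.ne
    · intro _
      have hct := core (fun x => Real.log x - Real.log t1)
        (by
          intro x hx
          have hx0 : 0 < x := lt_of_lt_of_le ht10 hx
          have h1 := (Real.hasDerivAt_log hx0.ne').sub_const (Real.log t1)
          have h2 : x ^ (-(n:ℝ)/(q:ℝ)) = x⁻¹ := by
            rw [show (-(n:ℝ)/(q:ℝ)) = -1 by rw [hpeq]; field_simp, Real.rpow_neg_one]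
          rwa [h2]
          )
        (by simp)
        (by
          intro x hx
          have := Real.log_le_log ht10 hx
          show (0:ℝ) ≤ Real.log x - Real.log t1
          linarith)
        ϱ hsol hinit t ht
      have ht_0 : 0 < t := lt_of_lt_of_le ht10 ht
      have heq : Real.exp (-(cb * (Real.log t - Real.log t1))) = (t / t1) ^ (-cb) := by
        rw [Real.rpow_def_of_pos (by positivity), Real.log_div ht_0.ne' ht10.ne']
        ring_nf
      rw [heq] at hct
      exact hct
end

section
/- Assume n = p ≤ q and that there exists ρ0 ∈ ℝ with 0 < |ρ0| < ρ*, Λ_p(ρ0) = 0 and Λ_p′(ρ0) < 0, and let ϱ2 : [t0, ∞) → ℝ be a solution of dϱ/dt = Λ_N(ϱ, t) with ϱ2(t) = ρ0 + O(t^{−1/q} log t) as t → ∞. Then for every ε > 0 and every ϰ ∈ (0, |Λ_p′(ρ0)|) with N > p + qϰ, there exist δ0 > 0 and t1 ≥ max(t0, t*) such that every continuously differentiable solution (ρ(t), φ(t)) of the perturbed system with |ρ(t1) − ϱ2(t1)| ≤ δ0 and φ(t1) ∈ ℝ satisfies t^{ϰ}|ρ(t) − ϱ2(t)| < ε for all t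 ≥ t1 at which the solution is defined, and, if it is defined on all of [t1, ∞), φ(t)/t → ω(ρ0) as t → ∞. -/
open Filter Real Set Asymptotics

set_option maxHeartbeats 1000000

lemma cesaro_deriv {φ g : ℝ → ℝ} {L t1 : ℝ}
    (hφ : ∀ t, t1 ≤ t → HasDerivAt φ (g t) t)
    (hg : Tendsto g atTop (nhds L)) :
    Tendsto (fun t => φ t / t) atTop (nhds L) := by
  rw [Metric.tendsto_atTop]
  intro ε hε
  obtain ⟨T0, hT0⟩ := (Metric.tendsto_atTop.1 hg (ε / 3) (by linarith))
  set T := max (max t1 T0) 0 with hT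
  have hTnn : (0:ℝ) ≤ T := le_max_right _ _
  set ψ : ℝ → ℝ := fun s => φ s - L * s with hψdef
  have hmvt : ∀ t, T ≤ t → |ψ t - ψ T| ≤ ε / 3 * (t - T) := by
    intro t ht
    have h1 : ∀ x ∈ Icc T t, HasDerivWithinAt ψ (g x - L) (Icc T t) x := by
      intro x hx
      have := ((hφ x (le_trans (le_trans (le_max_left _ _) (le_max_left _ _)) hx.1)).sub
        ((hasDerivAt_id x).const_mul L)).hasDerivWithinAt (s := Icc T t)
      rw [hψdef]; simpa [Pi.sub_def] using this
    have h2 : ∀ x ∈ Icc T t, ‖g x - L‖ ≤ ε / 3 := by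
      intro x hx
      have := hT0 x (le_trans (le_trans (le_max_right _ _) (le_max_left _ _)) hx.1)
      rw [Real.dist_eq] at this
      exact le_of_lt this
    have := Convex.norm_image_sub_le_of_norm_hasDerivWithin_le h1 h2 (convex_Icc T t)
      (left_mem_Icc.2 ht) (right_mem_Icc.2 ht)
    calc |ψ t - ψ T| ≤ ε / 3 * ‖t - T‖ := this
      _ = ε / 3 * (t - T) := by rw [Real.norm_eq_abs, abs_of_nonneg (by linarith)]
  refine ⟨max (max T 1) (3 * |ψ T| / ε + 1), fun t ht => ?_⟩
  have htT : T ≤ t := le_trans (le_trans (le_max_left _ _) (le_max_left _ _)) ht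
  have ht1 : (1:ℝ) ≤ t := le_trans (le_trans (le_max_right _ _) (le_max_left _ _)) ht
  have ht0 : (0:ℝ) < t := by linarith
  have htψ : 3 * |ψ T| / ε ≤ t := by
    have := le_trans (le_max_right _ _) ht
    linarith
  have hψT : |ψ T| ≤ ε / 3 * t := by
    rw [div_le_iff₀ hε] at htψ
    linarith
  have key : |φ t / t - L| ≤ 2 * ε / 3 := by
    have heq : φ t / t - L = (ψ t - ψ T) / t + ψ T / t := by
      field_simp [hψdef]
      ring
    rw [heq]
    have h1 : |(ψ t - ψ T) / t| ≤ ε / 3 := by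
      rw [abs_div, abs_of_pos ht0, div_le_iff₀ ht0]
      calc |ψ t - ψ T| ≤ ε / 3 * (t - T) := hmvt t htT
        _ ≤ ε / 3 * t := by nlinarith
    have h2 : |ψ T / t| ≤ ε / 3 := by
      rw [abs_div, abs_of_pos ht0, div_le_iff₀ ht0]
      linarith
    calc |(ψ t - ψ T) / t + ψ T / t| ≤ |(ψ t - ψ T) / t| + |ψ T / t| := abs_add_le _ _
      _ ≤ 2 * ε / 3 := by linarith
  rw [Real.dist_eq]
  linarith

lemma Gneg_aux {δ ε' m c A1 A2 η ϰ : ℝ} (hδ : 0 < δ) (hε' : 0 < ε')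
    (hm : 0 < m) (hc : 0 < c) (h1 : ε'/2 * c < m)
    (hA1 : A1 ≤ δ/2 * (m*m)) (hA2 : A2 ≤ δ * ε' / 8 * (c*m)) (hη : η = ϰ + δ) :
    ϰ * (m*m) + (-η * (m*m) + A1 + A2) < 0 := by
  have h2 : δ/2 * (ε'/2 * c) * m < δ/2 * (m * m) := by
    have := mul_lt_mul_of_pos_right h1 hm
    have h3 : 0 < δ/2 := by linarith
    calc δ/2 * (ε'/2 * c) * m = δ/2 * (ε'/2 * c * m) := by ring
      _ < δ/2 * (m * m) := by exact mul_lt_mul_of_pos_left this h3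
  have h4 : 0 < δ * ε' / 8 * (c * m) := by positivity
  nlinarith [h2, h4, hA1, hA2]

/-- Case `(n,p) ∈ Q₂`, `Λ_p'(ρ₀) < 0`: solutions of the perturbed system starting near
`ϱ₂(t₁)` satisfy `t^{ϰ}|ρ(t)-ϱ₂(t)| < ε` at later times where defined, and, when
globally defined, `φ(t)/t → ω(ρ₀)`. -/
theorem stmt_10 (q n p N : ℕ) (hq : 0 < q) (hn : 0 < n)
    (hnp : n ≤ p) (hpN : p ≤ N) (hN2p : N < 2 * p)
    (rstar tstar : ℝ) (hrstar : 0 < rstar) (htstar : 0 < tstar)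
    (ω : ℝ → ℝ) (hω : ContDiff ℝ (⊤ : ℕ∞) ω)
    (hωpos : ∀ ρ : ℝ, |ρ| ≤ rstar → 0 < ω ρ)
    (Λ : ℕ → ℝ → ℝ) (hΛ : ∀ k, ContDiff ℝ (⊤ : ℕ∞) (Λ k))
    (μp : ℝ) (hμp : μp ≠ 0)
    (hΛsmall : ∀ k, k < p → (Λ k) =O[nhds (0:ℝ)] (fun ρ => ρ))
    (hΛp : (fun ρ => Λ p ρ - μp) =O[nhds (0:ℝ)] (fun ρ => ρ))
    (ΛN : ℝ → ℝ → ℝ)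
    (hΛN : ∀ ρ t : ℝ, ΛN ρ t = ∑ k ∈ Finset.Icc n N, t ^ (-(k : ℝ) / q) * Λ k ρ)
    -- the perturbations
    (ρstar C : ℝ) (hρstar : 0 < ρstar) (hρr : ρstar ≤ rstar) (hC : 0 < C)
    (Λt Ωt : ℝ → ℝ → ℝ → ℝ)
    (hΛtc : ContinuousOn (fun x : ℝ × ℝ × ℝ => Λt x.1 x.2.1 x.2.2)
      {x : ℝ × ℝ × ℝ | |x.1| ≤ ρstar ∧ tstar ≤ x.2.2})
    (hΩtc : ContinuousOn (fun x : ℝ × ℝ × ℝ => Ωt x.1 x.2.1 x.2.2)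
      {x : ℝ × ℝ × ℝ | |x.1| ≤ ρstar ∧ tstar ≤ x.2.2})
    (hΛtper : ∀ ρ φ t : ℝ, Λt ρ (φ + 2 * π) t = Λt ρ φ t)
    (hΩtper : ∀ ρ φ t : ℝ, Ωt ρ (φ + 2 * π) t = Ωt ρ φ t)
    (hΛtb : ∀ ρ φ t : ℝ, 0 < |ρ| → |ρ| ≤ ρstar → tstar ≤ t →
      |Λt ρ φ t| ≤ C * t ^ (-((N : ℝ) + 1) / q))
    (hΩtb : ∀ ρ φ t : ℝ, 0 < |ρ| → |ρ| ≤ ρstar → tstar ≤ t →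
      |Ωt ρ φ t| ≤ C * (t ^ (-1 / (q : ℝ)) + |ρ|⁻¹ * t ^ (-(p : ℝ) / q)))
    -- hypotheses of the theorem
    (hneqp : n = p) (hpq : p ≤ q)
    (ρ0 : ℝ) (hρ00 : 0 < |ρ0|) (hρ0r : |ρ0| < ρstar)
    (hΛpρ0 : Λ p ρ0 = 0) (hΛp' : deriv (Λ p) ρ0 < 0)
    -- the reference solution ϱ₂ with ϱ₂(t) = ρ₀ + O(t^{-1/q} log t)
    (t0 : ℝ) (ht0 : tstar ≤ t0)
    (ϱ2 : ℝ → ℝ)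
    (hϱ2sol : ∀ t : ℝ, t0 ≤ t → HasDerivAt ϱ2 (ΛN (ϱ2 t) t) t)
    (hϱ2asym : (fun t : ℝ => ϱ2 t - ρ0)
      =O[atTop] (fun t : ℝ => t ^ (-1 / (q : ℝ)) * Real.log t)) :
    ∀ ε : ℝ, 0 < ε →
      ∀ ϰ : ℝ, 0 < ϰ → ϰ < |deriv (Λ p) ρ0| → (p : ℝ) + (q : ℝ) * ϰ < N →
        ∃ δ0 t1 : ℝ, 0 < δ0 ∧ max t0 tstar ≤ t1 ∧
          (∀ (T : ℝ) (ρ φ : ℝ → ℝ), t1 ≤ T →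
            (∀ t ∈ Set.Icc t1 T,
              HasDerivAt ρ (ΛN (ρ t) t + Λt (ρ t) (φ t) t) t ∧
              HasDerivAt φ (ω (ρ t) + Ωt (ρ t) (φ t) t) t) →
            |ρ t1 - ϱ2 t1| ≤ δ0 →
            ∀ t ∈ Set.Icc t1 T, t ^ ϰ * |ρ t - ϱ2 t| < ε) ∧
          (∀ ρ φ : ℝ → ℝ,
            (∀ t : ℝ, t1 ≤ t →
              HasDerivAt ρ (ΛN (ρ t) t + Λt (ρ t) (φ t) t) t ∧
              HasDerivAt φ (ω (ρ t) + Ωt (ρ t) (φ t) t) t) →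
            |ρ t1 - ϱ2 t1| ≤ δ0 →
            (∀ t : ℝ, t1 ≤ t → t ^ ϰ * |ρ t - ϱ2 t| < ε) ∧
            Tendsto (fun t : ℝ => φ t / t) atTop (nhds (ω ρ0))) := by
  intro ε hε ϰ hk0 hkl hkN
  have hq0 : (0:ℝ) < q := Nat.cast_pos.2 hq
  have hp0 : (0:ℝ) < p := Nat.cast_pos.2 (lt_of_lt_of_le hn hnp)
  have hpq' : (p:ℝ) ≤ q := Nat.cast_le.2 hpq
  set lam : ℝ := -deriv (Λ p) ρ0 with hlamdef
  have hlam0 : 0 < lam := neg_pos.2 hΛp'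
  have hklam : ϰ < lam := by rwa [abs_of_neg hΛp'] at hkl
  set η : ℝ := (lam + ϰ) / 2 with hηdef
  set δ : ℝ := (lam - ϰ) / 2 with hδdef
  have hδ0 : 0 < δ := by simp only [hδdef]; linarith
  have hηϰδ : η = ϰ + δ := by simp only [hηdef, hδdef]; ring
  have hηlam : η < lam := by simp only [hηdef]; linarith
  -- choose r
  have hΛN' : ∀ (a t : ℝ), ΛN a t = ∑ k ∈ Finset.Icc p N, t ^ (-(k : ℝ) / q) * Λ k a := by
    intro a t; rw [hΛN, hneqp]
  have hcontd : ContinuousAt (deriv (Λ p)) ρ0 := ((hΛ p).continuous_deriv (by simp)).continuousAt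
  have hmemd : deriv (Λ p) ⁻¹' (Iio (-η)) ∈ nhds ρ0 :=
    hcontd (Iio_mem_nhds (by simp only [hlamdef] at hηlam ⊢; linarith))
  obtain ⟨rd, hrd0, hrdball⟩ := Metric.mem_nhds_iff.1 hmemd
  set r : ℝ := min (rd / 2) (min (|ρ0| / 2) (ρstar - |ρ0|)) with hrdef
  have hr0 : 0 < r := by
    refine lt_min (by linarith) (lt_min (by linarith) (by linarith))
  have hrρ0 : r ≤ |ρ0| / 2 := le_trans (min_le_right _ _) (min_le_left _ _)
  have hrρs : r ≤ ρstar - |ρ0| := le_trans (min_le_right _ _) (min_le_right _ _)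
  set I : Set ℝ := Icc (ρ0 - r) (ρ0 + r) with hIdef
  have hId : ∀ x ∈ I, deriv (Λ p) x ≤ -η := by
    intro x hx
    have hxball : x ∈ Metric.ball ρ0 rd := by
      rw [Metric.mem_ball, Real.dist_eq]
      have h1 : r ≤ rd / 2 := min_le_left _ _
      have h2 : |x - ρ0| ≤ r := abs_le.2 ⟨by linarith [hx.1], by linarith [hx.2]⟩
      linarith
    exact le_of_lt (hrdball hxball)
  -- mean value estimate for Λ p
  have hmvtp : ∀ a ∈ I, ∀ b ∈ I, (a - b) * (Λ p a - Λ p b) ≤ -η * ((a - b) * (a - b)) := by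
    intro a ha b hb
    have main : ∀ u v : ℝ, u ∈ I → v ∈ I → u < v →
        (u - v) * (Λ p u - Λ p v) ≤ -η * ((u - v) * (u - v)) := by
      intro u v hu hv huv
      have hsub : Icc u v ⊆ I := Icc_subset_Icc hu.1 hv.2
      obtain ⟨c, hc, hceq⟩ := exists_hasDerivAt_eq_slope (Λ p) (deriv (Λ p)) huv
        (((hΛ p).continuous).continuousOn)
        (fun x _ => ((hΛ p).differentiable (by simp)).differentiableAt.hasDerivAt)
      have hcI : c ∈ I := hsub ⟨le_of_lt hc.1, le_of_lt hc.2⟩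
      have hcd : deriv (Λ p) c ≤ -η := hId c hcI
      have heq : Λ p v - Λ p u = deriv (Λ p) c * (v - u) := by
        rw [hceq]; field_simp [sub_ne_zero.2 huv.ne']
      have h4 : deriv (Λ p) c * ((v - u) * (v - u)) ≤ -η * ((v - u) * (v - u)) :=
        mul_le_mul_of_nonneg_right hcd (mul_self_nonneg _)
      have h5 : (u - v) * (Λ p u - Λ p v) = deriv (Λ p) c * ((v - u) * (v - u)) := by
        linear_combination (v - u) * heq
      calc (u - v) * (Λ p u - Λ p v) = deriv (Λ p) c * ((v - u) * (v - u)) := h5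
        _ ≤ -η * ((v - u) * (v - u)) := h4
        _ = -η * ((u - v) * (u - v)) := by ring
    rcases lt_trichotomy a b with h | h | h
    · exact main a b ha hb h
    · simp [h]
    · have h6 := main b a hb ha h
      calc (a - b) * (Λ p a - Λ p b) = (b - a) * (Λ p b - Λ p a) := by ring
        _ ≤ -η * ((b - a) * (b - a)) := h6
        _ = -η * ((a - b) * (a - b)) := by ring
  -- Lipschitz bound for higher Λ k on I
  obtain ⟨L, hL0, hLip⟩ : ∃ L : ℝ, 0 ≤ L ∧ ∀ k ∈ Finset.Icc (p+1) N, ∀ a ∈ I, ∀ b ∈ I,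
      |Λ k a - Λ k b| ≤ L * |a - b| := by
    have hgc : ContinuousOn (fun x => ∑ k ∈ Finset.Icc (p+1) N, |deriv (Λ k) x|) I :=
      (continuous_finset_sum _ (fun k _ => ((hΛ k).continuous_deriv (by simp)).abs)).continuousOn
    have hIcpt : IsCompact I := hIdef ▸ isCompact_Icc
    obtain ⟨C0, hC0⟩ := hIcpt.exists_bound_of_continuousOn hgc
    refine ⟨max C0 0, le_max_right _ _, ?_⟩
    intro k hk a ha b hb
    have hbd : ∀ x ∈ I, ‖deriv (Λ k) x‖ ≤ max C0 0 := by
      intro x hx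
      have h1 := hC0 x hx
      have h2 : |deriv (Λ k) x| ≤ ∑ j ∈ Finset.Icc (p+1) N, |deriv (Λ j) x| :=
        Finset.single_le_sum (f := fun j => |deriv (Λ j) x|) (fun j _ => abs_nonneg _) hk
      have h3 : (∑ j ∈ Finset.Icc (p+1) N, |deriv (Λ j) x|) ≤
          ‖∑ j ∈ Finset.Icc (p+1) N, |deriv (Λ j) x|‖ := le_abs_self _
      calc ‖deriv (Λ k) x‖ = |deriv (Λ k) x| := rfl
        _ ≤ _ := le_trans h2 (le_trans h3 (le_trans h1 (le_max_left _ _)))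
    have hres := Convex.norm_image_sub_le_of_norm_hasDerivWithin_le
      (f := Λ k) (f' := deriv (Λ k)) (s := I)
      (fun x _ => (((hΛ k).differentiable (by simp)).differentiableAt.hasDerivAt).hasDerivWithinAt)
      hbd (convex_Icc _ _) hb ha
    simpa [Real.norm_eq_abs] using hres
  set L2 : ℝ := (N : ℝ) * L with hL2def
  have hL20 : 0 ≤ L2 := mul_nonneg (Nat.cast_nonneg N) hL0
  set ε' : ℝ := min (ε / 2) (r / 2) with hε'def
  have hε'0 : 0 < ε' := lt_min (by linarith) (by linarith)
  have hε'ε : ε' ≤ ε / 2 := min_le_left _ _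
  have hε'r : ε' ≤ r / 2 := min_le_right _ _
  -- eventually conditions
  set e2 : ℝ := ϰ + ((p : ℝ) - N - 1) / q with he2def
  have he2neg : e2 < 0 := by
    have h1 : ϰ * q + ((p:ℝ) - N - 1) < 0 := by linarith only [hkN]
    rw [he2def, show ϰ + ((p:ℝ) - N - 1)/q = (ϰ * q + ((p:ℝ) - N - 1))/q by field_simp]
    exact div_neg_of_neg_of_pos h1 hq0
  have htend1 : Tendsto (fun t : ℝ => t ^ (-(1:ℝ)/(q:ℝ))) atTop (nhds 0) := by
    have := tendsto_rpow_neg_atTop (y := 1/(q:ℝ)) (by positivity)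
    refine this.congr (fun x => by rw [neg_div])
  have htend2 : Tendsto (fun t : ℝ => t ^ e2) atTop (nhds 0) := by
    have h := tendsto_rpow_neg_atTop (y := -e2) (by linarith)
    exact h.congr (fun x => by rw [neg_neg])
  have ev1 : ∀ᶠ t in atTop, L2 * t ^ (-(1:ℝ)/(q:ℝ)) ≤ δ / 2 := by
    have h := htend1.const_mul L2
    rw [mul_zero] at h
    exact h.eventually (eventually_le_nhds (by linarith))
  have ev2 : ∀ᶠ t in atTop, C * t ^ e2 ≤ δ * ε' / 8 := by
    have h := htend2.const_mul C
    rw [mul_zero] at h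
    exact h.eventually (eventually_le_nhds (by positivity))
  have hϱ2lim : Tendsto (fun t => ϱ2 t - ρ0) atTop (nhds 0) := by
    refine hϱ2asym.trans_tendsto ?_
    have h := (isLittleO_log_rpow_atTop
      (show (0:ℝ) < 1/(q:ℝ) by positivity)).tendsto_div_nhds_zero
    refine h.congr' ?_
    filter_upwards [eventually_gt_atTop (0:ℝ)] with t ht
    rw [neg_div, Real.rpow_neg ht.le]
    ring
  have ev3 : ∀ᶠ t in atTop, |ϱ2 t - ρ0| ≤ r / 2 := by
    have h := hϱ2lim.abs
    rw [abs_zero] at h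
    exact h.eventually (eventually_le_nhds (by linarith))
  obtain ⟨T', hT'⟩ := eventually_atTop.1 ((ev1.and ev2).and ev3)
  set t1 : ℝ := max (max T' 1) (max t0 tstar) with ht1def
  have ht1T' : T' ≤ t1 := le_trans (le_max_left _ _) (le_max_left _ _)
  have ht11 : (1:ℝ) ≤ t1 := le_trans (le_max_right _ _) (le_max_left _ _)
  have ht1t0 : t0 ≤ t1 := le_trans (le_max_left _ _) (le_max_right _ _)
  have ht1ts : tstar ≤ t1 := le_trans (le_max_right _ _) (le_max_right _ _)
  have ht1pos : (0:ℝ) < t1 := lt_of_lt_of_le one_pos ht11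
  set δ0 : ℝ := ε' / 2 * t1 ^ (-ϰ) with hδ0def
  have hδ00 : 0 < δ0 := mul_pos (by linarith) (Real.rpow_pos_of_pos ht1pos _)
  -- identity helper
  have hwid : ∀ s : ℝ, 0 < s → ∀ y : ℝ,
      s ^ (2*ϰ) * (y * y) = (s ^ ϰ * |y|) * (s ^ ϰ * |y|) := by
    intro s hs y
    rw [show (s ^ ϰ * |y|) * (s ^ ϰ * |y|) = s ^ ϰ * s ^ ϰ * (|y| * |y|) by ring,
      ← Real.rpow_add hs, abs_mul_abs_self, show ϰ + ϰ = 2 * ϰ by ring]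
  -- THE KEY LEMMA
  have key : ∀ (T : ℝ) (ρR φR : ℝ → ℝ), t1 ≤ T →
      (∀ t ∈ Set.Icc t1 T,
        HasDerivAt ρR (ΛN (ρR t) t + Λt (ρR t) (φR t) t) t ∧
        HasDerivAt φR (ω (ρR t) + Ωt (ρR t) (φR t) t) t) →
      |ρR t1 - ϱ2 t1| ≤ δ0 →
      ∀ t ∈ Set.Icc t1 T, t ^ ϰ * |ρR t - ϱ2 t| < ε' := by
    intro T ρR φR hT sol hinit
    set ξ : ℝ → ℝ := fun s => ρR s - ϱ2 s with hξdef
    set w : ℝ → ℝ := fun s => s ^ (2*ϰ) * (ξ s * ξ s) with hwdef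
    have hξd : ∀ s ∈ Icc t1 T,
        HasDerivAt ξ (ΛN (ρR s) s + Λt (ρR s) (φR s) s - ΛN (ϱ2 s) s) s :=
      fun s hs => ((sol s hs).1).sub (hϱ2sol s (le_trans ht1t0 hs.1))
    have hξc : ContinuousOn ξ (Icc t1 T) :=
      fun s hs => (hξd s hs).continuousAt.continuousWithinAt
    have hwc : ContinuousOn w (Icc t1 T) := by
      refine ContinuousOn.mul ?_ (hξc.mul hξc)
      intro s hs
      exact (Real.continuousAt_rpow_const s _
        (Or.inl (ne_of_gt (lt_of_lt_of_le ht1pos hs.1)))).continuousWithinAt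
    have hwt1 : w t1 < ε' * ε' := by
      have h1 : |ξ t1| ≤ δ0 := hinit
      have h2 : t1 ^ ϰ * t1 ^ (-ϰ) = 1 := by
        rw [← Real.rpow_add ht1pos]; norm_num
      have hu1 : t1 ^ ϰ * |ξ t1| ≤ ε' / 2 := by
        calc t1 ^ ϰ * |ξ t1| ≤ t1 ^ ϰ * δ0 :=
              mul_le_mul_of_nonneg_left h1 (Real.rpow_pos_of_pos ht1pos ϰ).le
          _ = ε' / 2 * (t1 ^ ϰ * t1 ^ (-ϰ)) := by rw [hδ0def]; ring
          _ = ε' / 2 := by rw [h2, mul_one]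
      have hwu : w t1 = (t1 ^ ϰ * |ξ t1|) * (t1 ^ ϰ * |ξ t1|) := hwid t1 ht1pos (ξ t1)
      have hu0 : 0 ≤ t1 ^ ϰ * |ξ t1| :=
        mul_nonneg (Real.rpow_pos_of_pos ht1pos ϰ).le (abs_nonneg _)
      rw [hwu]
      linarith [mul_self_le_mul_self hu0 hu1, mul_pos hε'0 hε'0]
    -- main claim
    have claim : ∀ s ∈ Icc t1 T, w s < ε' * ε' := by
      by_contra hcon
      push_neg at hcon
      obtain ⟨s0, hs0mem, hs0⟩ := hcon
      set S : Set ℝ := {s | s ∈ Icc t1 T ∧ ε' * ε' ≤ w s} with hSdef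
      have hSne : S.Nonempty := ⟨s0, hs0mem, hs0⟩
      have hSclosed : IsClosed S := by
        have h := hwc.preimage_isClosed_of_isClosed isClosed_Icc
          (isClosed_Ici (a := ε' * ε'))
        have : S = Icc t1 T ∩ w ⁻¹' (Ici (ε' * ε')) := by
          ext s; simp [hSdef, Set.mem_setOf_eq, Set.mem_inter_iff, Set.mem_preimage,
            Set.mem_Ici]
        rwa [this]
      have hSbdd : BddBelow S := ⟨t1, fun s hs => hs.1.1⟩
      set τ : ℝ := sInf S with hτdef
      have hτS : τ ∈ S := hSclosed.csInf_mem hSne hSbdd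
      have hτmem : τ ∈ Icc t1 T := hτS.1
      have hwτ : ε' * ε' ≤ w τ := hτS.2
      have hτgt : t1 < τ := by
        rcases lt_or_eq_of_le hτmem.1 with h | h
        · exact h
        · exfalso; rw [← h] at hwτ; linarith
      have hbelow : ∀ s, t1 ≤ s → s < τ → w s < ε' * ε' := by
        intro s h1 h2
        by_contra hge
        push_neg at hge
        exact absurd (csInf_le hSbdd ⟨⟨h1, le_trans h2.le hτmem.2⟩, hge⟩) (not_le.2 h2)
      have hmem2 : w ⁻¹' (Ioi (ε'/2 * (ε'/2))) ∈ nhdsWithin τ (Icc t1 T) :=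
        (hwc τ hτmem) (Ioi_mem_nhds (lt_of_lt_of_le
          (by linarith [mul_pos hε'0 hε'0]) hwτ))
      rw [Metric.mem_nhdsWithin_iff] at hmem2
      obtain ⟨d, hd0, hdsub⟩ := hmem2
      set hh : ℝ := min (d/2) ((τ - t1)/2) with hhdef
      have hh0 : 0 < hh := lt_min (by linarith) (by linarith)
      have hhd : hh ≤ d/2 := min_le_left _ _
      have hhτ : hh ≤ (τ - t1)/2 := min_le_right _ _
      have hJsub : Icc (τ - hh) τ ⊆ Icc t1 T := by
        intro s hs; exact ⟨by linarith [hs.1], le_trans hs.2 hτmem.2⟩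
      have hJlo : ∀ s ∈ Icc (τ - hh) τ, ε'/2 * (ε'/2) < w s := by
        intro s hs
        have hball : s ∈ Metric.ball τ d := by
          rw [Metric.mem_ball, Real.dist_eq]
          have : |s - τ| ≤ hh := abs_le.2 ⟨by linarith [hs.1], by linarith [hs.2]⟩
          linarith
        exact hdsub ⟨hball, hJsub hs⟩
      have hanti : StrictAntiOn w (Icc (τ - hh) τ) := by
        apply strictAntiOn_of_deriv_neg (convex_Icc _ _) (hwc.mono hJsub)
        intro x hx
        rw [interior_Icc] at hx
        have hxJ : x ∈ Icc (τ - hh) τ := ⟨hx.1.le, hx.2.le⟩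
        have hxmem : x ∈ Icc t1 T := hJsub hxJ
        have hx1 : (1:ℝ) ≤ x := le_trans ht11 hxmem.1
        have hxpos : (0:ℝ) < x := lt_of_lt_of_le one_pos hx1
        obtain ⟨⟨hA, hB⟩, hC3⟩ := hT' x (le_trans ht1T' hxmem.1)
        have hwxlo : ε'/2 * (ε'/2) < w x := hJlo x hxJ
        have hwxhi : w x < ε' * ε' := hbelow x hxmem.1 hx.2
        have hxϰpos : (0:ℝ) < x ^ ϰ := Real.rpow_pos_of_pos hxpos _
        have hxknegpos : (0:ℝ) < x ^ (-ϰ) := Real.rpow_pos_of_pos hxpos _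
        have hu0 : 0 ≤ x ^ ϰ * |ξ x| := mul_nonneg hxϰpos.le (abs_nonneg _)
        have hwxu : w x = (x ^ ϰ * |ξ x|) * (x ^ ϰ * |ξ x|) := hwid x hxpos (ξ x)
        have hulo : ε'/2 < x ^ ϰ * |ξ x| :=
          (mul_self_lt_mul_self_iff (by linarith) hu0).2 (hwxu ▸ hwxlo)
        have huhi : x ^ ϰ * |ξ x| < ε' :=
          (mul_self_lt_mul_self_iff hu0 hε'0.le).2 (hwxu ▸ hwxhi)
        have hinvx : x ^ ϰ * x ^ (-ϰ) = 1 := by rw [← Real.rpow_add hxpos]; norm_num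
        have hξhi : |ξ x| ≤ ε' * x ^ (-ϰ) := by
          have := mul_le_mul_of_nonneg_right huhi.le hxknegpos.le
          calc |ξ x| = x ^ ϰ * |ξ x| * x ^ (-ϰ) := by
                rw [show x ^ ϰ * |ξ x| * x ^ (-ϰ) = (x ^ ϰ * x ^ (-ϰ)) * |ξ x| by ring,
                  hinvx, one_mul]
            _ ≤ ε' * x ^ (-ϰ) := this
        have hξlo : ε'/2 * x ^ (-ϰ) < |ξ x| := by
          have := mul_lt_mul_of_pos_right hulo hxknegpos
          calc ε'/2 * x ^ (-ϰ) < x ^ ϰ * |ξ x| * x ^ (-ϰ) := this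
            _ = |ξ x| := by
                rw [show x ^ ϰ * |ξ x| * x ^ (-ϰ) = (x ^ ϰ * x ^ (-ϰ)) * |ξ x| by ring,
                  hinvx, one_mul]
        have hxneg1 : x ^ (-ϰ) ≤ 1 :=
          Real.rpow_le_one_of_one_le_of_nonpos hx1 (by linarith)
        have hξ1 : |ξ x| ≤ ε' := by
          calc |ξ x| ≤ ε' * x ^ (-ϰ) := hξhi
            _ ≤ ε' * 1 := mul_le_mul_of_nonneg_left hxneg1 hε'0.le
            _ = ε' := mul_one _
        have hξD : ξ x = ρR x - ϱ2 x := rfl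
        have hρx : |ρR x - ρ0| ≤ r := by
          have htri : |ρR x - ρ0| ≤ |ξ x| + |ϱ2 x - ρ0| := by
            rw [hξD]
            calc |ρR x - ρ0| = |(ρR x - ϱ2 x) + (ϱ2 x - ρ0)| := by ring_nf
              _ ≤ |ρR x - ϱ2 x| + |ϱ2 x - ρ0| := abs_add_le _ _
          linarith
        have hρI : ρR x ∈ I := by
          have := abs_le.1 hρx
          exact ⟨by linarith [this.1], by linarith [this.2]⟩
        have hϱI : ϱ2 x ∈ I := by
          have := abs_le.1 hC3
          exact ⟨by linarith [this.1], by linarith [this.2]⟩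
        have hρlo : |ρ0| / 2 ≤ |ρR x| := by
          have h1 := abs_sub_abs_le_abs_sub ρ0 (ρR x)
          rw [abs_sub_comm] at h1
          linarith
        have hρpos : 0 < |ρR x| := by linarith
        have hρle : |ρR x| ≤ ρstar := by
          have h1 := abs_sub_abs_le_abs_sub (ρR x) ρ0
          linarith
        -- derivative of w at x
        have hD : HasDerivAt ξ (ΛN (ρR x) x + Λt (ρR x) (φR x) x - ΛN (ϱ2 x) x) x :=
          hξd x hxmem
        set Fv : ℝ := ΛN (ρR x) x + Λt (ρR x) (φR x) x - ΛN (ϱ2 x) x with hFvdef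
        have hrp : HasDerivAt (fun s : ℝ => s ^ (2*ϰ)) (2*ϰ * x ^ (2*ϰ - 1)) x := by
          have := Real.hasDerivAt_rpow_const (x := x) (p := 2*ϰ) (Or.inl hxpos.ne')
          simpa [mul_comm] using this
        have hsq : HasDerivAt (fun s => ξ s * ξ s) (Fv * ξ x + ξ x * Fv) x := hD.mul hD
        have hw : HasDerivAt w
            (2*ϰ * x ^ (2*ϰ - 1) * (ξ x * ξ x) + x ^ (2*ϰ) * (Fv * ξ x + ξ x * Fv)) x :=
          hrp.mul hsq
        rw [hw.deriv]
        -- estimates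
        have hsum : ΛN (ρR x) x - ΛN (ϱ2 x) x
            = x ^ (-(p:ℝ)/q) * (Λ p (ρR x) - Λ p (ϱ2 x))
              + ∑ k ∈ Finset.Icc (p+1) N, x ^ (-(k:ℝ)/q) * (Λ k (ρR x) - Λ k (ϱ2 x)) := by
          rw [hΛN', hΛN', ← Finset.sum_sub_distrib]
          simp_rw [← mul_sub]
          rw [← Finset.add_sum_erase _ _ (Finset.mem_Icc.2 ⟨le_refl p, hpN⟩),
            Finset.Icc_erase_left, ← Finset.Icc_add_one_left_eq_Ioc]
        have hX : (0:ℝ) < x ^ (-(p:ℝ)/q) := Real.rpow_pos_of_pos hxpos _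
        have hterm1 : ξ x * (x ^ (-(p:ℝ)/q) * (Λ p (ρR x) - Λ p (ϱ2 x)))
            ≤ x ^ (-(p:ℝ)/q) * (-η * (ξ x * ξ x)) := by
          have hmv := hmvtp (ρR x) hρI (ϱ2 x) hϱI
          rw [hξD]
          calc (ρR x - ϱ2 x) * (x ^ (-(p:ℝ)/q) * (Λ p (ρR x) - Λ p (ϱ2 x)))
              = x ^ (-(p:ℝ)/q) * ((ρR x - ϱ2 x) * (Λ p (ρR x) - Λ p (ϱ2 x))) := by ring
            _ ≤ x ^ (-(p:ℝ)/q) * (-η * ((ρR x - ϱ2 x) * (ρR x - ϱ2 x))) :=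
              mul_le_mul_of_nonneg_left hmv hX.le
        have hterm2 : ξ x * (∑ k ∈ Finset.Icc (p+1) N,
              x ^ (-(k:ℝ)/q) * (Λ k (ρR x) - Λ k (ϱ2 x)))
            ≤ L2 * x ^ (-((p:ℝ)+1)/q) * (ξ x * ξ x) := by
          have hone : ∀ k ∈ Finset.Icc (p+1) N,
              |x ^ (-(k:ℝ)/q) * (Λ k (ρR x) - Λ k (ϱ2 x))|
                ≤ x ^ (-((p:ℝ)+1)/q) * (L * |ξ x|) := by
            intro k hk
            have hk1 : (p:ℝ) + 1 ≤ (k:ℝ) := by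
              exact_mod_cast (Finset.mem_Icc.1 hk).1
            have hexp : x ^ (-(k:ℝ)/q) ≤ x ^ (-((p:ℝ)+1)/q) := by
              apply Real.rpow_le_rpow_of_exponent_le hx1
              rw [neg_div, neg_div]
              exact neg_le_neg ((div_le_div_iff_of_pos_right hq0).2 hk1)
            have habs : |x ^ (-(k:ℝ)/q)| = x ^ (-(k:ℝ)/q) :=
              abs_of_pos (Real.rpow_pos_of_pos hxpos _)
            have hlip := hLip k hk (ρR x) hρI (ϱ2 x) hϱI
            rw [abs_mul, habs, ← hξD] at *
            exact mul_le_mul hexp hlip (abs_nonneg _)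
              (Real.rpow_pos_of_pos hxpos _).le
          have hsumabs : |∑ k ∈ Finset.Icc (p+1) N,
                x ^ (-(k:ℝ)/q) * (Λ k (ρR x) - Λ k (ϱ2 x))|
              ≤ (N:ℝ) * (x ^ (-((p:ℝ)+1)/q) * (L * |ξ x|)) := by
            calc |∑ k ∈ Finset.Icc (p+1) N, x ^ (-(k:ℝ)/q) * (Λ k (ρR x) - Λ k (ϱ2 x))|
                ≤ ∑ k ∈ Finset.Icc (p+1) N,
                    |x ^ (-(k:ℝ)/q) * (Λ k (ρR x) - Λ k (ϱ2 x))| :=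
                  Finset.abs_sum_le_sum_abs _ _
              _ ≤ (Finset.Icc (p+1) N).card • (x ^ (-((p:ℝ)+1)/q) * (L * |ξ x|)) :=
                  Finset.sum_le_card_nsmul _ _ _ hone
              _ = ((Finset.Icc (p+1) N).card : ℝ) * (x ^ (-((p:ℝ)+1)/q) * (L * |ξ x|)) :=
                  nsmul_eq_mul _ _
              _ ≤ (N:ℝ) * (x ^ (-((p:ℝ)+1)/q) * (L * |ξ x|)) := by
                  apply mul_le_mul_of_nonneg_right _
                    (mul_nonneg (Real.rpow_pos_of_pos hxpos _).le
                      (mul_nonneg hL0 (abs_nonneg _)))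
                  have : (Finset.Icc (p+1) N).card = N - p := by
                    rw [Nat.card_Icc]; omega
                  rw [this]
                  exact_mod_cast Nat.cast_le.2 (Nat.sub_le N p)
          calc ξ x * (∑ k ∈ Finset.Icc (p+1) N,
                x ^ (-(k:ℝ)/q) * (Λ k (ρR x) - Λ k (ϱ2 x)))
              ≤ |ξ x * (∑ k ∈ Finset.Icc (p+1) N,
                  x ^ (-(k:ℝ)/q) * (Λ k (ρR x) - Λ k (ϱ2 x)))| := le_abs_self _
            _ = |ξ x| * |∑ k ∈ Finset.Icc (p+1) N,
                  x ^ (-(k:ℝ)/q) * (Λ k (ρR x) - Λ k (ϱ2 x))| := abs_mul _ _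
            _ ≤ |ξ x| * ((N:ℝ) * (x ^ (-((p:ℝ)+1)/q) * (L * |ξ x|))) :=
                mul_le_mul_of_nonneg_left hsumabs (abs_nonneg _)
            _ = L2 * x ^ (-((p:ℝ)+1)/q) * (|ξ x| * |ξ x|) := by rw [hL2def]; ring
            _ = L2 * x ^ (-((p:ℝ)+1)/q) * (ξ x * ξ x) := by rw [abs_mul_abs_self]
        have hterm3 : ξ x * Λt (ρR x) (φR x) x
            ≤ (C * x ^ (-((N:ℝ)+1)/q)) * |ξ x| := by
          have hb := hΛtb (ρR x) (φR x) x hρpos hρle (le_trans ht1ts hxmem.1)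
          calc ξ x * Λt (ρR x) (φR x) x ≤ |ξ x * Λt (ρR x) (φR x) x| := le_abs_self _
            _ = |ξ x| * |Λt (ρR x) (φR x) x| := abs_mul _ _
            _ ≤ |ξ x| * (C * x ^ (-((N:ℝ)+1)/q)) :=
                mul_le_mul_of_nonneg_left hb (abs_nonneg _)
            _ = (C * x ^ (-((N:ℝ)+1)/q)) * |ξ x| := by ring
        -- exponent algebra
        have hexp1 : x ^ (-((p:ℝ)+1)/q) = x ^ (-(p:ℝ)/q) * x ^ (-(1:ℝ)/q) := by
          rw [← Real.rpow_add hxpos]; congr 1; ring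
        have hexp2 : x ^ (-((N:ℝ)+1)/q) = x ^ (-(p:ℝ)/q) * (x ^ e2 * x ^ (-ϰ)) := by
          rw [← Real.rpow_add hxpos, ← Real.rpow_add hxpos]
          congr 1
          rw [he2def]
          field_simp
          ring
        have hexp3 : x ^ (2*ϰ - 1) = x ^ (2*ϰ) * x ^ (-1:ℝ) := by
          rw [← Real.rpow_add hxpos]; congr 1
        have hx1X : x ^ (-1:ℝ) ≤ x ^ (-(p:ℝ)/q) := by
          apply Real.rpow_le_rpow_of_exponent_le hx1
          have hd1 : (p:ℝ)/q ≤ 1 := (div_le_one hq0).2 hpq'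
          rw [neg_div]
          exact neg_le_neg hd1
        -- assemble
        have hDF : ξ x * Fv
            ≤ x ^ (-(p:ℝ)/q) * (-η * (ξ x * ξ x))
              + x ^ (-(p:ℝ)/q) * (x ^ (-(1:ℝ)/q) * (L2 * (ξ x * ξ x)))
              + x ^ (-(p:ℝ)/q) * ((x ^ e2 * x ^ (-ϰ)) * (C * |ξ x|)) := by
          have hsplit : ξ x * Fv
              = ξ x * (x ^ (-(p:ℝ)/q) * (Λ p (ρR x) - Λ p (ϱ2 x)))
                + ξ x * (∑ k ∈ Finset.Icc (p+1) N,
                    x ^ (-(k:ℝ)/q) * (Λ k (ρR x) - Λ k (ϱ2 x)))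
                + ξ x * Λt (ρR x) (φR x) x := by
            rw [hFvdef, show ΛN (ρR x) x + Λt (ρR x) (φR x) x - ΛN (ϱ2 x) x
              = (ΛN (ρR x) x - ΛN (ϱ2 x) x) + Λt (ρR x) (φR x) x by ring, hsum]
            ring
          rw [hsplit]
          have h2' : ξ x * (∑ k ∈ Finset.Icc (p+1) N,
                x ^ (-(k:ℝ)/q) * (Λ k (ρR x) - Λ k (ϱ2 x)))
              ≤ x ^ (-(p:ℝ)/q) * (x ^ (-(1:ℝ)/q) * (L2 * (ξ x * ξ x))) := by
            calc ξ x * (∑ k ∈ Finset.Icc (p+1) N,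
                  x ^ (-(k:ℝ)/q) * (Λ k (ρR x) - Λ k (ϱ2 x)))
                ≤ L2 * x ^ (-((p:ℝ)+1)/q) * (ξ x * ξ x) := hterm2
              _ = x ^ (-(p:ℝ)/q) * (x ^ (-(1:ℝ)/q) * (L2 * (ξ x * ξ x))) := by
                  rw [hexp1]; ring
          have h3' : ξ x * Λt (ρR x) (φR x) x
              ≤ x ^ (-(p:ℝ)/q) * ((x ^ e2 * x ^ (-ϰ)) * (C * |ξ x|)) := by
            calc ξ x * Λt (ρR x) (φR x) x ≤ (C * x ^ (-((N:ℝ)+1)/q)) * |ξ x| := hterm3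
              _ = x ^ (-(p:ℝ)/q) * ((x ^ e2 * x ^ (-ϰ)) * (C * |ξ x|)) := by
                  rw [hexp2]; ring
          linarith only [hterm1, h2', h3']
        -- the bracket G
        set G : ℝ := ϰ * (ξ x * ξ x) + (-η * (ξ x * ξ x)
            + x ^ (-(1:ℝ)/q) * (L2 * (ξ x * ξ x))
            + (x ^ e2 * x ^ (-ϰ)) * (C * |ξ x|)) with hGdef
        have hDpos : 0 < |ξ x| := lt_trans (mul_pos (by linarith) hxknegpos) hξlo
        have hG : G < 0 := by
          have hDD : ξ x * ξ x = |ξ x| * |ξ x| := (abs_mul_abs_self _).symm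
          have hG1' : x ^ (-(1:ℝ)/q) * (L2 * (|ξ x| * |ξ x|)) ≤ δ/2 * (|ξ x| * |ξ x|) := by
            calc x ^ (-(1:ℝ)/q) * (L2 * (|ξ x| * |ξ x|))
                = (L2 * x ^ (-(1:ℝ)/q)) * (|ξ x| * |ξ x|) := by ring
              _ ≤ δ/2 * (|ξ x| * |ξ x|) :=
                  mul_le_mul_of_nonneg_right hA (by positivity)
          have hG2' : (x ^ e2 * x ^ (-ϰ)) * (C * |ξ x|)
              ≤ δ * ε' / 8 * (x ^ (-ϰ) * |ξ x|) := by
            have h := mul_le_mul_of_nonneg_right hB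
              (mul_nonneg hxknegpos.le (abs_nonneg (ξ x)))
            calc (x ^ e2 * x ^ (-ϰ)) * (C * |ξ x|)
                = (C * x ^ e2) * (x ^ (-ϰ) * |ξ x|) := by ring
              _ ≤ δ * ε' / 8 * (x ^ (-ϰ) * |ξ x|) := h
          rw [hGdef, hDD]
          exact Gneg_aux hδ0 hε'0 hDpos hxknegpos hξlo hG1' hG2' hηϰδ
        have hPXpos : (0:ℝ) < x ^ (2*ϰ) * x ^ (-(p:ℝ)/q) :=
          mul_pos (Real.rpow_pos_of_pos hxpos _) hX
        have hval : 2*ϰ * x ^ (2*ϰ - 1) * (ξ x * ξ x) + x ^ (2*ϰ) * (Fv * ξ x + ξ x * Fv)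
            ≤ 2 * (x ^ (2*ϰ) * x ^ (-(p:ℝ)/q)) * G := by
          have ha' : 2*ϰ * x ^ (2*ϰ - 1) * (ξ x * ξ x)
              ≤ 2 * x ^ (2*ϰ) * (ϰ * (x ^ (-(p:ℝ)/q) * (ξ x * ξ x))) := by
            rw [hexp3]
            have hm : x ^ (-1:ℝ) * (ξ x * ξ x) ≤ x ^ (-(p:ℝ)/q) * (ξ x * ξ x) :=
              mul_le_mul_of_nonneg_right hx1X (mul_self_nonneg _)
            have hcoef : (0:ℝ) ≤ 2 * ϰ * x ^ (2*ϰ) := by positivity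
            calc 2*ϰ * (x ^ (2*ϰ) * x ^ (-1:ℝ)) * (ξ x * ξ x)
                = (2 * ϰ * x ^ (2*ϰ)) * (x ^ (-1:ℝ) * (ξ x * ξ x)) := by ring
              _ ≤ (2 * ϰ * x ^ (2*ϰ)) * (x ^ (-(p:ℝ)/q) * (ξ x * ξ x)) :=
                  mul_le_mul_of_nonneg_left hm hcoef
              _ = 2 * x ^ (2*ϰ) * (ϰ * (x ^ (-(p:ℝ)/q) * (ξ x * ξ x))) := by ring
          have hb' : x ^ (2*ϰ) * (Fv * ξ x + ξ x * Fv)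
              ≤ 2 * x ^ (2*ϰ) * (x ^ (-(p:ℝ)/q) * (-η * (ξ x * ξ x))
                + x ^ (-(p:ℝ)/q) * (x ^ (-(1:ℝ)/q) * (L2 * (ξ x * ξ x)))
                + x ^ (-(p:ℝ)/q) * ((x ^ e2 * x ^ (-ϰ)) * (C * |ξ x|))) := by
            have hcoef : (0:ℝ) ≤ 2 * x ^ (2*ϰ) := by positivity
            calc x ^ (2*ϰ) * (Fv * ξ x + ξ x * Fv)
                = (2 * x ^ (2*ϰ)) * (ξ x * Fv) := by ring
              _ ≤ (2 * x ^ (2*ϰ)) * _ := mul_le_mul_of_nonneg_left hDF hcoef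
          calc 2*ϰ * x ^ (2*ϰ - 1) * (ξ x * ξ x) + x ^ (2*ϰ) * (Fv * ξ x + ξ x * Fv)
              ≤ 2 * x ^ (2*ϰ) * (ϰ * (x ^ (-(p:ℝ)/q) * (ξ x * ξ x)))
                + 2 * x ^ (2*ϰ) * (x ^ (-(p:ℝ)/q) * (-η * (ξ x * ξ x))
                  + x ^ (-(p:ℝ)/q) * (x ^ (-(1:ℝ)/q) * (L2 * (ξ x * ξ x)))
                  + x ^ (-(p:ℝ)/q) * ((x ^ e2 * x ^ (-ϰ)) * (C * |ξ x|))) := by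
                linarith only [ha', hb']
            _ = 2 * (x ^ (2*ϰ) * x ^ (-(p:ℝ)/q)) * G := by rw [hGdef]; ring
        have hfin2 : 2 * (x ^ (2*ϰ) * x ^ (-(p:ℝ)/q)) * G < 0 :=
          mul_neg_of_pos_of_neg (by linarith only [hPXpos]) hG
        exact lt_of_le_of_lt hval hfin2
      have hwfin := hanti (a := τ - hh) (b := τ)
        ⟨le_refl _, by linarith⟩ ⟨by linarith, le_refl _⟩ (by linarith)
      have hwh : w (τ - hh) < ε' * ε' := hbelow (τ - hh) (by linarith) (by linarith)
      linarith
    -- conclude key from claim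
    intro t ht
    have hwt := claim t ht
    have htpos : (0:ℝ) < t := lt_of_lt_of_le ht1pos ht.1
    have hwu : w t = (t ^ ϰ * |ξ t|) * (t ^ ϰ * |ξ t|) := hwid t htpos (ξ t)
    have hu0 : 0 ≤ t ^ ϰ * |ξ t| :=
      mul_nonneg (Real.rpow_pos_of_pos htpos ϰ).le (abs_nonneg _)
    exact (mul_self_lt_mul_self_iff hu0 hε'0.le).2 (hwu ▸ hwt)
  -- assemble the final statement
  refine ⟨δ0, t1, hδ00, le_max_right _ _, ?_, ?_⟩
  · intro T ρR φR hT sol hinit t ht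
    exact lt_of_lt_of_le (key T ρR φR hT sol hinit t ht) (by linarith)
  · intro ρR φR sol hinit
    have hbound : ∀ t, t1 ≤ t → t ^ ϰ * |ρR t - ϱ2 t| < ε' := by
      intro t ht
      exact key t ρR φR ht (fun s hs => sol s hs.1) hinit t ⟨ht, le_refl t⟩
    refine ⟨fun t ht => lt_of_lt_of_le (hbound t ht) (by linarith), ?_⟩
    -- now the φ/t limit
    have hfacts : ∀ t, t1 ≤ t → |ρR t - ϱ2 t| ≤ ε' * t ^ (-ϰ) ∧ |ρR t - ρ0| ≤ r ∧
        |ρ0| / 2 ≤ |ρR t| ∧ |ρR t| ≤ ρstar := by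
      intro t ht
      have htpos : (0:ℝ) < t := lt_of_lt_of_le ht1pos ht
      have ht1' : (1:ℝ) ≤ t := le_trans ht11 ht
      have hknegpos : (0:ℝ) < t ^ (-ϰ) := Real.rpow_pos_of_pos htpos _
      have hinvt : t ^ ϰ * t ^ (-ϰ) = 1 := by rw [← Real.rpow_add htpos]; norm_num
      have hb := hbound t ht
      have hξhi : |ρR t - ϱ2 t| ≤ ε' * t ^ (-ϰ) := by
        have := mul_le_mul_of_nonneg_right hb.le hknegpos.le
        calc |ρR t - ϱ2 t| = t ^ ϰ * |ρR t - ϱ2 t| * t ^ (-ϰ) := by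
              rw [show t ^ ϰ * |ρR t - ϱ2 t| * t ^ (-ϰ)
                = (t ^ ϰ * t ^ (-ϰ)) * |ρR t - ϱ2 t| by ring, hinvt, one_mul]
          _ ≤ ε' * t ^ (-ϰ) := this
      have hξ1 : |ρR t - ϱ2 t| ≤ ε' := by
        have hneg1 : t ^ (-ϰ) ≤ 1 :=
          Real.rpow_le_one_of_one_le_of_nonpos ht1' (by linarith)
        calc |ρR t - ϱ2 t| ≤ ε' * t ^ (-ϰ) := hξhi
          _ ≤ ε' * 1 := mul_le_mul_of_nonneg_left hneg1 hε'0.le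
          _ = ε' := mul_one _
      obtain ⟨_, hC3⟩ := hT' t (le_trans ht1T' ht)
      have hρx : |ρR t - ρ0| ≤ r := by
        have htri : |ρR t - ρ0| ≤ |ρR t - ϱ2 t| + |ϱ2 t - ρ0| := by
          calc |ρR t - ρ0| = |(ρR t - ϱ2 t) + (ϱ2 t - ρ0)| := by ring_nf
            _ ≤ |ρR t - ϱ2 t| + |ϱ2 t - ρ0| := abs_add_le _ _
        linarith
      have hρlo : |ρ0| / 2 ≤ |ρR t| := by
        have h1 := abs_sub_abs_le_abs_sub ρ0 (ρR t)
        rw [abs_sub_comm] at h1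
        linarith
      have hρle : |ρR t| ≤ ρstar := by
        have h1 := abs_sub_abs_le_abs_sub (ρR t) ρ0
        linarith
      exact ⟨hξhi, hρx, hρlo, hρle⟩
    have hρlim : Tendsto ρR atTop (nhds ρ0) := by
      have hzero : Tendsto (fun t : ℝ => ρR t - ρ0) atTop (nhds 0) := by
        apply squeeze_zero_norm' (a := fun t => ε' * t ^ (-ϰ) + |ϱ2 t - ρ0|)
        · filter_upwards [eventually_ge_atTop t1] with t ht
          have hf := hfacts t ht
          have htri : |ρR t - ρ0| ≤ |ρR t - ϱ2 t| + |ϱ2 t - ρ0| := by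
            calc |ρR t - ρ0| = |(ρR t - ϱ2 t) + (ϱ2 t - ρ0)| := by ring_nf
              _ ≤ |ρR t - ϱ2 t| + |ϱ2 t - ρ0| := abs_add_le _ _
          have := hf.1
          simp only [Real.norm_eq_abs]
          linarith
        · have h1 : Tendsto (fun t : ℝ => ε' * t ^ (-ϰ)) atTop (nhds 0) := by
            have := (tendsto_rpow_neg_atTop hk0).const_mul ε'
            rwa [mul_zero] at this
          have h2 := hϱ2lim.abs
          rw [abs_zero] at h2
          have := h1.add h2
          rwa [add_zero] at this
      have := hzero.add (tendsto_const_nhds (x := ρ0))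
      rw [zero_add] at this
      exact this.congr (fun t => by ring)
    have hωlim : Tendsto (fun t => ω (ρR t)) atTop (nhds (ω ρ0)) :=
      (hω.continuous.tendsto ρ0).comp hρlim
    have hΩlim : Tendsto (fun t => Ωt (ρR t) (φR t) t) atTop (nhds 0) := by
      apply squeeze_zero_norm'
        (a := fun t => C * (t ^ (-1/(q:ℝ)) + (|ρ0|/2)⁻¹ * t ^ (-(p:ℝ)/q)))
      · filter_upwards [eventually_ge_atTop t1] with t ht
        obtain ⟨_, _, hρlo, hρle⟩ := hfacts t ht
        have hρpos : 0 < |ρR t| := by linarith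
        have hb := hΩtb (ρR t) (φR t) t hρpos hρle (le_trans ht1ts ht)
        have hinv : |ρR t|⁻¹ ≤ (|ρ0|/2)⁻¹ := by
          apply inv_anti₀ (by linarith) hρlo
        have htpos : (0:ℝ) < t := lt_of_lt_of_le ht1pos ht
        have hrp : (0:ℝ) ≤ t ^ (-(p:ℝ)/q) := (Real.rpow_pos_of_pos htpos _).le
        simp only [Real.norm_eq_abs]
        calc |Ωt (ρR t) (φR t) t|
            ≤ C * (t ^ (-1/(q:ℝ)) + |ρR t|⁻¹ * t ^ (-(p:ℝ)/q)) := hb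
          _ ≤ C * (t ^ (-1/(q:ℝ)) + (|ρ0|/2)⁻¹ * t ^ (-(p:ℝ)/q)) := by
              apply mul_le_mul_of_nonneg_left _ hC.le
              have := mul_le_mul_of_nonneg_right hinv hrp
              linarith
      · have h1 : Tendsto (fun t : ℝ => t ^ (-1/(q:ℝ))) atTop (nhds 0) := by
          have := tendsto_rpow_neg_atTop (y := 1/(q:ℝ)) (by positivity)
          exact this.congr (fun x => by rw [neg_div])
        have h2 : Tendsto (fun t : ℝ => t ^ (-(p:ℝ)/q)) atTop (nhds 0) := by
          have := tendsto_rpow_neg_atTop (y := (p:ℝ)/(q:ℝ)) (by positivity)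
          exact this.congr (fun x => by rw [neg_div])
        have := ((h1.add (h2.const_mul (|ρ0|/2)⁻¹)).const_mul C)
        simpa using this
    have hglim : Tendsto (fun t => ω (ρR t) + Ωt (ρR t) (φR t) t) atTop (nhds (ω ρ0)) := by
      have := hωlim.add hΩlim
      rwa [add_zero] at this
    exact cesaro_deriv (fun t ht => (sol t ht).2) hglim
end

section
/- Assume n = p ≤ q and Λ_p(ρ) ≠ 0 for all |ρ| ≤ ρ*. Then there exist ε ∈ (0, ρ*) and t1 ≥ t* such that for every δ0 > 0 and every t_s ≥ t1, every continuously differentiable solution (ρ(t), φ(t)) of the perturbed system with |ρ(t_s)| ≤ δ0 that is defined for all t ≥ t_s with values |ρ(t)| ≤ ρ* satisfies |ρ(t_e)| ≥ ε for some t_e > t_s. -/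
open Filter Real Set Asymptotics

/-- Growth lemma: if `ρ' ≥ m/t` on `[ts, ∞)` then `ρ` grows at least logarithmically. -/
lemma grow_aux (m ts T : ℝ) (hts : 0 < ts) (hT : ts ≤ T) (ρ f : ℝ → ℝ)
    (hd : ∀ t, ts ≤ t → HasDerivAt ρ (f t) t)
    (hf : ∀ t, ts ≤ t → m / t ≤ f t) :
    ρ ts + m * (Real.log T - Real.log ts) ≤ ρ T := by
  have hg : ∀ t, ts ≤ t → HasDerivAt (fun t => ρ t - m * Real.log t) (f t - m * t⁻¹) t := by
    intro t ht
    exact (hd t ht).sub ((Real.hasDerivAt_log (ne_of_gt (lt_of_lt_of_le hts ht))).const_mul m)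
  have hmono : MonotoneOn (fun t => ρ t - m * Real.log t) (Set.Ici ts) := by
    apply monotoneOn_of_deriv_nonneg (convex_Ici ts)
    · intro t ht
      exact ((hg t ht).differentiableAt.continuousAt).continuousWithinAt
    · intro t ht
      rw [interior_Ici] at ht
      exact (hg t (le_of_lt ht)).differentiableAt.differentiableWithinAt
    · intro t ht
      rw [interior_Ici] at ht
      rw [(hg t (le_of_lt ht)).deriv]
      have h1 := hf t (le_of_lt ht)
      have ht0 : 0 < t := lt_of_le_of_lt hts.le ht
      rw [div_eq_mul_inv] at h1
      nlinarith [inv_pos.mpr ht0]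
  have := hmono (Set.self_mem_Ici) (Set.mem_Ici.mpr hT) hT
  simp only at this
  linarith

/-- Escape lemma: logarithmic growth forces exit. -/
lemma escape_aux (m ts ε ρs : ℝ) (hm : 0 < m) (hts : 0 < ts) (hε : 0 ≤ ε) (hρs : 0 ≤ ρs)
    (ρ f : ℝ → ℝ)
    (hd : ∀ t, ts ≤ t → HasDerivAt ρ (f t) t)
    (hf : ∀ t, ts ≤ t → m / t ≤ f t)
    (h0 : -ρs ≤ ρ ts) :
    ∃ T, ts < T ∧ ε ≤ ρ T := by
  set x := (ρs + ε + 1) / m with hx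
  have hxpos : 0 < x := by positivity
  set T := ts * Real.exp x with hTdef
  have hexp : 1 < Real.exp x := by
    have := Real.add_one_le_exp x; linarith
  have hTgt : ts < T := by
    rw [hTdef]; nlinarith
  have hgrow := grow_aux m ts T hts hTgt.le ρ f hd hf
  have hlog : Real.log T = Real.log ts + x := by
    rw [hTdef, Real.log_mul (ne_of_gt hts) (Real.exp_ne_zero _), Real.log_exp]
  have hmx : m * x = ρs + ε + 1 := by
    rw [hx]; field_simp
  refine ⟨T, hTgt, ?_⟩
  rw [hlog] at hgrow
  have : m * (Real.log ts + x - Real.log ts) = m * x := by ring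
  rw [this, hmx] at hgrow
  linarith

set_option maxHeartbeats 1600000 in
/-- Case `(n,p) ∈ Q₂` with `Λ_p` nonvanishing: solutions of the perturbed system leave
the neighbourhood of the equilibrium. -/
theorem stmt_12 (q n p N : ℕ) (hq : 0 < q) (hn : 0 < n)
    (hnp : n ≤ p) (hpN : p ≤ N) (hN2p : N < 2 * p)
    (rstar tstar : ℝ) (hrstar : 0 < rstar) (htstar : 0 < tstar)
    (ω : ℝ → ℝ) (hω : ContDiff ℝ (⊤ : ℕ∞) ω)
    (hωpos : ∀ ρ : ℝ, |ρ| ≤ rstar → 0 < ω ρ)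
    (Λ : ℕ → ℝ → ℝ) (hΛ : ∀ k, ContDiff ℝ (⊤ : ℕ∞) (Λ k))
    (μp : ℝ) (hμp : μp ≠ 0)
    (hΛsmall : ∀ k, k < p → (Λ k) =O[nhds (0:ℝ)] (fun ρ => ρ))
    (hΛp : (fun ρ => Λ p ρ - μp) =O[nhds (0:ℝ)] (fun ρ => ρ))
    (ΛN : ℝ → ℝ → ℝ)
    (hΛN : ∀ ρ t : ℝ, ΛN ρ t = ∑ k ∈ Finset.Icc n N, t ^ (-(k : ℝ) / q) * Λ k ρ)
    -- the perturbations
    (ρstar C : ℝ) (hρstar : 0 < ρstar) (hρr : ρstar ≤ rstar) (hC : 0 < C)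
    (Λt Ωt : ℝ → ℝ → ℝ → ℝ)
    (hΛtc : ContinuousOn (fun x : ℝ × ℝ × ℝ => Λt x.1 x.2.1 x.2.2)
      {x : ℝ × ℝ × ℝ | |x.1| ≤ ρstar ∧ tstar ≤ x.2.2})
    (hΩtc : ContinuousOn (fun x : ℝ × ℝ × ℝ => Ωt x.1 x.2.1 x.2.2)
      {x : ℝ × ℝ × ℝ | |x.1| ≤ ρstar ∧ tstar ≤ x.2.2})
    (hΛtper : ∀ ρ φ t : ℝ, Λt ρ (φ + 2 * π) t = Λt ρ φ t)
    (hΩtper : ∀ ρ φ t : ℝ, Ωt ρ (φ + 2 * π) t = Ωt ρ φ t)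
    (hΛtb : ∀ ρ φ t : ℝ, 0 < |ρ| → |ρ| ≤ ρstar → tstar ≤ t →
      |Λt ρ φ t| ≤ C * t ^ (-((N : ℝ) + 1) / q))
    (hΩtb : ∀ ρ φ t : ℝ, 0 < |ρ| → |ρ| ≤ ρstar → tstar ≤ t →
      |Ωt ρ φ t| ≤ C * (t ^ (-1 / (q : ℝ)) + |ρ|⁻¹ * t ^ (-(p : ℝ) / q)))
    -- hypotheses of the theorem: n = p ≤ q and Λ_p does not vanish on [-ρ*, ρ*]
    (hneqp : n = p) (hpq : p ≤ q)
    (hΛpne : ∀ ρ : ℝ, |ρ| ≤ ρstar → Λ p ρ ≠ 0) :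
    ∃ ε t1 : ℝ, 0 < ε ∧ ε < ρstar ∧ tstar ≤ t1 ∧
      ∀ δ0 : ℝ, 0 < δ0 →
        ∀ ts : ℝ, t1 ≤ ts →
          ∀ ρ φ : ℝ → ℝ,
            (∀ t : ℝ, ts ≤ t →
              HasDerivAt ρ (ΛN (ρ t) t + Λt (ρ t) (φ t) t) t ∧
              HasDerivAt φ (ω (ρ t) + Ωt (ρ t) (φ t) t) t ∧
              |ρ t| ≤ ρstar) →
            |ρ ts| ≤ δ0 →
            ∃ te : ℝ, ts < te ∧ ε ≤ |ρ te| := by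
  have hq' : (0:ℝ) < q := by exact_mod_cast hq
  have hcont : Continuous (Λ p) := (hΛ p).continuous
  -- the sign of Λ p is constant on [-ρstar, ρstar]
  have hsign : (∀ r : ℝ, |r| ≤ ρstar → 0 < Λ p r) ∨ (∀ r : ℝ, |r| ≤ ρstar → Λ p r < 0) := by
    by_contra h
    push_neg at h
    obtain ⟨⟨a, ha, ha'⟩, b, hb, hb'⟩ := h
    have ha2 : Λ p a < 0 := lt_of_le_of_ne ha' (hΛpne a ha)
    have hb2 : 0 < Λ p b := lt_of_le_of_ne hb' (Ne.symm (hΛpne b hb))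
    have h0 : (0:ℝ) ∈ Set.uIcc (Λ p a) (Λ p b) :=
      Set.mem_uIcc.mpr (Or.inl ⟨ha2.le, hb2.le⟩)
    obtain ⟨c, hc, hc0⟩ := intermediate_value_uIcc (hcont.continuousOn) h0
    have hcρ : |c| ≤ ρstar := by
      rw [Set.mem_uIcc] at hc
      rw [abs_le] at ha hb ⊢
      rcases hc with ⟨h1, h2⟩ | ⟨h1, h2⟩ <;> constructor <;> linarith
    exact hΛpne c hcρ hc0
  -- minimum of |Λ p| on the compact interval
  obtain ⟨x0, hx0, hx0min⟩ := (isCompact_Icc : IsCompact (Set.Icc (-ρstar) ρstar)).exists_isMinOn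
    (f := fun r => |Λ p r|) ⟨0, Set.mem_Icc.mpr ⟨by linarith, hρstar.le⟩⟩
    (hcont.abs.continuousOn)
  set m : ℝ := |Λ p x0| with hm_def
  have hm : 0 < m := abs_pos.mpr (hΛpne x0 (abs_le.mpr ⟨hx0.1, hx0.2⟩))
  have hmmin : ∀ r : ℝ, |r| ≤ ρstar → m ≤ |Λ p r| := by
    intro r hr
    exact hx0min (Set.mem_Icc.mpr (abs_le.mp hr))
  -- maximum of the tail sum on the compact interval
  set S : ℝ → ℝ := fun r => ∑ k ∈ Finset.Ioc p N, |Λ k r| with hS_def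
  have hScont : Continuous S := continuous_finset_sum _ (fun k _ => (hΛ k).continuous.abs)
  obtain ⟨x1, hx1, hx1max⟩ := (isCompact_Icc : IsCompact (Set.Icc (-ρstar) ρstar)).exists_isMaxOn
    (f := S) ⟨0, Set.mem_Icc.mpr ⟨by linarith, hρstar.le⟩⟩ hScont.continuousOn
  set M : ℝ := S x1 with hM_def
  have hM0 : 0 ≤ M := Finset.sum_nonneg (fun k _ => abs_nonneg _)
  have hMmax : ∀ r : ℝ, |r| ≤ ρstar → S r ≤ M := by
    intro r hr
    exact hx1max (Set.mem_Icc.mpr (abs_le.mp hr))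
  have hMC : 0 < M + C := by linarith
  -- choice of t1
  set B : ℝ := 2 * (M + C) / m with hB_def
  have hB : 0 < B := by positivity
  set t1 : ℝ := max (max tstar 1) (B ^ q) with ht1_def
  have ht1ts : tstar ≤ t1 := le_trans (le_max_left _ _) (le_max_left _ _)
  have ht11 : (1:ℝ) ≤ t1 := le_trans (le_max_right _ _) (le_max_left _ _)
  have ht1B : B ^ q ≤ t1 := le_max_right _ _
  -- extension of the perturbation bound to ρ = 0
  have hΛtb' : ∀ r φ' t : ℝ, |r| ≤ ρstar → tstar ≤ t →
      |Λt r φ' t| ≤ C * t ^ (-((N : ℝ) + 1) / q) := by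
    intro r φ' t hr ht
    rcases eq_or_ne r 0 with rfl | hr0
    · have hmap : Set.MapsTo (fun x : ℝ => (x, φ', t)) (Set.Icc (-ρstar) ρstar)
          {x : ℝ × ℝ × ℝ | |x.1| ≤ ρstar ∧ tstar ≤ x.2.2} := by
        intro x hx
        exact ⟨abs_le.mpr ⟨hx.1, hx.2⟩, ht⟩
      have hg : ContinuousOn (fun x : ℝ => Λt x φ' t) (Set.Icc (-ρstar) ρstar) :=
        hΛtc.comp ((continuous_id.prodMk (continuous_const.prodMk
          continuous_const)).continuousOn) hmap
      have h0mem : (0:ℝ) ∈ Set.Icc (-ρstar) ρstar := by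
        constructor <;> simp [hρstar.le] <;> linarith
      have hsub : Set.Ioc (0:ℝ) ρstar ⊆ Set.Icc (-ρstar) ρstar := by
        intro x hx
        exact ⟨by linarith [hx.1], hx.2⟩
      have htend : Tendsto (fun x => |Λt x φ' t|) (nhdsWithin 0 (Set.Ioc (0:ℝ) ρstar))
          (nhds (|Λt 0 φ' t|)) :=
        (((hg 0 h0mem).mono hsub).tendsto).abs
      have hne : (nhdsWithin (0:ℝ) (Set.Ioc (0:ℝ) ρstar)).NeBot := by
        rw [nhdsWithin_Ioc_eq_nhdsGT hρstar]
        exact nhdsGT_neBot 0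
      refine le_of_tendsto htend ?_
      filter_upwards [self_mem_nhdsWithin] with x hx
      exact hΛtb x φ' t (abs_pos.mpr (ne_of_gt hx.1)) (by rw [abs_of_pos hx.1]; exact hx.2) ht
    · exact hΛtb r φ' t (abs_pos.mpr hr0) hr ht
  refine ⟨ρstar / 2, t1, by positivity, by linarith, ht1ts, ?_⟩
  intro δ0 hδ0 ts hts ρ φ hsol hδ
  have hts1 : (1:ℝ) ≤ ts := le_trans ht11 hts
  have hts0 : (0:ℝ) < ts := by linarith
  have htstarts : tstar ≤ ts := le_trans ht1ts hts
  -- key estimates at any t ≥ ts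
  have hkey : ∀ t : ℝ, ts ≤ t → ∀ r : ℝ, |r| ≤ ρstar →
      |ΛN r t - t ^ (-(p:ℝ)/q) * Λ p r| ≤ t ^ (-(p:ℝ)/q) * t ^ (-1/(q:ℝ)) * M ∧
      (M + C) * t ^ (-1/(q:ℝ)) ≤ m / 2 ∧
      t⁻¹ ≤ t ^ (-(p:ℝ)/q) ∧
      C * t ^ (-((N:ℝ)+1)/q) ≤ C * (t ^ (-(p:ℝ)/q) * t ^ (-1/(q:ℝ))) := by
    intro t ht r hr
    have ht1t : (1:ℝ) ≤ t := le_trans hts1 ht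
    have ht0 : (0:ℝ) < t := by linarith
    have hBt : B ^ q ≤ t := by
      calc B ^ q ≤ t1 := ht1B
        _ ≤ ts := hts
        _ ≤ t := ht
    have esum : ΛN r t = t ^ (-(p:ℝ)/q) * Λ p r
        + ∑ k ∈ Finset.Ioc p N, t ^ (-(k:ℝ)/q) * Λ k r := by
      rw [hΛN, hneqp, Finset.Icc_eq_cons_Ioc hpN, Finset.sum_cons]
    have epq : t ^ (-((p:ℝ)+1)/q) = t ^ (-(p:ℝ)/q) * t ^ (-1/(q:ℝ)) := by
      rw [← Real.rpow_add ht0]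
      congr 1
      ring
    refine ⟨?_, ?_, ?_, ?_⟩
    · rw [esum]
      have hterm : ∀ k ∈ Finset.Ioc p N,
          |t ^ (-(k:ℝ)/q) * Λ k r| ≤ t ^ (-((p:ℝ)+1)/q) * |Λ k r| := by
        intro k hk
        obtain ⟨hk1, _⟩ := Finset.mem_Ioc.mp hk
        have hk1' : (p:ℝ) + 1 ≤ k := by exact_mod_cast hk1
        rw [abs_mul, abs_of_nonneg (Real.rpow_nonneg ht0.le _)]
        refine mul_le_mul_of_nonneg_right ?_ (abs_nonneg _)
        apply Real.rpow_le_rpow_of_exponent_le ht1t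
        rw [div_le_div_iff₀ hq' hq']
        nlinarith
      calc |t ^ (-(p:ℝ)/q) * Λ p r + (∑ k ∈ Finset.Ioc p N, t ^ (-(k:ℝ)/q) * Λ k r)
              - t ^ (-(p:ℝ)/q) * Λ p r|
          = |∑ k ∈ Finset.Ioc p N, t ^ (-(k:ℝ)/q) * Λ k r| := by rw [add_sub_cancel_left]
        _ ≤ ∑ k ∈ Finset.Ioc p N, |t ^ (-(k:ℝ)/q) * Λ k r| := Finset.abs_sum_le_sum_abs _ _
        _ ≤ ∑ k ∈ Finset.Ioc p N, t ^ (-((p:ℝ)+1)/q) * |Λ k r| := Finset.sum_le_sum hterm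
        _ = t ^ (-((p:ℝ)+1)/q) * S r := by rw [Finset.mul_sum]
        _ ≤ t ^ (-((p:ℝ)+1)/q) * M :=
            mul_le_mul_of_nonneg_left (hMmax r hr) (Real.rpow_nonneg ht0.le _)
        _ = t ^ (-(p:ℝ)/q) * t ^ (-1/(q:ℝ)) * M := by rw [epq]
    · have h1 : B ≤ t ^ ((1:ℝ)/q) := by
        have h2 : (B ^ q : ℝ) ^ ((1:ℝ)/q) ≤ t ^ ((1:ℝ)/q) :=
          Real.rpow_le_rpow (by positivity) hBt (by positivity)
        rwa [← Real.rpow_natCast B q, ← Real.rpow_mul hB.le, mul_one_div,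
          div_self (by exact_mod_cast hq.ne' : (q:ℝ) ≠ 0), Real.rpow_one] at h2
      have hiq : t ^ (-1/(q:ℝ)) = (t ^ ((1:ℝ)/q))⁻¹ := by
        rw [← Real.rpow_neg ht0.le]
        congr 1
        ring
      have hinv : (t ^ ((1:ℝ)/q))⁻¹ ≤ B⁻¹ := inv_anti₀ hB h1
      have hBinv : B⁻¹ = m / (2 * (M + C)) := by
        rw [hB_def, inv_div]
      calc (M + C) * t ^ (-1/(q:ℝ)) ≤ (M + C) * B⁻¹ := by
            rw [hiq]; exact mul_le_mul_of_nonneg_left hinv hMC.le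
        _ = m / 2 := by rw [hBinv]; field_simp
    · have : t ^ (-1:ℝ) ≤ t ^ (-(p:ℝ)/q) := by
        apply Real.rpow_le_rpow_of_exponent_le ht1t
        rw [le_div_iff₀ hq']
        have hpq' : (p:ℝ) ≤ q := by exact_mod_cast hpq
        linarith
      rwa [Real.rpow_neg_one] at this
    · rw [← epq]
      refine mul_le_mul_of_nonneg_left ?_ hC.le
      apply Real.rpow_le_rpow_of_exponent_le ht1t
      rw [div_le_div_iff₀ hq' hq']
      have hpN' : (p:ℝ) ≤ N := by exact_mod_cast hpN
      nlinarith
  obtain ⟨_, _, hρb_ts⟩ := hsol ts le_rfl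
  have hρts := abs_le.mp hρb_ts
  rcases hsign with hpos | hneg
  · -- Λ p > 0 : ρ increases
    have hlow : ∀ t, ts ≤ t → (m/2) / t ≤ ΛN (ρ t) t + Λt (ρ t) (φ t) t := by
      intro t ht
      obtain ⟨_, _, hρb⟩ := hsol t ht
      have ht0 : (0:ℝ) < t := by linarith
      obtain ⟨hA, hB2, hC2, hD2⟩ := hkey t ht (ρ t) hρb
      set a := t ^ (-(p:ℝ)/q) with ha_def
      set x := t ^ (-1/(q:ℝ)) with hx_def
      have ha0 : 0 ≤ a := Real.rpow_nonneg ht0.le _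
      have hpert := hΛtb' (ρ t) (φ t) t hρb (le_trans htstarts ht)
      have hpert' := abs_le.mp hpert
      have hΛpr : m ≤ Λ p (ρ t) := by
        have h1 := hmmin (ρ t) hρb
        rwa [abs_of_pos (hpos (ρ t) hρb)] at h1
      have hA' := abs_le.mp hA
      have h6 : a * ((M + C) * x) ≤ a * (m/2) := mul_le_mul_of_nonneg_left hB2 ha0
      have h7 : t⁻¹ * (m/2) ≤ a * (m/2) :=
        mul_le_mul_of_nonneg_right hC2 (by positivity)
      have h8 : a * m ≤ a * Λ p (ρ t) := mul_le_mul_of_nonneg_left hΛpr ha0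
      have h9 : (m/2)/t = t⁻¹ * (m/2) := by rw [div_eq_mul_inv, mul_comm]
      have hid : a * x * M + C * (a * x) = a * ((M + C) * x) := by ring
      rw [h9]
      linarith
    obtain ⟨T, hT, hε⟩ := escape_aux (m/2) ts (ρstar/2) ρstar (by positivity) hts0
      (by positivity) hρstar.le ρ _ (fun t ht => (hsol t ht).1) hlow hρts.1
    exact ⟨T, hT, le_trans hε (le_abs_self _)⟩
  · -- Λ p < 0 : ρ decreases
    have hlow : ∀ t, ts ≤ t → (m/2) / t ≤ -(ΛN (ρ t) t + Λt (ρ t) (φ t) t) := by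
      intro t ht
      obtain ⟨_, _, hρb⟩ := hsol t ht
      have ht0 : (0:ℝ) < t := by linarith
      obtain ⟨hA, hB2, hC2, hD2⟩ := hkey t ht (ρ t) hρb
      set a := t ^ (-(p:ℝ)/q) with ha_def
      set x := t ^ (-1/(q:ℝ)) with hx_def
      have ha0 : 0 ≤ a := Real.rpow_nonneg ht0.le _
      have hpert := hΛtb' (ρ t) (φ t) t hρb (le_trans htstarts ht)
      have hpert' := abs_le.mp hpert
      have hΛpr : Λ p (ρ t) ≤ -m := by
        have h1 := hmmin (ρ t) hρb
        rw [abs_of_neg (hneg (ρ t) hρb)] at h1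
        linarith
      have hA' := abs_le.mp hA
      have h6 : a * ((M + C) * x) ≤ a * (m/2) := mul_le_mul_of_nonneg_left hB2 ha0
      have h7 : t⁻¹ * (m/2) ≤ a * (m/2) :=
        mul_le_mul_of_nonneg_right hC2 (by positivity)
      have h8 : a * m ≤ a * (-(Λ p (ρ t))) := mul_le_mul_of_nonneg_left (by linarith) ha0
      have h9 : (m/2)/t = t⁻¹ * (m/2) := by rw [div_eq_mul_inv, mul_comm]
      have hid : a * x * M + C * (a * x) = a * ((M + C) * x) := by ring
      have h10 : a * (-(Λ p (ρ t))) = -(a * Λ p (ρ t)) := by ring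
      rw [h9]
      linarith
    obtain ⟨T, hT, hε⟩ := escape_aux (m/2) ts (ρstar/2) ρstar (by positivity) hts0
      (by positivity) hρstar.le (fun t => -(ρ t)) _
      (fun t ht => ((hsol t ht).1).neg) hlow (by linarith [hρts.2])
    exact ⟨T, hT, le_trans hε (neg_le_abs _)⟩
end

section
/- Assume q < n ≤ p, and let ρ0 ∈ ℝ satisfy 0 < |ρ0| < r*, Λ_n(ρ0) ≠ 0 and Λ_n′(ρ0) < 0. Let ϱ3 : [t0, ∞) → ℝ be a solution of dϱ/dt = Λ_N(ϱ, t) with ϱ3(t) = ρ0 + O(t^{−(n−q)/q}) as t → ∞. Then ϱ3 is (Lyapunov) stable: there exists t1 ≥ t0 such that for every ε > 0 there exists δ > 0 such that every solution ϱ of dϱ/dt = Λ_N(ϱ, t) with |ϱ(t1) − ϱ3(t1)| ≤ δ satisfies |ϱ(t) − ϱ3(t)| ≤ ε for all t ≥ t1. -/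
open Filter Real Set Asymptotics

set_option maxHeartbeats 1000000 in
/-- Case `(n,p) ∈ Q₃` (`q < n ≤ p`): the solution `ϱ₃(t) → ρ₀` of the truncated
equation is (Lyapunov) stable. -/
theorem stmt_14 (q n p N : ℕ) (hq : 0 < q) (hn : 0 < n)
    (hnp : n ≤ p) (hpN : p ≤ N) (hN2p : N < 2 * p)
    (rstar tstar : ℝ) (hrstar : 0 < rstar) (htstar : 0 < tstar)
    (ω : ℝ → ℝ) (hω : ContDiff ℝ (⊤ : ℕ∞) ω)
    (hωpos : ∀ ρ : ℝ, |ρ| ≤ rstar → 0 < ω ρ)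
    (Λ : ℕ → ℝ → ℝ) (hΛ : ∀ k, ContDiff ℝ (⊤ : ℕ∞) (Λ k))
    (μp : ℝ) (hμp : μp ≠ 0)
    (hΛsmall : ∀ k, k < p → (Λ k) =O[nhds (0:ℝ)] (fun ρ => ρ))
    (hΛp : (fun ρ => Λ p ρ - μp) =O[nhds (0:ℝ)] (fun ρ => ρ))
    (ΛN : ℝ → ℝ → ℝ)
    (hΛN : ∀ ρ t : ℝ, ΛN ρ t = ∑ k ∈ Finset.Icc n N, t ^ (-(k : ℝ) / q) * Λ k ρ)
    -- hypotheses of the lemma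
    (hqn : q < n)
    (ρ0 : ℝ) (hρ00 : 0 < |ρ0|) (hρ0r : |ρ0| < rstar)
    (hΛnρ0 : Λ n ρ0 ≠ 0) (hΛn' : deriv (Λ n) ρ0 < 0)
    -- the solution ϱ₃ with ϱ₃(t) = ρ₀ + O(t^{-(n-q)/q})
    (t0 : ℝ) (ht0 : tstar ≤ t0)
    (ϱ3 : ℝ → ℝ)
    (hϱ3sol : ∀ t : ℝ, t0 ≤ t → HasDerivAt ϱ3 (ΛN (ϱ3 t) t) t)
    (hϱ3asym : (fun t : ℝ => ϱ3 t - ρ0)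
      =O[atTop] (fun t : ℝ => t ^ (-(((n : ℝ) - q)) / q))) :
    ∃ t1 : ℝ, t0 ≤ t1 ∧
      ∀ ε : ℝ, 0 < ε →
        ∃ δ : ℝ, 0 < δ ∧
          ∀ ϱ : ℝ → ℝ,
            (∀ t : ℝ, t1 ≤ t → HasDerivAt ϱ (ΛN (ϱ t) t) t) →
            |ϱ t1 - ϱ3 t1| ≤ δ →
            ∀ t : ℝ, t1 ≤ t → |ϱ t - ϱ3 t| ≤ ε := by
  classical
  have hqR : (0:ℝ) < q := by exact_mod_cast hq
  set c : ℝ := -deriv (Λ n) ρ0 / 2 with hcdef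
  have hcpos : 0 < c := by rw [hcdef]; linarith
  have hderivcont : ∀ k, Continuous (deriv (Λ k)) := fun k => (hΛ k).continuous_deriv (by simp)
  -- choice of ε0 such that deriv (Λ n) ≤ -c on the 2ε0-neighbourhood of ρ0
  obtain ⟨r, hrpos, hrball⟩ := Metric.isOpen_iff.mp
    (isOpen_lt (hderivcont n) continuous_const) ρ0
    (show deriv (Λ n) ρ0 < -c by rw [hcdef]; linarith)
  set ε0 : ℝ := r/3 with hε0def
  have hε0pos : 0 < ε0 := by positivity
  have hJd : ∀ x : ℝ, |x - ρ0| ≤ 2*ε0 → deriv (Λ n) x ≤ -c := by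
    intro x hx
    have hxm : x ∈ Metric.ball ρ0 r := by
      rw [Metric.mem_ball, Real.dist_eq]
      rw [hε0def] at hx; linarith
    exact le_of_lt (hrball hxm)
  set J : Set ℝ := Icc (ρ0 - 2*ε0) (ρ0 + 2*ε0) with hJdef
  have hJmem : ∀ x : ℝ, |x - ρ0| ≤ 2*ε0 → x ∈ J := by
    intro x hx
    obtain ⟨h1, h2⟩ := abs_le.mp hx
    exact ⟨by linarith, by linarith⟩
  have hJabs : ∀ x ∈ J, |x - ρ0| ≤ 2*ε0 := by
    intro x hx
    obtain ⟨h1, h2⟩ := hx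
    exact abs_le.mpr ⟨by linarith, by linarith⟩
  -- the bound M on the derivatives on J
  set F : ℝ → ℝ := fun x => ∑ k ∈ Finset.Icc n N, |deriv (Λ k) x| with hFdef
  have hFcont : Continuous F := by
    apply continuous_finset_sum
    exact fun k _ => (hderivcont k).abs
  obtain ⟨x0, hx0J, hx0⟩ := isCompact_Icc.exists_isMaxOn
    (⟨ρ0, hJmem ρ0 (by simp; positivity)⟩ : (Icc (ρ0 - 2*ε0) (ρ0 + 2*ε0)).Nonempty)
    hFcont.continuousOn
  set M : ℝ := F x0 + 1 with hMdef
  have hFnonneg : ∀ x : ℝ, 0 ≤ F x := fun x => Finset.sum_nonneg fun k _ => abs_nonneg _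
  have hFM : ∀ x ∈ J, F x ≤ M := fun x hx => by
    have h : F x ≤ F x0 := hx0 hx
    rw [hMdef]; linarith
  have hMpos : 0 < M := by have := hFnonneg x0; rw [hMdef]; linarith
  -- asymptotics: ϱ3 t → ρ0
  have hexp : 0 < (((n:ℝ) - q) / q) := by
    apply div_pos _ hqR
    have : (q:ℝ) < n := by exact_mod_cast hqn
    linarith
  have htend : Tendsto (fun t : ℝ => ϱ3 t - ρ0) atTop (nhds 0) :=
    hϱ3asym.trans_tendsto (by
      simp only [neg_div]
      exact tendsto_rpow_neg_atTop hexp)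
  obtain ⟨T, hT⟩ := eventually_atTop.mp
    (Metric.tendsto_nhds.mp htend (ε0/2) (by positivity))
  have hT' : ∀ s : ℝ, T ≤ s → |ϱ3 s - ρ0| ≤ ε0/2 := by
    intro s hs
    have := hT s hs
    rw [Real.dist_eq, sub_zero] at this
    exact this.le
  -- choice of t1
  set t1 : ℝ := max (max t0 1) (max ((M/c)^q) T) with ht1def
  have ht1t0 : t0 ≤ t1 := le_trans (le_max_left _ _) (le_max_left _ _)
  have ht11 : (1:ℝ) ≤ t1 := le_trans (le_max_right t0 1) (le_max_left _ _)
  have ht1M : (M/c)^q ≤ t1 := le_trans (le_max_left _ _) (le_max_right _ _)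
  have ht1T : T ≤ t1 := le_trans (le_max_right _ _) (le_max_right _ _)
  refine ⟨t1, ht1t0, ?_⟩
  -- derivative of ρ ↦ ΛN ρ t
  have hfd : ∀ (t x : ℝ), HasDerivAt (fun ρ => ΛN ρ t)
      (∑ k ∈ Finset.Icc n N, t ^ (-(k:ℝ)/q) * deriv (Λ k) x) x := by
    intro t x
    have heq : (fun ρ => ΛN ρ t)
        = fun ρ => ∑ k ∈ Finset.Icc n N, t ^ (-(k:ℝ)/q) * Λ k ρ := by
      funext ρ; exact hΛN ρ t
    rw [heq]
    exact HasDerivAt.fun_sum fun k _ =>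
      (((hΛ k).differentiable (by simp) x).hasDerivAt).const_mul _
  -- nonpositivity of this derivative on J for t ≥ t1
  have hDt : ∀ t : ℝ, t1 ≤ t → ∀ x ∈ J,
      (∑ k ∈ Finset.Icc n N, t ^ (-(k:ℝ)/q) * deriv (Λ k) x) ≤ 0 := by
    intro t ht x hx
    have ht1' : (1:ℝ) ≤ t := le_trans ht11 ht
    have htpos : (0:ℝ) < t := lt_of_lt_of_le one_pos ht1'
    have hnN : n ∈ Finset.Icc n N := Finset.mem_Icc.mpr ⟨le_refl n, le_trans hnp hpN⟩
    -- t^{-1/q} * M ≤ c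
    have hb : M / c ≤ t ^ ((1:ℝ)/q) := by
      have h0 : (0:ℝ) ≤ M / c := by positivity
      have h1 : (((M/c)^q : ℝ)) ^ ((1:ℝ)/q) ≤ t ^ ((1:ℝ)/q) :=
        Real.rpow_le_rpow (by positivity) (le_trans ht1M ht) (by positivity)
      calc M/c = ((M/c)^q) ^ ((1:ℝ)/q) := by
            rw [← Real.rpow_natCast (M/c) q, ← Real.rpow_mul h0]
            rw [mul_one_div, div_self (by exact_mod_cast hq.ne' : (q:ℝ) ≠ 0), Real.rpow_one]
        _ ≤ _ := h1
    have htq : t ^ (-(1:ℝ)/q) * M ≤ c := by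
      have hp1 : 0 < t ^ ((1:ℝ)/q) := Real.rpow_pos_of_pos htpos _
      have hrw : t ^ (-(1:ℝ)/q) = (t ^ ((1:ℝ)/q))⁻¹ := by
        rw [neg_div, Real.rpow_neg htpos.le]
      rw [hrw, inv_mul_le_iff₀ hp1]
      have h2 : (M/c)*c ≤ t ^ ((1:ℝ)/q) * c := mul_le_mul_of_nonneg_right hb hcpos.le
      have h3 : (M/c)*c = M := by field_simp
      nlinarith [h2, h3]
    rw [← Finset.sum_erase_add _ _ hnN]
    have h1 : t ^ (-(n:ℝ)/q) * deriv (Λ n) x ≤ t ^ (-(n:ℝ)/q) * (-c) :=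
      mul_le_mul_of_nonneg_left (hJd x (hJabs x hx)) (Real.rpow_nonneg htpos.le _)
    have h2 : ∑ k ∈ (Finset.Icc n N).erase n, t ^ (-(k:ℝ)/q) * deriv (Λ k) x
        ≤ t ^ (-((n:ℝ)+1)/q) * M := by
      calc ∑ k ∈ (Finset.Icc n N).erase n, t ^ (-(k:ℝ)/q) * deriv (Λ k) x
          ≤ ∑ k ∈ (Finset.Icc n N).erase n, t ^ (-((n:ℝ)+1)/q) * |deriv (Λ k) x| := by
            apply Finset.sum_le_sum
            intro k hk
            have hk1 : n + 1 ≤ k := by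
              have hk2 := Finset.mem_of_mem_erase hk
              have hk3 : n ≤ k := (Finset.mem_Icc.mp hk2).1
              have hk4 : k ≠ n := Finset.ne_of_mem_erase hk
              omega
            have hexple : -(k:ℝ)/q ≤ -((n:ℝ)+1)/q := by
              have hcast : ((n:ℝ)+1) ≤ (k:ℝ) := by exact_mod_cast hk1
              exact (div_le_div_iff_of_pos_right hqR).mpr (by linarith)
            calc t ^ (-(k:ℝ)/q) * deriv (Λ k) x
                ≤ t ^ (-(k:ℝ)/q) * |deriv (Λ k) x| :=
                  mul_le_mul_of_nonneg_left (le_abs_self _) (Real.rpow_nonneg htpos.le _)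
              _ ≤ t ^ (-((n:ℝ)+1)/q) * |deriv (Λ k) x| :=
                  mul_le_mul_of_nonneg_right
                    (Real.rpow_le_rpow_of_exponent_le ht1' hexple) (abs_nonneg _)
        _ = t ^ (-((n:ℝ)+1)/q) * ∑ k ∈ (Finset.Icc n N).erase n, |deriv (Λ k) x| := by
            rw [Finset.mul_sum]
        _ ≤ t ^ (-((n:ℝ)+1)/q) * M := by
            apply mul_le_mul_of_nonneg_left _ (Real.rpow_nonneg htpos.le _)
            refine le_trans ?_ (hFM x hx)
            exact Finset.sum_le_sum_of_subset_of_nonneg (Finset.erase_subset _ _)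
              (fun k _ _ => abs_nonneg _)
    have hsplit : t ^ (-((n:ℝ)+1)/q) = t ^ (-(n:ℝ)/q) * t ^ (-(1:ℝ)/q) := by
      rw [← Real.rpow_add htpos]; ring_nf
    have hpos : 0 < t ^ (-(n:ℝ)/q) := Real.rpow_pos_of_pos htpos _
    have := add_le_add h2 h1
    rw [hsplit] at this
    nlinarith [this, htq, hpos]
  -- antitonicity of ρ ↦ ΛN ρ t on J for t ≥ t1
  have hanti : ∀ t : ℝ, t1 ≤ t → AntitoneOn (fun ρ => ΛN ρ t) J := by
    intro t ht
    apply antitoneOn_of_deriv_nonpos (convex_Icc _ _)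
    · exact fun x _ => (hfd t x).continuousAt.continuousWithinAt
    · exact fun x _ => ((hfd t x).differentiableAt).differentiableWithinAt
    · intro x hx
      rw [(hfd t x).deriv]
      exact hDt t ht x (interior_subset hx)
  -- stability
  intro ε hε
  set ε' : ℝ := min ε ε0 with hε'def
  have hε'pos : 0 < ε' := lt_min hε hε0pos
  have hε'ε0 : ε' ≤ ε0 := min_le_right _ _
  refine ⟨ε'/2, by positivity, ?_⟩
  intro ϱ hϱ hinit
  -- the squared difference and its derivative
  have hg' : ∀ s : ℝ, t1 ≤ s → HasDerivAt (fun u => (ϱ u - ϱ3 u)^2)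
      (2*(ϱ s - ϱ3 s)*(ΛN (ϱ s) s - ΛN (ϱ3 s) s)) s := by
    intro s hs
    have hw : HasDerivAt (fun u => ϱ u - ϱ3 u) (ΛN (ϱ s) s - ΛN (ϱ3 s) s) s :=
      (hϱ s hs).sub (hϱ3sol s (le_trans ht1t0 hs))
    have := hw.fun_pow 2
    refine this.congr_deriv ?_
    push_cast
    ring
  have hgc : ContinuousOn (fun u => (ϱ u - ϱ3 u)^2) (Ici t1) :=
    fun s hs => (hg' s hs).continuousAt.continuousWithinAt
  -- the key sign condition
  have hwkey : ∀ s : ℝ, t1 ≤ s → (ϱ s - ϱ3 s)^2 ≤ ε'^2 →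
      2*(ϱ s - ϱ3 s)*(ΛN (ϱ s) s - ΛN (ϱ3 s) s) ≤ 0 := by
    intro s hs hws
    have hws' : |ϱ s - ϱ3 s| ≤ ε' := by
      nlinarith [abs_nonneg (ϱ s - ϱ3 s), sq_abs (ϱ s - ϱ3 s), hε'pos.le]
    have h3 : |ϱ3 s - ρ0| ≤ ε0/2 := hT' s (le_trans ht1T hs)
    have hmem3 : ϱ3 s ∈ J := hJmem _ (by linarith)
    have hmem : ϱ s ∈ J := by
      apply hJmem
      calc |ϱ s - ρ0| ≤ |ϱ s - ϱ3 s| + |ϱ3 s - ρ0| := abs_sub_le _ _ _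
        _ ≤ ε' + ε0/2 := add_le_add hws' h3
        _ ≤ 2*ε0 := by linarith
    rcases le_total (ϱ3 s) (ϱ s) with h | h
    · have hle := hanti s hs hmem3 hmem h
      have hw0 : 0 ≤ ϱ s - ϱ3 s := by linarith
      nlinarith
    · have hle := hanti s hs hmem hmem3 h
      have hw0 : ϱ s - ϱ3 s ≤ 0 := by linarith
      nlinarith
  have hg1 : (ϱ t1 - ϱ3 t1)^2 ≤ (ε'/2)^2 := by
    nlinarith [sq_abs (ϱ t1 - ϱ3 t1), hinit, abs_nonneg (ϱ t1 - ϱ3 t1), hε'pos.le]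
  -- invariance: the squared difference stays ≤ ε'^2
  have key : ∀ s : ℝ, t1 ≤ s → (ϱ s - ϱ3 s)^2 ≤ ε'^2 := by
    by_contra hcon
    push_neg at hcon
    obtain ⟨t2, ht2, hgt2⟩ := hcon
    set S : Set ℝ := {s | t1 ≤ s ∧ ε'^2 ≤ (ϱ s - ϱ3 s)^2} with hS
    have hSne : S.Nonempty := ⟨t2, ht2, hgt2.le⟩
    have hSbd : BddBelow S := ⟨t1, fun s hs => hs.1⟩
    have hSclosed : IsClosed S := by
      have hSeq : S = Ici t1 ∩ (fun u => (ϱ u - ϱ3 u)^2) ⁻¹' (Ici (ε'^2)) := by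
        ext s
        simp only [hS, mem_setOf_eq, mem_inter_iff, mem_Ici, mem_preimage]
      rw [hSeq]
      exact hgc.preimage_isClosed_of_isClosed isClosed_Ici isClosed_Ici
    set τ : ℝ := sInf S with hτdef
    have hτS : τ ∈ S := hSclosed.csInf_mem hSne hSbd
    have hτ1 : t1 < τ := by
      rcases lt_or_eq_of_le hτS.1 with h | h
      · exact h
      · exfalso
        have h2 := hτS.2
        rw [← h] at h2
        nlinarith [hg1, hε'pos]
    have hlt : ∀ s ∈ Ico t1 τ, (ϱ s - ϱ3 s)^2 < ε'^2 := by
      intro s hs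
      by_contra hge
      push_neg at hge
      exact absurd (csInf_le hSbd ⟨hs.1, hge⟩) (not_le.mpr hs.2)
    have hmono : AntitoneOn (fun u => (ϱ u - ϱ3 u)^2) (Icc t1 τ) := by
      apply antitoneOn_of_deriv_nonpos (convex_Icc _ _)
        (hgc.mono Icc_subset_Ici_self)
      · intro s hs
        rw [interior_Icc] at hs
        exact ((hg' s hs.1.le).differentiableAt).differentiableWithinAt
      · intro s hs
        rw [interior_Icc] at hs
        rw [(hg' s hs.1.le).deriv]
        exact hwkey s hs.1.le (hlt s ⟨hs.1.le, hs.2⟩).le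
    have hfin : (ϱ τ - ϱ3 τ)^2 ≤ (ϱ t1 - ϱ3 t1)^2 :=
      hmono (left_mem_Icc.mpr hτ1.le) (right_mem_Icc.mpr hτ1.le) hτ1.le
    nlinarith [hτS.2, hg1, hfin, hε'pos, mul_pos hε'pos hε'pos]
  intro t ht
  have hk := key t ht
  have habs : |ϱ t - ϱ3 t| ≤ ε' := by
    nlinarith [abs_nonneg (ϱ t - ϱ3 t), sq_abs (ϱ t - ϱ3 t), hε'pos.le]
  exact le_trans habs (min_le_left _ _)
end

section
/- Let σ ∈ (0, 1], τ > 0, a > 0, C0 ≥ 0, ζ > 0 and t1 > 0. Then for every ε ∈ (0, ζ) there exist δ ∈ (0, ε) and tε ≥ t1, depending only on σ, τ, a, C0, ζ, ε, t1, with the following property: every continuously differentiable function z : [tε, ∞) → ℝ such that sgn(z(t)) · z′(t) ≤ −a t^{−σ} |z(t)| + C0 t^{−σ−τ} holds for every t ≥ tε with 0 < |z(t)| ≤ ζ, and such that |z(tε)| ≤ δ, satisfies |z(t)| ≤ ε for all t ≥ tε. -/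
open Filter Real Set Topology

/-- Lyapunov trapping estimate: a scalar differential inequality with damping
coefficient `-a t^(-σ)` and forcing of size `C0 t^(-σ-τ)` confines solutions that
start sufficiently small at a sufficiently late time. -/
theorem stmt_17 (σ τ a C0 ζ t1 : ℝ)
    (hσ0 : 0 < σ) (hσ1 : σ ≤ 1) (hτ : 0 < τ) (ha : 0 < a)
    (hC0 : 0 ≤ C0) (hζ : 0 < ζ) (ht1 : 0 < t1) :
    ∀ ε : ℝ, 0 < ε → ε < ζ →
      ∃ δ tε : ℝ, 0 < δ ∧ δ < ε ∧ t1 ≤ tε ∧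
        ∀ z z' : ℝ → ℝ,
          (∀ t, tε ≤ t → HasDerivAt z (z' t) t) →
          ContinuousOn z' (Set.Ici tε) →
          (∀ t, tε ≤ t → 0 < |z t| → |z t| ≤ ζ →
            Real.sign (z t) * z' t ≤ -a * t ^ (-σ) * |z t| + C0 * t ^ (-σ - τ)) →
          |z tε| ≤ δ →
          ∀ t, tε ≤ t → |z t| ≤ ε := by
  intro ε hε hεζ
  set X : ℝ := (2 * C0 / (a * ε) + 1) ^ (1 / τ) with hXdef
  have hbase : (1 : ℝ) ≤ 2 * C0 / (a * ε) + 1 := by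
    have : 0 ≤ 2 * C0 / (a * ε) := by positivity
    linarith
  have hX1 : (1 : ℝ) ≤ X := Real.one_le_rpow hbase (by positivity)
  have hXpos : (0 : ℝ) < X := lt_of_lt_of_le one_pos hX1
  refine ⟨ε / 2, max t1 X, by positivity, by linarith, le_max_left _ _, ?_⟩
  set tε := max t1 X with htεdef
  have htεpos : 0 < tε := lt_of_lt_of_le hXpos (le_max_right _ _)
  -- forcing bound
  have hforce : ∀ s, tε ≤ s → C0 * s ^ (-τ) ≤ a * ε / 2 := by
    intro s hs
    have hspos : 0 < s := lt_of_lt_of_le htεpos hs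
    have hXs : X ≤ s := le_trans (le_max_right _ _) hs
    have h1 : s ^ (-τ) ≤ X ^ (-τ) :=
      Real.rpow_le_rpow_of_nonpos hXpos hXs (neg_nonpos.mpr hτ.le)
    have hXτ : X ^ τ = 2 * C0 / (a * ε) + 1 := by
      rw [hXdef, ← Real.rpow_mul (le_trans zero_le_one hbase),
        one_div_mul_cancel hτ.ne', Real.rpow_one]
    have hXτ' : X ^ (-τ) = (2 * C0 / (a * ε) + 1)⁻¹ := by
      rw [Real.rpow_neg hXpos.le, hXτ]
    have hD : (0 : ℝ) < 2 * C0 / (a * ε) + 1 := lt_of_lt_of_le one_pos hbase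
    have h2 : C0 * (2 * C0 / (a * ε) + 1)⁻¹ ≤ a * ε / 2 := by
      rw [mul_inv_le_iff₀ hD]
      have haε : a * ε * (2 * C0 / (a * ε) + 1) = 2 * C0 + a * ε := by
        field_simp
      nlinarith [mul_pos ha hε]
    calc C0 * s ^ (-τ) ≤ C0 * X ^ (-τ) :=
          mul_le_mul_of_nonneg_left h1 hC0
      _ ≤ a * ε / 2 := by rw [hXτ']; exact h2
  intro z z' hderiv hcont hineq hinit t htt
  by_contra hcon
  push_neg at hcon
  have hzc : ∀ s, tε ≤ s → ContinuousAt z s := fun s hs => (hderiv s hs).continuousAt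
  -- the bad set
  set S : Set ℝ := Icc tε t ∩ z ⁻¹' {x | ε ≤ |x|} with hSdef
  have hSclosed : IsClosed S := by
    apply ContinuousOn.preimage_isClosed_of_isClosed
      (fun s hs => (hzc s hs.1).continuousWithinAt) isClosed_Icc
    exact isClosed_le continuous_const continuous_abs
  have hTS : t ∈ S := ⟨⟨htt, le_refl t⟩, hcon.le⟩
  have hbdd : BddBelow S := ⟨tε, fun s hs => hs.1.1⟩
  set t0 := sInf S with ht0def
  have ht0S : t0 ∈ S := hSclosed.csInf_mem ⟨t, hTS⟩ hbdd
  obtain ⟨⟨ht0l, ht0r⟩, ht0ε⟩ := ht0S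
  have ht0ε : ε ≤ |z t0| := ht0ε
  have htε_lt : tε < t0 := by
    rcases lt_or_eq_of_le ht0l with h | h
    · exact h
    · exfalso; rw [h] at hinit; linarith
  have ht0pos : 0 < t0 := lt_trans htεpos htε_lt
  -- not in S strictly before t0
  have hnotS : ∀ s, tε < s → s < t0 → |z s| < ε := by
    intro s hs1 hs2
    by_contra h
    push_neg at h
    have : s ∈ S := ⟨⟨hs1.le, le_trans hs2.le ht0r⟩, h⟩
    exact absurd (csInf_le hbdd this) (not_le.mpr hs2)
  -- |z t0| = ε via left limit
  have hIoo : Ioo tε t0 ∈ 𝓝[<] t0 := Ioo_mem_nhdsLT_of_mem ⟨htε_lt, le_refl t0⟩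
  have habs_le : |z t0| ≤ ε := by
    have htend : Tendsto (fun s => |z s|) (𝓝[<] t0) (𝓝 |z t0|) :=
      ((hzc t0 ht0l).abs.tendsto).mono_left nhdsWithin_le_nhds
    refine le_of_tendsto htend ?_
    filter_upwards [hIoo] with s hs
    exact (hnotS s hs.1 hs.2).le
  have habs : |z t0| = ε := le_antisymm habs_le ht0ε
  have hz0 : z t0 ≠ 0 := by
    intro h; rw [h, abs_zero] at habs; linarith
  -- derivative of |z| at t0
  have hd0 := hderiv t0 ht0l
  have hg : HasDerivAt (fun s => |z s|) (Real.sign (z t0) * z' t0) t0 := by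
    rcases hz0.lt_or_gt with hneg | hpos
    · have hev : ∀ᶠ s in 𝓝 t0, z s < 0 := (hzc t0 ht0l) (Iio_mem_nhds hneg)
      have hev' : (fun s => |z s|) =ᶠ[𝓝 t0] fun s => -z s := by
        filter_upwards [hev] with s hs; exact abs_of_neg hs
      rw [Real.sign_of_neg hneg]
      have := hd0.neg
      simpa using this.congr_of_eventuallyEq hev'
    · have hev : ∀ᶠ s in 𝓝 t0, 0 < z s := (hzc t0 ht0l) (Ioi_mem_nhds hpos)
      have hev' : (fun s => |z s|) =ᶠ[𝓝 t0] z := by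
        filter_upwards [hev] with s hs; exact abs_of_pos hs
      rw [Real.sign_of_pos hpos]
      simpa using hd0.congr_of_eventuallyEq hev'
  -- the derivative is negative
  have hzζ : |z t0| ≤ ζ := by rw [habs]; exact hεζ.le
  have hzpos : 0 < |z t0| := by rw [habs]; exact hε
  have hkey := hineq t0 ht0l hzpos hzζ
  have hsplit : t0 ^ (-σ - τ) = t0 ^ (-σ) * t0 ^ (-τ) := by
    rw [← Real.rpow_add ht0pos]; ring_nf
  have hP : 0 < t0 ^ (-σ) := Real.rpow_pos_of_pos ht0pos _
  have hf := hforce t0 ht0l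
  have hd_neg : Real.sign (z t0) * z' t0 < 0 := by
    rw [habs, hsplit] at hkey
    have h3 : t0 ^ (-σ) * (C0 * t0 ^ (-τ)) ≤ t0 ^ (-σ) * (a * ε / 2) :=
      mul_le_mul_of_nonneg_left hf hP.le
    nlinarith [mul_pos ha hε, mul_pos (mul_pos ha hε) hP]
  -- slope argument
  rw [hasDerivAt_iff_tendsto_slope] at hg
  have h5 : ∀ᶠ s in 𝓝[≠] t0, slope (fun s => |z s|) t0 s < 0 :=
    hg (Iio_mem_nhds hd_neg)
  have h5' : ∀ᶠ s in 𝓝[<] t0, slope (fun s => |z s|) t0 s < 0 :=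
    h5.filter_mono (nhdsWithin_mono t0 fun s hs => ne_of_lt hs)
  obtain ⟨s, hslope, hsIoo⟩ := (h5'.and (eventually_of_mem hIoo fun s hs => hs)).exists
  rw [slope_def_field, habs] at hslope
  have hs_lt : s - t0 < 0 := sub_neg.mpr hsIoo.2
  have hgs : ε < |z s| := by
    rcases div_neg_iff.mp hslope with ⟨h1, h2⟩ | ⟨h1, h2⟩
    · linarith
    · linarith
  exact absurd (hnotS s hsIoo.1 hsIoo.2) (not_lt.mpr hgs.le)
end

section
/- Let σ ∈ (0, 1], τ > 0, c > 0, C0 ≥ 0, ε > 0 and t1 > 0. Then for every δ ∈ (0, ε) there exists t2 ≥ t1, depending only on σ, τ, c, C0, ε, δ, t1, with the following property: for every ts ≥ t2, every continuously differentiable function z : [ts, ∞) → ℝ such that sgn(z(t)) · z′(t) ≥ c t^{−σ} |z(t)| − C0 t^{−σ−τ} holds for every t ≥ ts with |z(t)| ≤ ε, and such that |z(ts)| ≥ δ, satisfies |z(te)| ≥ ε for some te > ts. -/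
open Filter Real Set Topology

lemma aux_escape (σ τ c C0 ε δ ts : ℝ)
    (hσ0 : 0 < σ) (hσ1 : σ ≤ 1) (hτ : 0 < τ) (hc : 0 < c)
    (hC0 : 0 ≤ C0) (hε : 0 < ε) (hδ : 0 < δ) (hδε : δ < ε)
    (hts1 : 1 ≤ ts) (hthr : 2 * C0 ≤ c * δ * ts ^ τ)
    (z z' : ℝ → ℝ)
    (hz : ∀ t, ts ≤ t → HasDerivAt z (z' t) t)
    (hineq : ∀ t, ts ≤ t → |z t| ≤ ε →
      c * t ^ (-σ) * |z t| - C0 * t ^ (-σ - τ) ≤ Real.sign (z t) * z' t)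
    (hzts : δ ≤ z ts) :
    ∃ te : ℝ, ts < te ∧ ε ≤ |z te| := by
  by_contra hcon
  push_neg at hcon
  have hts0 : (0:ℝ) < ts := lt_of_lt_of_le one_pos hts1
  -- |z t| ≤ ε for all t ≥ ts
  have hzts_le : z ts ≤ ε := by
    by_contra hgt
    push_neg at hgt
    have hca : ContinuousAt z ts := (hz ts le_rfl).continuousAt
    have hev : ∀ᶠ t in 𝓝[>] ts, ε < z t :=
      (hca.eventually (eventually_gt_nhds hgt)).filter_mono nhdsWithin_le_nhds
    obtain ⟨t, htz, hts⟩ := (hev.and self_mem_nhdsWithin).exists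
    exact absurd (le_of_lt (lt_of_lt_of_le htz (le_abs_self _))) (not_le.mpr (hcon t hts))
  have habs : ∀ t, ts ≤ t → |z t| ≤ ε := by
    intro t ht
    rcases eq_or_lt_of_le ht with rfl | h
    · rw [abs_of_pos (lt_of_lt_of_le hδ hzts)]; exact hzts_le
    · exact (hcon t h).le
  -- key derivative bound
  have hkey : ∀ t, ts ≤ t → δ ≤ z t → c * δ / 2 * t⁻¹ ≤ z' t := by
    intro t ht hδz
    have ht0 : (0:ℝ) < t := lt_of_lt_of_le hts0 ht
    have ht1' : (1:ℝ) ≤ t := le_trans hts1 ht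
    have hz0 : 0 < z t := lt_of_lt_of_le hδ hδz
    have hsign : Real.sign (z t) = 1 := Real.sign_of_pos hz0
    have h1 := hineq t ht (habs t ht)
    rw [hsign, one_mul, abs_of_pos hz0] at h1
    have hC0t : C0 * t ^ (-σ - τ) ≤ c * δ / 2 * t ^ (-σ) := by
      have hτt : ts ^ τ ≤ t ^ τ := Real.rpow_le_rpow hts0.le ht hτ.le
      have h2 : 2 * C0 ≤ c * δ * t ^ τ :=
        le_trans hthr (by nlinarith [mul_pos hc hδ])
      have htτ : (0:ℝ) < t ^ τ := Real.rpow_pos_of_pos ht0 τ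
      have hσt : (0:ℝ) < t ^ (-σ) := Real.rpow_pos_of_pos ht0 _
      have hsplit : t ^ (-σ - τ) = t ^ (-σ) * (t ^ τ)⁻¹ := by
        rw [← Real.rpow_neg ht0.le, ← Real.rpow_add ht0]; ring_nf
      have h5 : C0 * (t ^ τ)⁻¹ ≤ c * δ / 2 := by
        rw [← div_eq_mul_inv, div_le_iff₀ htτ]; nlinarith
      calc C0 * t ^ (-σ - τ) = (C0 * (t ^ τ)⁻¹) * t ^ (-σ) := by rw [hsplit]; ring
        _ ≤ (c * δ / 2) * t ^ (-σ) := mul_le_mul_of_nonneg_right h5 hσt.le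
    have hmono : t⁻¹ ≤ t ^ (-σ) := by
      rw [← Real.rpow_neg_one t]
      exact Real.rpow_le_rpow_of_exponent_le ht1' (by linarith)
    have hcδ : 0 < c * δ := mul_pos hc hδ
    have h3 : c * δ * t ^ (-σ) ≤ c * t ^ (-σ) * z t := by
      rw [show c * δ * t ^ (-σ) = c * t ^ (-σ) * δ by ring]
      exact mul_le_mul_of_nonneg_left hδz
        (mul_nonneg hc.le (Real.rpow_pos_of_pos ht0 _).le)
    have h4 : c * δ / 2 * t ^ (-σ) ≤ z' t := by nlinarith
    calc c * δ / 2 * t⁻¹ ≤ c * δ / 2 * t ^ (-σ) :=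
          mul_le_mul_of_nonneg_left hmono (by positivity)
      _ ≤ z' t := h4
  -- invariance: z t ≥ δ for all t ≥ ts
  have hinv : ∀ t, ts ≤ t → δ ≤ z t := by
    intro T hT
    have := image_le_of_deriv_right_lt_deriv_boundary
      (f := fun t => -z t) (f' := fun t => -z' t) (a := ts) (b := T)
      (B := fun _ => -δ) (B' := fun _ => 0)
      (fun x hx => ((hz x hx.1).continuousAt.continuousWithinAt).neg)
      (fun x hx => ((hz x hx.1).neg).hasDerivWithinAt)
      (by simpa using hzts)
      (fun x => hasDerivAt_const x (-δ))
      (by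
        intro x hx hfx
        have hδzx : δ ≤ z x := le_of_eq (by linarith [neg_injective hfx])
        have := hkey x hx.1 hδzx
        have hx0 : (0:ℝ) < x := lt_of_lt_of_le hts0 hx.1
        have : 0 < z' x := lt_of_lt_of_le (by positivity) this
        simpa using neg_neg_iff_pos.mpr this)
    have := this (x := T) ⟨hT, le_rfl⟩
    simpa using this
  -- growth: compare with logarithmic lower bound
  set T := ts * Real.exp (2 * ε / (c * δ)) with hTdef
  have hcδ : 0 < c * δ := mul_pos hc hδ
  have hexp : 1 < Real.exp (2 * ε / (c * δ)) :=
    Real.one_lt_exp_iff.mpr (by positivity)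
  have hTts : ts < T := by
    have := (mul_lt_mul_iff_right₀ hts0).mpr hexp
    simpa [hTdef] using this
  have hgrow := image_le_of_deriv_right_le_deriv_boundary
    (f := fun t => z ts + c * δ / 2 * (Real.log t - Real.log ts))
    (f' := fun t => c * δ / 2 * t⁻¹) (a := ts) (b := T)
    (B := z) (B' := z')
    (by
      apply ContinuousOn.add continuousOn_const
      apply ContinuousOn.mul continuousOn_const
      apply ContinuousOn.sub _ continuousOn_const
      exact Real.continuousOn_log.mono (fun x hx => ne_of_gt (lt_of_lt_of_le hts0 hx.1)))
    (by
      intro x hx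
      have hx0 : (0:ℝ) < x := lt_of_lt_of_le hts0 hx.1
      have : HasDerivAt (fun t => z ts + c * δ / 2 * (Real.log t - Real.log ts))
          (c * δ / 2 * x⁻¹) x := by
        have h := ((Real.hasDerivAt_log (ne_of_gt hx0)).sub_const (Real.log ts)).const_mul
          (c * δ / 2)
        simpa using h.const_add (z ts)
      exact this.hasDerivWithinAt)
    (by simp)
    (fun x hx => ((hz x hx.1).continuousAt.continuousWithinAt))
    (fun x hx => (hz x hx.1).hasDerivWithinAt)
    (fun x hx => hkey x hx.1 (hinv x hx.1))
  have hTval := hgrow (x := T) ⟨hTts.le, le_rfl⟩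
  have hlogT : Real.log T - Real.log ts = 2 * ε / (c * δ) := by
    rw [hTdef, Real.log_mul (ne_of_gt hts0) (Real.exp_ne_zero _), Real.log_exp]
    ring
  rw [hlogT] at hTval
  have : z ts + ε ≤ z T := by
    have : c * δ / 2 * (2 * ε / (c * δ)) = ε := by field_simp
    linarith [hTval, this.symm.le, this.le]
  have hlt : z T < ε := lt_of_le_of_lt (le_abs_self _) (hcon T hTts)
  linarith

/-- Escape (instability) estimate: a scalar differential inequality with
anti-damping coefficient `c t^(-σ)` and forcing of size `C0 t^(-σ-τ)` forces
solutions starting at distance at least `δ` from zero, at a sufficiently late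
time, to eventually reach size `ε`. -/
theorem stmt_18 (σ τ c C0 ε t1 : ℝ)
    (hσ0 : 0 < σ) (hσ1 : σ ≤ 1) (hτ : 0 < τ) (hc : 0 < c)
    (hC0 : 0 ≤ C0) (hε : 0 < ε) (ht1 : 0 < t1) :
    ∀ δ : ℝ, 0 < δ → δ < ε →
      ∃ t2 : ℝ, t1 ≤ t2 ∧
        ∀ ts : ℝ, t2 ≤ ts →
          ∀ z z' : ℝ → ℝ,
            (∀ t, ts ≤ t → HasDerivAt z (z' t) t) →
            ContinuousOn z' (Set.Ici ts) →
            (∀ t, ts ≤ t → |z t| ≤ ε →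
              c * t ^ (-σ) * |z t| - C0 * t ^ (-σ - τ) ≤ Real.sign (z t) * z' t) →
            δ ≤ |z ts| →
            ∃ te : ℝ, ts < te ∧ ε ≤ |z te| := by
  intro δ hδ hδε
  have hcδ : 0 < c * δ := mul_pos hc hδ
  set K : ℝ := 2 * C0 / (c * δ) + 1 with hK
  have hK1 : (1:ℝ) ≤ K := by
    have : 0 ≤ 2 * C0 / (c * δ) := by positivity
    rw [hK]; linarith
  have hK0 : (0:ℝ) < K := lt_of_lt_of_le one_pos hK1
  refine ⟨max t1 (max 1 (K ^ (1 / τ))), le_max_left _ _, ?_⟩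
  intro ts hts z z' hz hz' hineq hzts
  have hts1 : (1:ℝ) ≤ ts := le_trans (le_trans (le_max_left _ _) (le_max_right _ _)) hts
  have htsK : K ^ (1 / τ) ≤ ts := le_trans (le_trans (le_max_right _ _) (le_max_right _ _)) hts
  have hthr : 2 * C0 ≤ c * δ * ts ^ τ := by
    have h1 : (K ^ (1 / τ)) ^ τ ≤ ts ^ τ :=
      Real.rpow_le_rpow (Real.rpow_nonneg hK0.le _) htsK hτ.le
    have h2 : (K ^ (1 / τ)) ^ τ = K := by
      rw [← Real.rpow_mul hK0.le, one_div, inv_mul_cancel₀ (ne_of_gt hτ), Real.rpow_one]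
    have h3 : K ≤ ts ^ τ := h2 ▸ h1
    have h4 : c * δ * K = 2 * C0 + c * δ := by
      rw [hK]; field_simp
    nlinarith
  rcases le_or_gt 0 (z ts) with hpos | hneg
  · have : δ ≤ z ts := by rwa [abs_of_nonneg hpos] at hzts
    exact aux_escape σ τ c C0 ε δ ts hσ0 hσ1 hτ hc hC0 hε hδ hδε hts1 hthr z z' hz hineq this
  · have hzneg : δ ≤ -z ts := by rwa [abs_of_neg hneg] at hzts
    have hineq' : ∀ t, ts ≤ t → |(-z t)| ≤ ε →
        c * t ^ (-σ) * |(-z t)| - C0 * t ^ (-σ - τ) ≤ Real.sign (-z t) * (-z' t) := by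
      intro t ht habs
      rw [abs_neg] at habs ⊢
      rw [Real.sign_neg]
      have := hineq t ht habs
      linarith [this]
    obtain ⟨te, hte, habs⟩ := aux_escape σ τ c C0 ε δ ts hσ0 hσ1 hτ hc hC0 hε hδ hδε hts1 hthr
      (fun t => -z t) (fun t => -z' t) (fun t ht => (hz t ht).neg) hineq' hzneg
    exact ⟨te, hte, by rwa [abs_neg] at habs⟩
end
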